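/- arXiv:2602.18770 — 8 statements merged into one kernel-verified Lean document; each statement's English description precedes it below -/
import Mathlib

section
/- Let d, n ∈ ℕ with n ≥ 1, and let f_d = (16/3)·(2d+3)²·2^{4(2d+2)}. Then every d-twin-ordered binary n×n matrix contains at most f_d·(n+2) corners. -/
/-- `M` is treated as a binary `n × n` matrix via its entries `M i j` for `i, j ∈ {1, …, n}`.
`IsSlab M n a b c d` says that the zone `M[[a,b],[c,d]]` is entirely filled with ones. -/
def IsSlab (M : ℕ → ℕ → Bool) (n a b c d : ℕ) : Prop :=
  1 ≤ a ∧ a ≤ b ∧ b ≤ n ∧ 1 ≤ c ∧ c ≤ d ∧ d ≤ n ∧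
    ∀ i ∈ Set.Icc a b, ∀ j ∈ Set.Icc c d, M i j = true

/-- A corner: a `2 × 2` zone `M[[i,i+1],[j,j+1]]` whose two rows are different and whose
two columns are different. -/
def IsMatCorner (M : ℕ → ℕ → Bool) (n i j : ℕ) : Prop :=
  1 ≤ i ∧ i + 1 ≤ n ∧ 1 ≤ j ∧ j + 1 ≤ n ∧
    (M i j, M i (j + 1)) ≠ (M (i + 1) j, M (i + 1) (j + 1)) ∧
    (M i j, M (i + 1) j) ≠ (M i (j + 1), M (i + 1) (j + 1))

/-- An `i`-strip `(a,b,i,i)`: a one-column slab that cannot be extended upwards or downwards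
(note that for `i = 0` or `i = n+1` this is automatically false, matching the convention
`strips_0 = strips_{n+1} = ∅`). -/
def IsStrip (M : ℕ → ℕ → Bool) (n a b i : ℕ) : Prop :=
  IsSlab M n a b i i ∧ ¬ IsSlab M n (a - 1) b i i ∧ ¬ IsSlab M n a (b + 1) i i

/-- Strips, encoded as triples `(a, b, i)` standing for the slab `(a, b, i, i)`, are siblings
if they have the same row segment and every column in between carries the same strip. -/
def Sibling (M : ℕ → ℕ → Bool) (n : ℕ) (s t : ℕ × ℕ × ℕ) : Prop :=
  s.1 = t.1 ∧ s.2.1 = t.2.1 ∧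
    ∀ k ∈ Set.Icc (min s.2.2 t.2.2) (max s.2.2 t.2.2), IsStrip M n s.1 s.2.1 k

/-- `(a,b,c,d)` is a canonical slab of `M`: the sibling equivalence class of the strip
`(a,b,c)` is exactly `{(a,b,k) : k ∈ [c,d]}`. -/
def IsCanonicalSlab (M : ℕ → ℕ → Bool) (n a b c d : ℕ) : Prop :=
  IsStrip M n a b c ∧
    ∀ t : ℕ × ℕ × ℕ, Sibling M n (a, b, c) t ↔ t.1 = a ∧ t.2.1 = b ∧ c ≤ t.2.2 ∧ t.2.2 ≤ d

/-- The set of cells of a slab given as a quadruple `(a, b, c, d)`. -/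
def slabCells (q : ℕ × ℕ × ℕ × ℕ) : Set (ℕ × ℕ) :=
  Set.Icc q.1 q.2.1 ×ˢ Set.Icc q.2.2.1 q.2.2.2

/-- A slab decomposition of `M`: a set of pairwise disjoint slabs covering all ones of `M`. -/
def IsSlabDecomp (M : ℕ → ℕ → Bool) (n : ℕ) (K : Set (ℕ × ℕ × ℕ × ℕ)) : Prop :=
  (∀ q ∈ K, IsSlab M n q.1 q.2.1 q.2.2.1 q.2.2.2) ∧
    (K.Pairwise fun q r => Disjoint (slabCells q) (slabCells r)) ∧
    (∀ i j, 1 ≤ i → i ≤ n → 1 ≤ j → j ≤ n → M i j = true → ∃ q ∈ K, (i, j) ∈ slabCells q)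

/-- A partition of `{1, …, n}` into consecutive blocks is encoded by its set `D` of cut
points: `k ∈ D` means that `k` and `k+1` lie in different blocks. `IsBlock n D a b` says
that `[a,b]` is one of the blocks of this partition. -/
def IsBlock (n : ℕ) (D : Finset ℕ) (a b : ℕ) : Prop :=
  1 ≤ a ∧ a ≤ b ∧ b ≤ n ∧ (a = 1 ∨ a - 1 ∈ D) ∧ (b = n ∨ b ∈ D) ∧
    ∀ k, a ≤ k → k < b → k ∉ D

/-- The zone `M[[a,b],[c,d]]` is non-constant: it contains both a `1` and a `0` entry. -/
def NonConstantZone (M : ℕ → ℕ → Bool) (a b c d : ℕ) : Prop :=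
  (∃ i ∈ Set.Icc a b, ∃ j ∈ Set.Icc c d, M i j = true) ∧
    (∃ i ∈ Set.Icc a b, ∃ j ∈ Set.Icc c d, M i j = false)

/-- For the pair of partitions given by cut sets `(DR, DC)`, every row block and every
column block has at most `d` non-constant zones. -/
def WidthAtMost (M : ℕ → ℕ → Bool) (n d : ℕ) (DR DC : Finset ℕ) : Prop :=
  (∀ a b, IsBlock n DR a b →
    Set.ncard {cd : ℕ × ℕ | IsBlock n DC cd.1 cd.2 ∧ NonConstantZone M a b cd.1 cd.2} ≤ d) ∧
  (∀ c e, IsBlock n DC c e →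
    Set.ncard {ab : ℕ × ℕ | IsBlock n DR ab.1 ab.2 ∧ NonConstantZone M ab.1 ab.2 c e} ≤ d)

/-- `M` is `d`-twin-ordered: it admits a contraction sequence of width at most `d`.
Starting from singleton partitions (all cut points present) we successively merge two
consecutive row blocks or two consecutive column blocks (remove one cut point) until all
rows form one block and all columns form one block, keeping width at most `d` throughout. -/
def TwinOrdered (d n : ℕ) (M : ℕ → ℕ → Bool) : Prop :=
  ∃ (p : ℕ) (DR DC : ℕ → Finset ℕ),
    DR 0 = Finset.Icc 1 (n - 1) ∧ DC 0 = Finset.Icc 1 (n - 1) ∧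
    DR p = ∅ ∧ DC p = ∅ ∧
    (∀ t < p,
      (∃ x ∈ DR t, DR (t + 1) = (DR t).erase x ∧ DC (t + 1) = DC t) ∨
      (∃ x ∈ DC t, DC (t + 1) = (DC t).erase x ∧ DR (t + 1) = DR t)) ∧
    (∀ t ≤ p, WidthAtMost M n d (DR t) (DC t))

section Aux

/-- The block of the partition given by cut set `D` containing position `i` exists. -/
lemma blockExists (n : ℕ) (D : Finset ℕ) (hD : ∀ x ∈ D, 1 ≤ x ∧ x ≤ n - 1)
    (i : ℕ) (h1 : 1 ≤ i) (h2 : i ≤ n) : ∃ a b, IsBlock n D a b ∧ a ≤ i ∧ i ≤ b := by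
  classical
  -- left endpoint
  obtain ⟨a, ha1, hai, haD, haNo⟩ :
      ∃ a, 1 ≤ a ∧ a ≤ i ∧ (a = 1 ∨ a - 1 ∈ D) ∧ ∀ k, a ≤ k → k < i → k ∉ D := by
    by_cases hLn : (D.filter (fun x => x < i)).Nonempty
    · refine ⟨(D.filter (fun x => x < i)).max' hLn + 1, by omega, ?_, ?_, ?_⟩
      · have := Finset.mem_filter.mp ((D.filter (fun x => x < i)).max'_mem hLn)
        omega
      · right
        have := Finset.mem_filter.mp ((D.filter (fun x => x < i)).max'_mem hLn)
        simpa using this.1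
      · intro k hk1 hk2 hkD
        have : k ∈ D.filter (fun x => x < i) := Finset.mem_filter.mpr ⟨hkD, hk2⟩
        have := Finset.le_max' _ k this
        omega
    · refine ⟨1, le_rfl, h1, Or.inl rfl, ?_⟩
      intro k hk1 hk2 hkD
      exact hLn ⟨k, Finset.mem_filter.mpr ⟨hkD, hk2⟩⟩
  -- right endpoint
  obtain ⟨b, hib, hbn, hbD, hbNo⟩ :
      ∃ b, i ≤ b ∧ b ≤ n ∧ (b = n ∨ b ∈ D) ∧ ∀ k, i ≤ k → k < b → k ∉ D := by
    by_cases hRn : (D.filter (fun x => i ≤ x)).Nonempty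
    · refine ⟨(D.filter (fun x => i ≤ x)).min' hRn, ?_, ?_, ?_, ?_⟩
      · have := Finset.mem_filter.mp ((D.filter (fun x => i ≤ x)).min'_mem hRn)
        omega
      · have hmm := Finset.mem_filter.mp ((D.filter (fun x => i ≤ x)).min'_mem hRn)
        have := hD _ hmm.1
        omega
      · right
        have := Finset.mem_filter.mp ((D.filter (fun x => i ≤ x)).min'_mem hRn)
        simpa using this.1
      · intro k hk1 hk2 hkD
        have : k ∈ D.filter (fun x => i ≤ x) := Finset.mem_filter.mpr ⟨hkD, hk1⟩
        have := Finset.min'_le _ k this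
        omega
    · refine ⟨n, h2, le_rfl, Or.inl rfl, ?_⟩
      intro k hk1 hk2 hkD
      exact hRn ⟨k, Finset.mem_filter.mpr ⟨hkD, hk1⟩⟩
  refine ⟨a, b, ⟨ha1, le_trans hai hib, hbn, haD, hbD, ?_⟩, hai, hib⟩
  intro k hk1 hk2 hkD
  rcases lt_or_ge k i with hk | hk
  · exact haNo k hk1 hk hkD
  · exact hbNo k hk hk2 hkD

/-- If a cut `j` lies in a block, it is its right endpoint. -/
lemma block_right (n : ℕ) (D : Finset ℕ) (a b j : ℕ) (h : IsBlock n D a b)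
    (hj : j ∈ D) (h1 : a ≤ j) (h2 : j ≤ b) : b = j := by
  by_contra hne
  exact h.2.2.2.2.2 j h1 (by omega) hj

/-- If `j` is a cut and `j+1` lies in a block, then `j+1` is its left endpoint. -/
lemma block_left (n : ℕ) (D : Finset ℕ) (a b j : ℕ) (h : IsBlock n D a b)
    (hj : j ∈ D) (h1 : a ≤ j + 1) (h2 : j + 1 ≤ b) : a = j + 1 := by
  rcases le_or_gt a j with hle | hlt
  · exact absurd (h.2.2.2.2.2 j hle (by omega)) (not_not_intro hj)
  · omega

end Aux

section Aux2

/-- Key lemma: if the row cut `i` has been merged away while the partitions have width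
at most `d`, then at most `2d` columns `j` that are still cuts carry a corner `(i,j)`. -/
lemma row_fiber_bound (M : ℕ → ℕ → Bool) (n d : ℕ) (D E : Finset ℕ)
    (hD : ∀ x ∈ D, 1 ≤ x ∧ x ≤ n - 1) (hE : ∀ x ∈ E, 1 ≤ x ∧ x ≤ n - 1)
    (hw : WidthAtMost M n d D E) (i : ℕ) (h1 : 1 ≤ i) (h2 : i + 1 ≤ n) (hiD : i ∉ D) :
    Set.ncard {j | j ∈ E ∧ IsMatCorner M n i j} ≤ 2 * d := by
  classical
  obtain ⟨a, b, hab, hai, hib⟩ := blockExists n D hD i h1 (by omega)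
  have hib' : i + 1 ≤ b := by
    rcases hab.2.2.2.2.1 with hbn | hbD
    · omega
    · by_contra hc
      have : b = i := by omega
      exact hiD (this ▸ hbD)
  set Z : Set (ℕ × ℕ) :=
    {cd : ℕ × ℕ | IsBlock n E cd.1 cd.2 ∧ NonConstantZone M a b cd.1 cd.2} with hZ
  have hZd : Z.ncard ≤ d := hw.1 a b hab
  have hZfin : Z.Finite := by
    apply Set.Finite.subset ((Set.finite_Icc 1 n).prod (Set.finite_Icc 1 n))
    rintro ⟨c, e⟩ ⟨hblk, -⟩
    exact ⟨⟨hblk.1, le_trans hblk.2.1 hblk.2.2.1⟩, ⟨le_trans hblk.1 hblk.2.1, hblk.2.2.1⟩⟩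
  set S1 : Set ℕ := {j | j ∈ E ∧ IsMatCorner M n i j ∧ M i j ≠ M (i+1) j} with hS1
  set S2 : Set ℕ := {j | j ∈ E ∧ IsMatCorner M n i j ∧ M i (j+1) ≠ M (i+1) (j+1)} with hS2
  have hsplit : {j | j ∈ E ∧ IsMatCorner M n i j} ⊆ S1 ∪ S2 := by
    rintro j ⟨hjE, hcor⟩
    have hne := hcor.2.2.2.2.1
    by_cases hx : M i j = M (i+1) j
    · right
      refine ⟨hjE, hcor, ?_⟩
      intro hy
      exact hne (by rw [hx, hy])
    · left; exact ⟨hjE, hcor, hx⟩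
  -- S1 injects into Z via the block ending at j
  have hkey1 : ∀ j : ℕ, ∃ c : ℕ, j ∈ S1 → (c, j) ∈ Z := by
    intro j
    by_cases hj : j ∈ S1
    · obtain ⟨hjE, hcor, hne⟩ := hj
      have hjb := hE j hjE
      obtain ⟨c, e, hblk, hcj, hje⟩ := blockExists n E hE j hjb.1 (by omega)
      have he : e = j := block_right n E c e j hblk hjE hcj hje
      refine ⟨c, fun _ => ⟨he ▸ hblk, ?_, ?_⟩⟩
      · rcases Bool.eq_false_or_eq_true (M i j) with hmi | hmi
        · exact ⟨i, ⟨hai, by omega⟩, j, ⟨hcj, le_rfl⟩, hmi⟩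
        · exact ⟨i + 1, ⟨by omega, hib'⟩, j, ⟨hcj, le_rfl⟩, by
            cases hmj : M (i+1) j
            · exact absurd (hmi.trans hmj.symm) hne
            · rfl⟩
      · rcases Bool.eq_false_or_eq_true (M i j) with hmi | hmi
        · exact ⟨i + 1, ⟨by omega, hib'⟩, j, ⟨hcj, le_rfl⟩, by
            cases hmj : M (i+1) j
            · rfl
            · exact absurd (hmi.trans hmj.symm) hne⟩
        · exact ⟨i, ⟨hai, by omega⟩, j, ⟨hcj, le_rfl⟩, hmi⟩
    · exact ⟨0, fun hj' => absurd hj' hj⟩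
  choose f1 hf1 using hkey1
  have hS1card : S1.ncard ≤ Z.ncard :=
    Set.ncard_le_ncard_of_injOn (fun j => (f1 j, j)) (fun j hj => hf1 j hj)
      (fun x hx y hy hxy => congrArg Prod.snd hxy) hZfin
  -- S2 injects into Z via the block starting at j+1
  have hkey2 : ∀ j : ℕ, ∃ e : ℕ, j ∈ S2 → (j + 1, e) ∈ Z := by
    intro j
    by_cases hj : j ∈ S2
    · obtain ⟨hjE, hcor, hne⟩ := hj
      have hjb := hE j hjE
      obtain ⟨c, e, hblk, hcj, hje⟩ := blockExists n E hE (j + 1) (by omega) (by omega)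
      have hc : c = j + 1 := block_left n E c e j hblk hjE hcj hje
      refine ⟨e, fun _ => ⟨hc ▸ hblk, ?_, ?_⟩⟩
      · rcases Bool.eq_false_or_eq_true (M i (j+1)) with hmi | hmi
        · exact ⟨i, ⟨hai, by omega⟩, j + 1, ⟨le_rfl, hje⟩, hmi⟩
        · exact ⟨i + 1, ⟨by omega, hib'⟩, j + 1, ⟨le_rfl, hje⟩, by
            cases hmj : M (i+1) (j+1)
            · exact absurd (hmi.trans hmj.symm) hne
            · rfl⟩
      · rcases Bool.eq_false_or_eq_true (M i (j+1)) with hmi | hmi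
        · exact ⟨i + 1, ⟨by omega, hib'⟩, j + 1, ⟨le_rfl, hje⟩, by
            cases hmj : M (i+1) (j+1)
            · rfl
            · exact absurd (hmi.trans hmj.symm) hne⟩
        · exact ⟨i, ⟨hai, by omega⟩, j + 1, ⟨le_rfl, hje⟩, hmi⟩
    · exact ⟨0, fun hj' => absurd hj' hj⟩
  choose f2 hf2 using hkey2
  have hS2card : S2.ncard ≤ Z.ncard :=
    Set.ncard_le_ncard_of_injOn (fun j => (j + 1, f2 j)) (fun j hj => hf2 j hj)
      (fun x hx y hy hxy => by simpa using congrArg Prod.fst hxy) hZfin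
  have hS1fin : S1.Finite := Set.Finite.subset E.finite_toSet (fun j hj => hj.1)
  have hS2fin : S2.Finite := Set.Finite.subset E.finite_toSet (fun j hj => hj.1)
  calc Set.ncard {j | j ∈ E ∧ IsMatCorner M n i j}
      ≤ (S1 ∪ S2).ncard := Set.ncard_le_ncard hsplit (hS1fin.union hS2fin)
    _ ≤ S1.ncard + S2.ncard := Set.ncard_union_le S1 S2
    _ ≤ 2 * d := by omega

end Aux2

section Aux3

lemma corner_transpose (M : ℕ → ℕ → Bool) (n i j : ℕ) (h : IsMatCorner M n i j) :
    IsMatCorner (fun a b => M b a) n j i :=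
  ⟨h.2.2.1, h.2.2.2.1, h.1, h.2.1, h.2.2.2.2.2, h.2.2.2.2.1⟩

lemma ncz_transpose (M : ℕ → ℕ → Bool) (a b c e : ℕ) :
    NonConstantZone (fun x y => M y x) c e a b ↔ NonConstantZone M a b c e := by
  constructor <;> rintro ⟨⟨i, hi, j, hj, hm⟩, ⟨i', hi', j', hj', hm'⟩⟩ <;>
    exact ⟨⟨j, hj, i, hi, hm⟩, ⟨j', hj', i', hi', hm'⟩⟩

lemma width_transpose (M : ℕ → ℕ → Bool) (n d : ℕ) (D E : Finset ℕ)
    (hw : WidthAtMost M n d D E) : WidthAtMost (fun x y => M y x) n d E D := by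
  constructor
  · intro c e hblk
    have h2 := hw.2 c e hblk
    have hset : {ab : ℕ × ℕ | IsBlock n D ab.1 ab.2 ∧
        NonConstantZone (fun x y => M y x) c e ab.1 ab.2} =
        {ab : ℕ × ℕ | IsBlock n D ab.1 ab.2 ∧ NonConstantZone M ab.1 ab.2 c e} := by
      ext ⟨a, b⟩
      simp only [Set.mem_setOf_eq, ncz_transpose]
    rw [hset]
    exact h2
  · intro a b hblk
    have h1 := hw.1 a b hblk
    have hset : {cd : ℕ × ℕ | IsBlock n E cd.1 cd.2 ∧
        NonConstantZone (fun x y => M y x) cd.1 cd.2 a b} =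
        {cd : ℕ × ℕ | IsBlock n E cd.1 cd.2 ∧ NonConstantZone M a b cd.1 cd.2} := by
      ext ⟨c, e⟩
      simp only [Set.mem_setOf_eq, ncz_transpose]
    rw [hset]
    exact h1

end Aux3


/-- Every `d`-twin-ordered binary `n × n` matrix contains at most
`(16/3)·(2d+3)²·2^{4(2d+2)}·(n+2)` corners. -/
theorem corners_bound (d n : ℕ) (M : ℕ → ℕ → Bool) (hn : 1 ≤ n)
    (h : TwinOrdered d n M) :
    (Set.ncard {ij : ℕ × ℕ | IsMatCorner M n ij.1 ij.2} : ℝ) ≤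
      16 / 3 * (2 * (d : ℝ) + 3) ^ 2 * 2 ^ (4 * (2 * d + 2)) * ((n : ℝ) + 2) := by
  classical
  obtain ⟨p, DR, DC, h0R, h0C, hpR, hpC, hstep, hwidth⟩ := h
  -- cut sets stay inside [1, n-1]
  have hsub : ∀ t ≤ p, DR t ⊆ Finset.Icc 1 (n - 1) ∧ DC t ⊆ Finset.Icc 1 (n - 1) := by
    intro t
    induction t with
    | zero => intro _; rw [h0R, h0C]; exact ⟨subset_rfl, subset_rfl⟩
    | succ t ih =>
      intro ht
      have iht := ih (by omega)
      rcases hstep t (by omega) with ⟨x, hx, hR, hC⟩ | ⟨x, hx, hC, hR⟩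
      · rw [hR, hC]; exact ⟨(Finset.erase_subset _ _).trans iht.1, iht.2⟩
      · rw [hR, hC]; exact ⟨iht.1, (Finset.erase_subset _ _).trans iht.2⟩
  -- removal times
  have hexR : ∀ i : ℕ, ∃ t, i ∉ DR t := fun i => ⟨p, by simp [hpR]⟩
  have hexC : ∀ j : ℕ, ∃ t, j ∉ DC t := fun j => ⟨p, by simp [hpC]⟩
  set fR : ℕ → ℕ := fun i => Nat.find (hexR i) with hfR
  set fC : ℕ → ℕ := fun j => Nat.find (hexC j) with hfC
  have hfRmem : ∀ i, ∀ s < fR i, i ∈ DR s := by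
    intro i s hs
    have := Nat.find_min (hexR i) hs
    simpa using this
  have hfCmem : ∀ j, ∀ s < fC j, j ∈ DC s := by
    intro j s hs
    have := Nat.find_min (hexC j) hs
    simpa using this
  have hfRspec : ∀ i, i ∉ DR (fR i) := fun i => Nat.find_spec (hexR i)
  have hfCspec : ∀ j, j ∉ DC (fC j) := fun j => Nat.find_spec (hexC j)
  have hfRle : ∀ i, fR i ≤ p := fun i => Nat.find_le (by simp [hpR])
  have hfCle : ∀ j, fC j ≤ p := fun j => Nat.find_le (by simp [hpC])
  have hfRpos : ∀ i, i ∈ Finset.Icc 1 (n - 1) → 1 ≤ fR i := by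
    intro i hi
    by_contra hc
    have h0 : fR i = 0 := by omega
    have := hfRspec i
    rw [h0, h0R] at this
    exact this hi
  have hfCpos : ∀ j, j ∈ Finset.Icc 1 (n - 1) → 1 ≤ fC j := by
    intro j hj
    by_contra hc
    have h0 : fC j = 0 := by omega
    have := hfCspec j
    rw [h0, h0C] at this
    exact this hj
  -- ranges of corners
  have hcmem : ∀ i j : ℕ, IsMatCorner M n i j →
      i ∈ Finset.Icc 1 (n - 1) ∧ j ∈ Finset.Icc 1 (n - 1) := by
    intro i j hc
    obtain ⟨c1, c2, c3, c4, -, -⟩ := hc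
    constructor <;> rw [Finset.mem_Icc] <;> omega
  -- a corner's two removal times differ
  have htri : ∀ i j : ℕ, IsMatCorner M n i j → fR i ≠ fC j := by
    intro i j hc heq
    obtain ⟨hiI, hjI⟩ := hcmem i j hc
    have h1i := hfRpos i hiI
    have h1j := hfCpos j hjI
    have htp : fR i - 1 < p := by
      have := hfRle i
      omega
    rcases hstep (fR i - 1) htp with ⟨x, hx, hR, hC⟩ | ⟨x, hx, hC, hR⟩
    · have hjt : j ∈ DC (fR i - 1) := hfCmem j _ (by omega)
      have hnot : j ∉ DC (fR i - 1 + 1) := by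
        rw [show fR i - 1 + 1 = fC j by omega]
        exact hfCspec j
      rw [hC] at hnot
      exact hnot hjt
    · have hit : i ∈ DR (fR i - 1) := hfRmem i _ (by omega)
      have hnot : i ∉ DR (fR i - 1 + 1) := by
        rw [show fR i - 1 + 1 = fR i by omega]
        exact hfRspec i
      rw [hR] at hnot
      exact hnot hit
  -- the corner set as a finset
  have hSfin : {ij : ℕ × ℕ | IsMatCorner M n ij.1 ij.2}.Finite := by
    apply Set.Finite.subset ((Set.finite_Icc 1 n).prod (Set.finite_Icc 1 n))
    rintro ⟨i, j⟩ hij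
    obtain ⟨c1, c2, c3, c4, -, -⟩ := hij
    exact ⟨⟨c1, by omega⟩, ⟨c3, by omega⟩⟩
  set S : Finset (ℕ × ℕ) := hSfin.toFinset with hS
  have hSmem : ∀ x : ℕ × ℕ, x ∈ S ↔ IsMatCorner M n x.1 x.2 := by
    intro x
    rw [hS, Set.Finite.mem_toFinset]
    rfl
  set SA : Finset (ℕ × ℕ) := S.filter (fun ij => fR ij.1 < fC ij.2) with hSA
  set SB : Finset (ℕ × ℕ) := S.filter (fun ij => fC ij.2 < fR ij.1) with hSB
  have hcover : S ⊆ SA ∪ SB := by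
    intro x hx
    have hc := (hSmem x).mp hx
    have := htri x.1 x.2 hc
    rcases lt_or_gt_of_ne this with hlt | hgt
    · exact Finset.mem_union_left _ (Finset.mem_filter.mpr ⟨hx, hlt⟩)
    · exact Finset.mem_union_right _ (Finset.mem_filter.mpr ⟨hx, hgt⟩)
  -- bound on SA
  have hSAcard : SA.card ≤ (n - 1) * (2 * d) := by
    have hmaps : ∀ x ∈ SA, x.1 ∈ Finset.Icc 1 (n - 1) := by
      intro x hx
      exact (hcmem x.1 x.2 ((hSmem x).mp (Finset.mem_filter.mp hx).1)).1
    rw [Finset.card_eq_sum_card_fiberwise hmaps]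
    refine le_trans (Finset.sum_le_sum (g := fun _ => 2 * d) ?_) ?_
    · intro i hi
      show (SA.filter fun x => x.1 = i).card ≤ 2 * d
      have hip : fR i ≤ p := hfRle i
      have hw := hwidth (fR i) hip
      have hsubs := hsub (fR i) hip
      have hiIcc := Finset.mem_Icc.mp hi
      have key := row_fiber_bound M n d (DR (fR i)) (DC (fR i))
        (fun x hx => Finset.mem_Icc.mp (hsubs.1 hx))
        (fun x hx => Finset.mem_Icc.mp (hsubs.2 hx))
        hw i hiIcc.1 (by omega) (hfRspec i)
      set T : Set ℕ := {j | j ∈ DC (fR i) ∧ IsMatCorner M n i j} with hT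
      have hTfin : T.Finite := Set.Finite.subset (DC (fR i)).finite_toSet (fun j hj => hj.1)
      have hcard : (SA.filter fun x => x.1 = i).card ≤ T.ncard := by
        rw [Set.ncard_eq_toFinset_card T hTfin]
        apply Finset.card_le_card_of_injOn (fun x => x.2)
        · rintro ⟨i', j⟩ hx
          obtain ⟨hxSA, hxi⟩ := Finset.mem_filter.mp hx
          obtain ⟨hxS, hxlt⟩ := Finset.mem_filter.mp hxSA
          have hc := (hSmem _).mp hxS
          simp only at hxi hxlt
          subst hxi
          rw [Finset.mem_coe, Set.Finite.mem_toFinset]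
          exact ⟨hfCmem j _ hxlt, hc⟩
        · rintro ⟨i1, j1⟩ hx ⟨i2, j2⟩ hy hxy
          have hx1 := (Finset.mem_filter.mp hx).2
          have hy1 := (Finset.mem_filter.mp hy).2
          simp only at hx1 hy1 hxy
          simp [hx1, hy1, hxy]
      exact hcard.trans key
    · rw [Finset.sum_const, Nat.card_Icc, smul_eq_mul]
      apply le_of_eq
      congr 1
  -- bound on SB (by transposition)
  have hSBcard : SB.card ≤ (n - 1) * (2 * d) := by
    have hmaps : ∀ x ∈ SB, x.2 ∈ Finset.Icc 1 (n - 1) := by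
      intro x hx
      exact (hcmem x.1 x.2 ((hSmem x).mp (Finset.mem_filter.mp hx).1)).2
    rw [Finset.card_eq_sum_card_fiberwise hmaps]
    refine le_trans (Finset.sum_le_sum (g := fun _ => 2 * d) ?_) ?_
    · intro j hj
      show (SB.filter fun x => x.2 = j).card ≤ 2 * d
      have hjp : fC j ≤ p := hfCle j
      have hw := width_transpose M n d (DR (fC j)) (DC (fC j)) (hwidth (fC j) hjp)
      have hsubs := hsub (fC j) hjp
      have hjIcc := Finset.mem_Icc.mp hj
      have key := row_fiber_bound (fun x y => M y x) n d (DC (fC j)) (DR (fC j))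
        (fun x hx => Finset.mem_Icc.mp (hsubs.2 hx))
        (fun x hx => Finset.mem_Icc.mp (hsubs.1 hx))
        hw j hjIcc.1 (by omega) (hfCspec j)
      set T : Set ℕ := {i | i ∈ DR (fC j) ∧ IsMatCorner (fun x y => M y x) n j i} with hT
      have hTfin : T.Finite := Set.Finite.subset (DR (fC j)).finite_toSet (fun i hi => hi.1)
      have hcard : (SB.filter fun x => x.2 = j).card ≤ T.ncard := by
        rw [Set.ncard_eq_toFinset_card T hTfin]
        apply Finset.card_le_card_of_injOn (fun x => x.1)
        · rintro ⟨i, j'⟩ hx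
          obtain ⟨hxSB, hxj⟩ := Finset.mem_filter.mp hx
          obtain ⟨hxS, hxlt⟩ := Finset.mem_filter.mp hxSB
          have hc := (hSmem _).mp hxS
          simp only at hxj hxlt
          rw [hxj] at hc hxlt
          rw [Finset.mem_coe, Set.Finite.mem_toFinset]
          exact ⟨hfRmem i _ hxlt, corner_transpose M n i j hc⟩
        · rintro ⟨i1, j1⟩ hx ⟨i2, j2⟩ hy hxy
          have hx1 := (Finset.mem_filter.mp hx).2
          have hy1 := (Finset.mem_filter.mp hy).2
          simp only at hx1 hy1 hxy
          simp [hx1, hy1, hxy]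
      exact hcard.trans key
    · rw [Finset.sum_const, Nat.card_Icc, smul_eq_mul]
      apply le_of_eq
      congr 1
  -- total natural-number bound
  have htot : {ij : ℕ × ℕ | IsMatCorner M n ij.1 ij.2}.ncard ≤ 4 * d * (n - 1) := by
    rw [Set.ncard_eq_toFinset_card _ hSfin]
    calc S.card ≤ (SA ∪ SB).card := Finset.card_le_card hcover
      _ ≤ SA.card + SB.card := Finset.card_union_le _ _
      _ ≤ (n - 1) * (2 * d) + (n - 1) * (2 * d) := by omega
      _ = 4 * d * (n - 1) := by ring
  -- pass to the reals
  have hcast : ({ij : ℕ × ℕ | IsMatCorner M n ij.1 ij.2}.ncard : ℝ) ≤ 4 * (d : ℝ) * (n : ℝ) := by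
    calc ({ij : ℕ × ℕ | IsMatCorner M n ij.1 ij.2}.ncard : ℝ)
        ≤ ((4 * d * (n - 1) : ℕ) : ℝ) := by exact_mod_cast htot
      _ ≤ 4 * (d : ℝ) * (n : ℝ) := by
          push_cast
          have : ((n - 1 : ℕ) : ℝ) ≤ (n : ℝ) := by
            exact_mod_cast Nat.cast_le.mpr (Nat.sub_le n 1)
          nlinarith [Nat.cast_nonneg (α := ℝ) d]
  refine hcast.trans ?_
  have h2 : (1 : ℝ) ≤ 2 ^ (4 * (2 * d + 2)) := one_le_pow₀ (by norm_num)
  have hd0 : (0 : ℝ) ≤ (d : ℝ) := Nat.cast_nonneg d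
  have hn0 : (1 : ℝ) ≤ (n : ℝ) := by exact_mod_cast hn
  have step1 : 4 * (d : ℝ) * (n : ℝ) ≤ (2 * (d : ℝ) + 3) ^ 2 * ((n : ℝ) + 2) := by
    nlinarith [sq_nonneg (d : ℝ), mul_nonneg hd0 (by linarith : (0:ℝ) ≤ (n:ℝ))]
  have step2 : (2 * (d : ℝ) + 3) ^ 2 * ((n : ℝ) + 2) ≤
      16 / 3 * (2 * (d : ℝ) + 3) ^ 2 * 2 ^ (4 * (2 * d + 2)) * ((n : ℝ) + 2) := by
    have hnn : (0 : ℝ) ≤ (2 * (d : ℝ) + 3) ^ 2 * ((n : ℝ) + 2) := by positivity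
    nlinarith [mul_nonneg (sq_nonneg (2 * (d : ℝ) + 3)) (by linarith : (0:ℝ) ≤ (n:ℝ) + 2)]
  linarith
end

section
/- Let d, n ∈ ℕ with n ≥ 1. Every d-twin-ordered binary n×n matrix M admits a slab decomposition K with |K| ≤ d·(2n−2)+1. -/
namespace SlabAux

/-- Left endpoint of the block of `i` in the partition of `[1,n]` cut at `D`. -/
def blockLo (D : Finset ℕ) (i : ℕ) : ℕ :=
  if h : (D.filter (· < i)).Nonempty then (D.filter (· < i)).max' h + 1 else 1

/-- Right endpoint of the block of `i`. -/
def blockHi (n : ℕ) (D : Finset ℕ) (i : ℕ) : ℕ :=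
  if h : (D.filter (fun k => i ≤ k)).Nonempty then (D.filter (fun k => i ≤ k)).min' h else n

lemma one_le_blockLo (D : Finset ℕ) (i : ℕ) : 1 ≤ blockLo D i := by
  unfold blockLo; split <;> omega

lemma blockLo_le (D : Finset ℕ) {i : ℕ} (hi : 1 ≤ i) : blockLo D i ≤ i := by
  unfold blockLo; split
  · next h =>
    have hm := Finset.max'_mem _ h
    have := (Finset.mem_filter.1 hm).2
    omega
  · omega

lemma le_blockHi (n : ℕ) (D : Finset ℕ) {i : ℕ} (hi : i ≤ n) : i ≤ blockHi n D i := by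
  unfold blockHi; split
  · next h =>
    have hm := Finset.min'_mem _ h
    exact (Finset.mem_filter.1 hm).2
  · omega

lemma blockHi_le (n : ℕ) {D : Finset ℕ} (hD : D ⊆ Finset.Icc 1 (n - 1)) (i : ℕ) :
    blockHi n D i ≤ n := by
  unfold blockHi; split
  · next h =>
    have hm := Finset.min'_mem _ h
    have := Finset.mem_Icc.1 (hD (Finset.mem_filter.1 hm).1)
    omega
  · omega

lemma not_mem_of_blockLo_le {D : Finset ℕ} {i k : ℕ} (h1 : blockLo D i ≤ k) (h2 : k < i) :
    k ∉ D := by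
  intro hk
  have hmem : k ∈ D.filter (· < i) := Finset.mem_filter.2 ⟨hk, h2⟩
  have hne : (D.filter (· < i)).Nonempty := ⟨k, hmem⟩
  have := Finset.le_max' _ k hmem
  unfold blockLo at h1
  rw [dif_pos hne] at h1
  omega

lemma not_mem_of_lt_blockHi {n : ℕ} {D : Finset ℕ} {i k : ℕ} (h1 : i ≤ k)
    (h2 : k < blockHi n D i) : k ∉ D := by
  intro hk
  have hmem : k ∈ D.filter (fun k => i ≤ k) := Finset.mem_filter.2 ⟨hk, h1⟩
  have hne : (D.filter (fun k => i ≤ k)).Nonempty := ⟨k, hmem⟩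
  have := Finset.min'_le _ k hmem
  unfold blockHi at h2
  rw [dif_pos hne] at h2
  omega

lemma not_mem_of_mem_block {n : ℕ} {D : Finset ℕ} {i k : ℕ} (h1 : blockLo D i ≤ k)
    (h2 : k < blockHi n D i) : k ∉ D := by
  rcases lt_or_ge k i with h | h
  · exact not_mem_of_blockLo_le h1 h
  · exact not_mem_of_lt_blockHi h h2

lemma blockLo_eq_one_or (D : Finset ℕ) (i : ℕ) : blockLo D i = 1 ∨ blockLo D i - 1 ∈ D := by
  unfold blockLo; split
  · next h =>
    right
    have hm := Finset.max'_mem _ h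
    simpa using (Finset.mem_filter.1 hm).1
  · left; rfl

lemma blockHi_eq_n_or (n : ℕ) (D : Finset ℕ) (i : ℕ) :
    blockHi n D i = n ∨ blockHi n D i ∈ D := by
  unfold blockHi; split
  · next h =>
    right
    exact (Finset.mem_filter.1 (Finset.min'_mem _ h)).1
  · left; rfl

lemma blockLo_eq {D : Finset ℕ} {a i : ℕ} (ha1 : 1 ≤ a) (hai : a ≤ i)
    (ha : a = 1 ∨ a - 1 ∈ D) (hno : ∀ k, a ≤ k → k < i → k ∉ D) : blockLo D i = a := by
  have h1 := one_le_blockLo D i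
  have h2 := blockLo_le D (show 1 ≤ i by omega)
  rcases lt_trichotomy (blockLo D i) a with h | h | h
  · rcases ha with rfl | ha
    · omega
    · exact absurd ha (not_mem_of_blockLo_le (i := i) (by omega) (by omega))
  · exact h
  · rcases blockLo_eq_one_or D i with he | he
    · omega
    · exact absurd he (hno _ (by omega) (by omega))

lemma blockHi_eq {n : ℕ} {D : Finset ℕ} (hD : D ⊆ Finset.Icc 1 (n - 1)) {i b : ℕ}
    (hib : i ≤ b) (hbn : b ≤ n) (hb : b = n ∨ b ∈ D)
    (hno : ∀ k, i ≤ k → k < b → k ∉ D) : blockHi n D i = b := by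
  have h1 := le_blockHi n D (show i ≤ n by omega)
  have h2 := blockHi_le n hD i
  rcases lt_trichotomy (blockHi n D i) b with h | h | h
  · rcases blockHi_eq_n_or n D i with he | he
    · omega
    · exact absurd he (hno _ (by omega) (by omega))
  · exact h
  · rcases hb with rfl | hb
    · omega
    · exact absurd hb (not_mem_of_lt_blockHi hib h)

/-- Any element of a block has the same block (left endpoints). -/
lemma blockLo_mem_eq {D : Finset ℕ} {i a : ℕ} (h1 : blockLo D i ≤ a)
    (h2 : ∀ k, blockLo D i ≤ k → k < a → k ∉ D) : blockLo D a = blockLo D i :=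
  blockLo_eq (one_le_blockLo D i) h1 (blockLo_eq_one_or D i) h2

lemma blockLo_mem_eq' {n : ℕ} {D : Finset ℕ} {i a : ℕ} (h1 : blockLo D i ≤ a)
    (h2 : a ≤ blockHi n D i) : blockLo D a = blockLo D i :=
  blockLo_mem_eq h1 (fun k hk1 hk2 => not_mem_of_mem_block (n := n) hk1 (by omega))

lemma blockHi_mem_eq {n : ℕ} {D : Finset ℕ} (hD : D ⊆ Finset.Icc 1 (n - 1)) {i a : ℕ}
    (h1 : blockLo D i ≤ a) (h2 : a ≤ blockHi n D i) : blockHi n D a = blockHi n D i :=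
  blockHi_eq hD h2 (blockHi_le n hD i) (blockHi_eq_n_or n D i)
    (fun k hk1 hk2 => not_mem_of_mem_block (by omega) hk2)

lemma blockLo_mono {D' D : Finset ℕ} (h : D' ⊆ D) (i : ℕ) : blockLo D' i ≤ blockLo D i := by
  unfold blockLo
  split
  · next h' =>
    have hm := Finset.max'_mem _ h'
    have hmD : (D'.filter (· < i)).max' h' ∈ D.filter (· < i) :=
      Finset.filter_subset_filter _ h hm
    have hne : (D.filter (· < i)).Nonempty := ⟨_, hmD⟩
    rw [dif_pos hne]
    have := Finset.le_max' _ _ hmD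
    omega
  · split <;> omega

lemma blockHi_mono {n : ℕ} {D' D : Finset ℕ} (h : D' ⊆ D) (hD : D ⊆ Finset.Icc 1 (n - 1))
    (i : ℕ) : blockHi n D i ≤ blockHi n D' i := by
  rcases Classical.em ((D'.filter (fun k => i ≤ k)).Nonempty) with h' | h'
  · have hm := Finset.min'_mem _ h'
    have hmD : (D'.filter (fun k => i ≤ k)).min' h' ∈ D.filter (fun k => i ≤ k) :=
      Finset.filter_subset_filter _ h hm
    have hne : (D.filter (fun k => i ≤ k)).Nonempty := ⟨_, hmD⟩
    have h3 := Finset.min'_le _ _ hmD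
    unfold blockHi
    rw [dif_pos hne, dif_pos h']
    exact h3
  · have : blockHi n D' i = n := by unfold blockHi; rw [dif_neg h']
    rw [this]
    exact blockHi_le n hD i

lemma blockLo_empty (i : ℕ) : blockLo ∅ i = 1 := by
  unfold blockLo
  rw [dif_neg]
  simp

lemma blockHi_empty (n i : ℕ) : blockHi n ∅ i = n := by
  unfold blockHi
  rw [dif_neg]
  simp

lemma blockLo_full {n i : ℕ} (h1 : 1 ≤ i) (h2 : i ≤ n) :
    blockLo (Finset.Icc 1 (n - 1)) i = i := by
  apply blockLo_eq h1 le_rfl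
  · rcases Nat.eq_or_lt_of_le h1 with h | h
    · left; omega
    · right; simp only [Finset.mem_Icc]; omega
  · intro k hk1 hk2; omega

lemma blockHi_full {n i : ℕ} (h1 : 1 ≤ i) (h2 : i ≤ n) :
    blockHi n (Finset.Icc 1 (n - 1)) i = i := by
  apply blockHi_eq (le_refl _) le_rfl h2
  · rcases Nat.eq_or_lt_of_le h2 with h | h
    · left; omega
    · right; simp only [Finset.mem_Icc]; omega
  · intro k hk1 hk2; omega

lemma isBlock_block {n : ℕ} {D : Finset ℕ} (hD : D ⊆ Finset.Icc 1 (n - 1)) {i : ℕ}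
    (h1 : 1 ≤ i) (h2 : i ≤ n) : IsBlock n D (blockLo D i) (blockHi n D i) :=
  ⟨one_le_blockLo D i, le_trans (blockLo_le D h1) (le_blockHi n D h2), blockHi_le n hD i,
    blockLo_eq_one_or D i, blockHi_eq_n_or n D i, fun _ hk1 hk2 => not_mem_of_mem_block hk1 hk2⟩

end SlabAux

namespace SlabAux

def zoneOf (n : ℕ) (R C : Finset ℕ) (i j : ℕ) : ℕ × ℕ × ℕ × ℕ :=
  (blockLo R i, blockHi n R i, blockLo C j, blockHi n C j)

def AllOne (M : ℕ → ℕ → Bool) (q : ℕ × ℕ × ℕ × ℕ) : Prop :=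
  ∀ i ∈ Set.Icc q.1 q.2.1, ∀ j ∈ Set.Icc q.2.2.1 q.2.2.2, M i j = true

/-- A zone of the partition pair `(R, C)` that is all-ones but whose parent zone in the
coarser pair `(R', C')` is not all-ones. -/
def BornG (M : ℕ → ℕ → Bool) (n : ℕ) (R C R' C' : Finset ℕ) (q : ℕ × ℕ × ℕ × ℕ) : Prop :=
  (∃ i ∈ Finset.Icc 1 n, ∃ j ∈ Finset.Icc 1 n, q = zoneOf n R C i j) ∧
    AllOne M q ∧ ¬ AllOne M (zoneOf n R' C' q.1 q.2.2.1)

open Classical in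
noncomputable def KTG (M : ℕ → ℕ → Bool) (n : ℕ) (R C R' C' : Finset ℕ) :
    Finset (ℕ × ℕ × ℕ × ℕ) :=
  ((Finset.Icc 1 n ×ˢ Finset.Icc 1 n).image fun ij => zoneOf n R C ij.1 ij.2).filter
    (BornG M n R C R' C')

lemma mem_KTG {M : ℕ → ℕ → Bool} {n : ℕ} {R C R' C' : Finset ℕ} {q : ℕ × ℕ × ℕ × ℕ} :
    q ∈ KTG M n R C R' C' ↔ BornG M n R C R' C' q := by
  classical
  unfold KTG
  rw [Finset.mem_filter]
  constructor
  · exact fun h => h.2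
  · intro h
    refine ⟨?_, h⟩
    obtain ⟨i, hi, j, hj, rfl⟩ := h.1
    exact Finset.mem_image.2 ⟨(i, j), Finset.mem_product.2 ⟨hi, hj⟩, rfl⟩

/-- Dichotomy under erasing one cut: the block of `i` either is unchanged
or becomes the (new, merged) block of `x`. -/
lemma erase_block {n : ℕ} {D : Finset ℕ} (hD : D ⊆ Finset.Icc 1 (n - 1)) {x : ℕ}
    (hx : x ∈ D) {i : ℕ} (hi1 : 1 ≤ i) (hin : i ≤ n) :
    (blockLo (D.erase x) i = blockLo D i ∧ blockHi n (D.erase x) i = blockHi n D i) ∨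
    (blockLo (D.erase x) i = blockLo (D.erase x) x ∧
      blockHi n (D.erase x) i = blockHi n (D.erase x) x) := by
  set D' := D.erase x with hD'
  have hsub : D' ⊆ D := Finset.erase_subset _ _
  have hD'sub : D' ⊆ Finset.Icc 1 (n - 1) := hsub.trans hD
  by_cases h : blockLo D' i ≤ x ∧ x ≤ blockHi n D' i
  · right
    exact ⟨(blockLo_mem_eq' (n := n) h.1 h.2).symm, (blockHi_mem_eq hD'sub h.1 h.2).symm⟩
  · left
    have hmlo := blockLo_mono hsub i
    have hmhi := blockHi_mono hsub hD i
    have hiHi := le_blockHi n D' hin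
    have hiLo := blockLo_le D' hi1
    constructor
    · refine le_antisymm hmlo ?_
      by_contra hc
      push_neg at hc
      have h1 : 1 < blockLo D i := lt_of_le_of_lt (one_le_blockLo D' i) hc
      have h2 : blockLo D i - 1 ∈ D := by
        rcases blockLo_eq_one_or D i with he | he
        · omega
        · exact he
      have h3 : blockLo D i ≤ i := blockLo_le D hi1
      have h4 : blockLo D i - 1 ∉ D' :=
        not_mem_of_blockLo_le (i := i) (by omega) (by omega)
      have h5 : blockLo D i - 1 = x := by
        by_contra hne
        exact h4 (Finset.mem_erase.2 ⟨hne, h2⟩)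
      exact h ⟨by omega, by omega⟩
    · refine le_antisymm ?_ hmhi
      by_contra hc
      push_neg at hc
      have hb := blockHi_le n hD'sub i
      have h2 : blockHi n D i ∈ D := by
        rcases blockHi_eq_n_or n D i with he | he
        · omega
        · exact he
      have h3 : i ≤ blockHi n D i := le_blockHi n D hin
      have h4 : blockHi n D i ∉ D' := not_mem_of_lt_blockHi h3 hc
      have h5 : blockHi n D i = x := by
        by_contra hne
        exact h4 (Finset.mem_erase.2 ⟨hne, h2⟩)
      exact h ⟨by omega, by omega⟩

end SlabAux

namespace SlabAux

lemma row_card (M : ℕ → ℕ → Bool) (n d : ℕ) (R C : Finset ℕ) (x : ℕ)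
    (hR : R ⊆ Finset.Icc 1 (n - 1)) (hC : C ⊆ Finset.Icc 1 (n - 1)) (hx : x ∈ R)
    (hw : {cd : ℕ × ℕ | IsBlock n C cd.1 cd.2 ∧
        NonConstantZone M (blockLo (R.erase x) x) (blockHi n (R.erase x) x) cd.1 cd.2}.ncard
        ≤ d) :
    (KTG M n R C (R.erase x) C).card ≤ d := by
  classical
  set R' := R.erase x with hR'def
  have hsub : R' ⊆ R := Finset.erase_subset _ _
  have hR'sub : R' ⊆ Finset.Icc 1 (n - 1) := hsub.trans hR
  obtain ⟨hx1, hx2⟩ := Finset.mem_Icc.1 (hR hx)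
  have hn2 : 2 ≤ n := by omega
  set A := blockLo R' x with hA
  set B := blockHi n R' x with hB
  have hA1 : 1 ≤ A := one_le_blockLo R' x
  have hAx : A ≤ x := blockLo_le R' hx1
  have hBn : B ≤ n := blockHi_le n hR'sub x
  have hxB : x < B := by
    have hge := le_blockHi n R' (show x ≤ n by omega)
    rcases blockHi_eq_n_or n R' x with he | he
    · omega
    · have hxn : x ∉ R' := Finset.notMem_erase x R
      have : B ≠ x := fun hEq => hxn (hEq ▸ he)
      omega
  have key : ∀ q ∈ KTG M n R C R' C,
      (q.1 = A ∧ q.2.1 = x ∨ q.1 = x + 1 ∧ q.2.1 = B) ∧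
      IsBlock n C q.2.2.1 q.2.2.2 ∧ AllOne M q ∧
      ¬ AllOne M (A, B, q.2.2.1, q.2.2.2) := by
    intro q hq
    rw [mem_KTG] at hq
    obtain ⟨⟨i, hi, j, hj, hq_eq⟩, hall, hpar⟩ := hq
    rw [Finset.mem_Icc] at hi hj
    have e1 : q.1 = blockLo R i := by rw [hq_eq]; rfl
    have e2 : q.2.1 = blockHi n R i := by rw [hq_eq]; rfl
    have e3 : q.2.2.1 = blockLo C j := by rw [hq_eq]; rfl
    have e4 : q.2.2.2 = blockHi n C j := by rw [hq_eq]; rfl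
    have hq1i : q.1 ≤ i := e1 ▸ blockLo_le R hi.1
    have hiq2 : i ≤ q.2.1 := e2 ▸ le_blockHi n R hi.2
    have hq1_1 : 1 ≤ q.1 := e1 ▸ one_le_blockLo R i
    have hq1n : q.1 ≤ n := by omega
    have idLoR : blockLo R q.1 = q.1 := by
      rw [e1]; exact blockLo_mem_eq' (n := n) le_rfl (e1 ▸ e2 ▸ (by omega))
    have idHiR : blockHi n R q.1 = q.2.1 := by
      rw [e1, e2]; exact blockHi_mem_eq hR le_rfl (e1 ▸ e2 ▸ (by omega))
    have hjc : q.2.2.1 ≤ j := e3 ▸ blockLo_le C hj.1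
    have hje : j ≤ q.2.2.2 := e4 ▸ le_blockHi n C hj.2
    have idLoC : blockLo C q.2.2.1 = q.2.2.1 := by
      rw [e3]; exact blockLo_mem_eq' (n := n) le_rfl (e3 ▸ e4 ▸ (by omega))
    have idHiC : blockHi n C q.2.2.1 = q.2.2.2 := by
      rw [e3, e4]; exact blockHi_mem_eq hC le_rfl (e3 ▸ e4 ▸ (by omega))
    rcases erase_block hR hx hq1_1 hq1n (x := x) with ⟨hL, hH⟩ | ⟨hL, hH⟩
    · exfalso
      apply hpar
      have hzq : zoneOf n R' C q.1 q.2.2.1 = q := by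
        show (blockLo R' q.1, blockHi n R' q.1, blockLo C q.2.2.1, blockHi n C q.2.2.1) = q
        rw [hL, hH, idLoR, idHiR, idLoC, idHiC]
      rw [hzq]; exact hall
    · have hLA : blockLo R' q.1 = A := hL
      have hHB : blockHi n R' q.1 = B := hH
      have hpar' : ¬ AllOne M (A, B, q.2.2.1, q.2.2.2) := by
        have hz : zoneOf n R' C q.1 q.2.2.1 = (A, B, q.2.2.1, q.2.2.2) := by
          show (blockLo R' q.1, blockHi n R' q.1, blockLo C q.2.2.1, blockHi n C q.2.2.1) = _
          rw [hLA, hHB, idLoC, idHiC]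
        rwa [hz] at hpar
      have hAq1 : A ≤ q.1 := by
        have := blockLo_mono hsub q.1
        rw [hLA, idLoR] at this
        exact this
      have hq2B : q.2.1 ≤ B := by
        have := blockHi_mono hsub hR q.1
        rw [hHB, idHiR] at this
        exact this
      have horq : q.1 = A ∨ q.1 = x + 1 := by
        rcases (e1 ▸ blockLo_eq_one_or R i) with h1 | h1
        · left; omega
        · by_cases hqa : q.1 = A
          · left; exact hqa
          · right
            have hgt : A < q.1 := lt_of_le_of_ne hAq1 (Ne.symm hqa)
            have hq1B : q.1 ≤ B := by omega
            have hnotin : q.1 - 1 ∉ R' :=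
              not_mem_of_mem_block (n := n) (D := R') (i := x) (by omega) (by omega)
            have hxeq : q.1 - 1 = x := by
              by_contra hne
              exact hnotin (Finset.mem_erase.2 ⟨hne, h1⟩)
            omega
      refine ⟨?_, e3 ▸ e4 ▸ isBlock_block hC hj.1 hj.2, hall, hpar'⟩
      rcases horq with hqA | hqx
      · left
        refine ⟨hqA, ?_⟩
        rw [← idHiR, hqA]
        apply blockHi_eq hR hAx (by omega) (Or.inr hx)
        intro k hk1 hk2 hkR
        exact not_mem_of_mem_block (n := n) (D := R') (i := x) hk1 (by omega)
          (Finset.mem_erase.2 ⟨by omega, hkR⟩)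
      · right
        refine ⟨hqx, ?_⟩
        rw [← idHiR, hqx]
        apply blockHi_eq hR (by omega) hBn ?_ ?_
        · rcases blockHi_eq_n_or n R' x with he | he
          · left; exact he
          · right; exact hsub he
        · intro k hk1 hk2 hkR
          exact not_mem_of_mem_block (n := n) (D := R') (i := x) (by omega) (by omega)
            (Finset.mem_erase.2 ⟨by omega, hkR⟩)
  have hSfin : {cd : ℕ × ℕ | IsBlock n C cd.1 cd.2 ∧
      NonConstantZone M A B cd.1 cd.2}.Finite := by
    apply Set.Finite.subset (Set.finite_Icc ((1 : ℕ), (1 : ℕ)) (n, n))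
    rintro ⟨c, e⟩ ⟨hb, -⟩
    obtain ⟨h1, h2, h3, -⟩ := hb
    simp only [Set.mem_Icc, Prod.le_def]
    omega
  refine le_trans ?_ hw
  rw [Set.ncard_eq_toFinset_card _ hSfin]
  apply Finset.card_le_card_of_injOn (fun q => (q.2.2.1, q.2.2.2))
  · intro q hq
    obtain ⟨hblk, hisb, hall, hpar⟩ := key q hq
    rw [Finset.mem_coe, Set.Finite.mem_toFinset]
    have hce : q.2.2.1 ≤ q.2.2.2 := hisb.2.1
    have hq12 : q.1 ≤ q.2.1 ∧ A ≤ q.1 ∧ q.2.1 ≤ B := by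
      rcases hblk with ⟨h1, h2⟩ | ⟨h1, h2⟩ <;> omega
    refine ⟨hisb, ⟨q.1, Set.mem_Icc.2 ⟨hq12.2.1, by omega⟩, q.2.2.1,
      Set.mem_Icc.2 ⟨le_rfl, hce⟩, hall q.1 (Set.mem_Icc.2 ⟨le_rfl, hq12.1⟩)
        q.2.2.1 (Set.mem_Icc.2 ⟨le_rfl, hce⟩)⟩, ?_⟩
    rw [AllOne] at hpar
    push_neg at hpar
    obtain ⟨i, hi, j, hj, hij⟩ := hpar
    exact ⟨i, hi, j, hj, by simpa using hij⟩
  · rintro ⟨qa, qb, qc, qe⟩ hq ⟨ra, rb, rc, re⟩ hr hfe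
    obtain ⟨hblkq, -, hallq, hparq⟩ := key _ hq
    obtain ⟨hblkr, -, hallr, hparr⟩ := key _ hr
    simp only [Prod.mk.injEq] at hfe ⊢
    obtain ⟨hc, he⟩ := hfe
    simp only at hblkq hblkr hallq hallr hparq hparr hc he
    subst hc he
    have glue : ∀ u v : ℕ × ℕ × ℕ × ℕ, u = (A, x, qc, qe) → v = (x + 1, B, qc, qe) →
        AllOne M u → AllOne M v → False := by
      rintro u v rfl rfl h1 h2
      apply hparq
      intro i hi j hj
      rw [Set.mem_Icc] at hi
      rcases le_or_gt i x with h | h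
      · exact h1 i (Set.mem_Icc.2 ⟨hi.1, h⟩) j hj
      · exact h2 i (Set.mem_Icc.2 ⟨by omega, hi.2⟩) j hj
    rcases hblkq with ⟨h1, h2⟩ | ⟨h1, h2⟩ <;> rcases hblkr with ⟨h3, h4⟩ | ⟨h3, h4⟩ <;>
      subst h1 <;> subst h2 <;> subst h3 <;> subst h4
    · exact ⟨rfl, rfl, rfl, rfl⟩
    · exact absurd (glue _ _ rfl rfl hallq hallr) (fun h => h)
    · exact absurd (glue _ _ rfl rfl hallr hallq) (fun h => h)
    · exact ⟨rfl, rfl, rfl, rfl⟩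

end SlabAux

namespace SlabAux

def swap4 (q : ℕ × ℕ × ℕ × ℕ) : ℕ × ℕ × ℕ × ℕ := (q.2.2.1, q.2.2.2, q.1, q.2.1)

lemma swap4_swap4 (q : ℕ × ℕ × ℕ × ℕ) : swap4 (swap4 q) = q := rfl

lemma swap4_inj : Function.Injective swap4 :=
  Function.LeftInverse.injective swap4_swap4

lemma allOne_swap (M : ℕ → ℕ → Bool) (q : ℕ × ℕ × ℕ × ℕ) :
    AllOne (fun i j => M j i) (swap4 q) ↔ AllOne M q := by
  constructor
  · intro h i hi j hj; exact h j hj i hi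
  · intro h i hi j hj; exact h j hj i hi

lemma ncz_swap (M : ℕ → ℕ → Bool) (a b c d : ℕ) :
    NonConstantZone (fun i j => M j i) a b c d ↔ NonConstantZone M c d a b := by
  constructor <;>
    rintro ⟨⟨i, hi, j, hj, h1⟩, ⟨i', hi', j', hj', h2⟩⟩ <;>
    exact ⟨⟨j, hj, i, hi, h1⟩, ⟨j', hj', i', hi', h2⟩⟩

lemma bornG_swap_mp {M : ℕ → ℕ → Bool} {n : ℕ} {R C R' C' : Finset ℕ} {q : ℕ × ℕ × ℕ × ℕ}
    (h : BornG M n R C R' C' q) : BornG (fun i j => M j i) n C R C' R' (swap4 q) := by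
  obtain ⟨⟨i, hi, j, hj, hq⟩, hall, hpar⟩ := h
  refine ⟨⟨j, hj, i, hi, by rw [hq]; rfl⟩, (allOne_swap M q).2 hall, ?_⟩
  intro hcon
  apply hpar
  have hz : zoneOf n C' R' (swap4 q).1 (swap4 q).2.2.1 =
      swap4 (zoneOf n R' C' q.1 q.2.2.1) := rfl
  rw [hz] at hcon
  exact (allOne_swap M _).1 hcon

lemma KTG_swap (M : ℕ → ℕ → Bool) (n : ℕ) (R C R' C' : Finset ℕ) :
    KTG M n R C R' C' = (KTG (fun i j => M j i) n C R C' R').image swap4 := by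
  ext q
  rw [Finset.mem_image]
  constructor
  · intro h
    exact ⟨swap4 q, mem_KTG.2 (bornG_swap_mp (mem_KTG.1 h)), swap4_swap4 q⟩
  · rintro ⟨r, hr, rfl⟩
    have := bornG_swap_mp (mem_KTG.1 hr)
    exact mem_KTG.2 this

lemma col_card (M : ℕ → ℕ → Bool) (n d : ℕ) (R C : Finset ℕ) (x : ℕ)
    (hR : R ⊆ Finset.Icc 1 (n - 1)) (hC : C ⊆ Finset.Icc 1 (n - 1)) (hx : x ∈ C)
    (hw : {ab : ℕ × ℕ | IsBlock n R ab.1 ab.2 ∧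
        NonConstantZone M ab.1 ab.2 (blockLo (C.erase x) x) (blockHi n (C.erase x) x)}.ncard
        ≤ d) :
    (KTG M n R C R (C.erase x)).card ≤ d := by
  have hw' : {cd : ℕ × ℕ | IsBlock n R cd.1 cd.2 ∧
      NonConstantZone (fun i j => M j i) (blockLo (C.erase x) x) (blockHi n (C.erase x) x)
        cd.1 cd.2}.ncard ≤ d := by
    have hset : {cd : ℕ × ℕ | IsBlock n R cd.1 cd.2 ∧
        NonConstantZone (fun i j => M j i) (blockLo (C.erase x) x) (blockHi n (C.erase x) x)
          cd.1 cd.2} = {ab : ℕ × ℕ | IsBlock n R ab.1 ab.2 ∧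
        NonConstantZone M ab.1 ab.2 (blockLo (C.erase x) x) (blockHi n (C.erase x) x)} := by
      ext ⟨c, e⟩
      simp only [Set.mem_setOf_eq]
      exact and_congr_right fun _ => ncz_swap M _ _ _ _
    rw [hset]
    exact hw
  have hrow := row_card (fun i j => M j i) n d C R x hC hR hx hw'
  rw [KTG_swap M n R C R (C.erase x), Finset.card_image_of_injective _ swap4_inj]
  exact hrow

end SlabAux

open SlabAux

/-- Every `d`-twin-ordered binary `n × n` matrix admits a slab decomposition `K` with
`|K| ≤ d·(2n−2)+1`. -/
theorem slab_decomposition_exists (d n : ℕ) (M : ℕ → ℕ → Bool) (hn : 1 ≤ n)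
    (h : TwinOrdered d n M) :
    ∃ K : Finset (ℕ × ℕ × ℕ × ℕ),
      IsSlabDecomp M n (K : Set (ℕ × ℕ × ℕ × ℕ)) ∧ K.card ≤ d * (2 * n - 2) + 1 := by
  classical
  obtain ⟨p, DR, DC, h0R, h0C, hpR, hpC, hstep, hwid⟩ := h
  have hsub : ∀ t, t ≤ p → DR t ⊆ Finset.Icc 1 (n - 1) ∧ DC t ⊆ Finset.Icc 1 (n - 1) := by
    intro t
    induction t with
    | zero => intro _; rw [h0R, h0C]; exact ⟨subset_rfl, subset_rfl⟩
    | succ t ih =>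
      intro ht
      obtain ⟨hr, hc⟩ := ih (by omega)
      rcases hstep t (by omega) with ⟨x, hx, h1, h2⟩ | ⟨x, hx, h1, h2⟩
      · rw [h1, h2]; exact ⟨(Finset.erase_subset _ _).trans hr, hc⟩
      · rw [h1, h2]; exact ⟨hr, (Finset.erase_subset _ _).trans hc⟩
  have hmono : ∀ s t, s ≤ t → t ≤ p → DR t ⊆ DR s ∧ DC t ⊆ DC s := by
    intro s t hst htp
    induction t with
    | zero =>
      have hs0 : s = 0 := by omega
      subst hs0; exact ⟨subset_rfl, subset_rfl⟩
    | succ t ih =>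
      rcases Nat.eq_or_lt_of_le hst with heq | hlt
      · rw [heq]; exact ⟨subset_rfl, subset_rfl⟩
      · obtain ⟨hr, hc⟩ := ih (by omega) (by omega)
        rcases hstep t (by omega) with ⟨x, hx, h1, h2⟩ | ⟨x, hx, h1, h2⟩
        · rw [h1, h2]; exact ⟨(Finset.erase_subset _ _).trans hr, hc⟩
        · rw [h1, h2]; exact ⟨hr, (Finset.erase_subset _ _).trans hc⟩
  have hcard : ∀ t, t ≤ p → (DR t).card + (DC t).card + t = 2 * (n - 1) := by
    intro t
    induction t with
    | zero =>
      intro _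
      rw [h0R, h0C]
      simp only [Nat.card_Icc]
      omega
    | succ t ih =>
      intro ht
      have h' := ih (by omega)
      rcases hstep t (by omega) with ⟨x, hx, h1, h2⟩ | ⟨x, hx, h1, h2⟩
      · rw [h1, h2, Finset.card_erase_of_mem hx]
        have : 1 ≤ (DR t).card := Finset.card_pos.2 ⟨x, hx⟩
        omega
      · rw [h1, h2, Finset.card_erase_of_mem hx]
        have : 1 ≤ (DC t).card := Finset.card_pos.2 ⟨x, hx⟩
        omega
  have hp : p = 2 * (n - 1) := by
    have := hcard p le_rfl
    rw [hpR, hpC] at this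
    simpa using this
  have qfacts : ∀ t, t < p → ∀ q : ℕ × ℕ × ℕ × ℕ,
      BornG M n (DR t) (DC t) (DR (t + 1)) (DC (t + 1)) q →
      (1 ≤ q.1 ∧ q.1 ≤ q.2.1 ∧ q.2.1 ≤ n ∧ 1 ≤ q.2.2.1 ∧ q.2.2.1 ≤ q.2.2.2 ∧ q.2.2.2 ≤ n) ∧
      (∀ i, q.1 ≤ i → i ≤ q.2.1 → blockLo (DR t) i = q.1 ∧ blockHi n (DR t) i = q.2.1) ∧
      (∀ j, q.2.2.1 ≤ j → j ≤ q.2.2.2 →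
        blockLo (DC t) j = q.2.2.1 ∧ blockHi n (DC t) j = q.2.2.2) := by
    intro t ht q hb
    obtain ⟨⟨i0, hi0, j0, hj0, hq⟩, hall, hpar⟩ := hb
    obtain ⟨hRsub, hCsub⟩ := hsub t (le_of_lt ht)
    rw [Finset.mem_Icc] at hi0 hj0
    have e1 : q.1 = blockLo (DR t) i0 := by rw [hq]; rfl
    have e2 : q.2.1 = blockHi n (DR t) i0 := by rw [hq]; rfl
    have e3 : q.2.2.1 = blockLo (DC t) j0 := by rw [hq]; rfl
    have e4 : q.2.2.2 = blockHi n (DC t) j0 := by rw [hq]; rfl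
    have b1 : 1 ≤ q.1 := e1 ▸ one_le_blockLo _ i0
    have b2 : q.1 ≤ i0 := e1 ▸ blockLo_le _ hi0.1
    have b3 : i0 ≤ q.2.1 := e2 ▸ le_blockHi n _ hi0.2
    have b4 : q.2.1 ≤ n := e2 ▸ blockHi_le n hRsub i0
    have c1 : 1 ≤ q.2.2.1 := e3 ▸ one_le_blockLo _ j0
    have c2 : q.2.2.1 ≤ j0 := e3 ▸ blockLo_le _ hj0.1
    have c3 : j0 ≤ q.2.2.2 := e4 ▸ le_blockHi n _ hj0.2
    have c4 : q.2.2.2 ≤ n := e4 ▸ blockHi_le n hCsub j0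
    refine ⟨⟨b1, by omega, b4, c1, by omega, c4⟩, ?_, ?_⟩
    · intro i hia hib
      have h1 : blockLo (DR t) i0 ≤ i := by omega
      have h2 : i ≤ blockHi n (DR t) i0 := by omega
      exact ⟨by rw [e1]; exact blockLo_mem_eq' (n := n) h1 h2,
        by rw [e2]; exact blockHi_mem_eq hRsub h1 h2⟩
    · intro j hja hjb
      have h1 : blockLo (DC t) j0 ≤ j := by omega
      have h2 : j ≤ blockHi n (DC t) j0 := by omega
      exact ⟨by rw [e3]; exact blockLo_mem_eq' (n := n) h1 h2,
        by rw [e4]; exact blockHi_mem_eq hCsub h1 h2⟩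
  have noBig : ∀ t, t < p → ∀ q : ℕ × ℕ × ℕ × ℕ,
      BornG M n (DR t) (DC t) (DR (t + 1)) (DC (t + 1)) q →
      ¬ AllOne M ((1 : ℕ), n, (1 : ℕ), n) := by
    intro t ht q hb hall1
    obtain ⟨hRsub, hCsub⟩ := hsub (t + 1) (by omega)
    have hall1' : ∀ a b, 1 ≤ a → a ≤ n → 1 ≤ b → b ≤ n → M a b = true :=
      fun a b h1 h2 h3 h4 => hall1 a (Set.mem_Icc.2 ⟨h1, h2⟩) b (Set.mem_Icc.2 ⟨h3, h4⟩)
    apply hb.2.2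
    intro a ha b hbmem
    simp only [zoneOf, Set.mem_Icc] at ha hbmem
    have h1 := one_le_blockLo (DR (t + 1)) q.1
    have h2 := blockHi_le n hRsub q.1
    have h3 := one_le_blockLo (DC (t + 1)) q.2.2.1
    have h4 := blockHi_le n hCsub q.2.2.1
    exact hall1' a b (by omega) (by omega) (by omega) (by omega)
  set KB : Finset (ℕ × ℕ × ℕ × ℕ) :=
    (Finset.range p).biUnion
      (fun t => KTG M n (DR t) (DC t) (DR (t + 1)) (DC (t + 1))) with hKB
  set KP : Finset (ℕ × ℕ × ℕ × ℕ) :=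
    if AllOne M ((1 : ℕ), n, (1 : ℕ), n) then {((1 : ℕ), n, (1 : ℕ), n)} else ∅ with hKP
  have hKBmem : ∀ q ∈ KB, ∃ t < p, BornG M n (DR t) (DC t) (DR (t + 1)) (DC (t + 1)) q := by
    intro q hq
    rw [hKB, Finset.mem_biUnion] at hq
    obtain ⟨t, ht, hq⟩ := hq
    exact ⟨t, Finset.mem_range.1 ht, mem_KTG.1 hq⟩
  have hKPmem : ∀ q ∈ KP,
      q = ((1 : ℕ), n, (1 : ℕ), n) ∧ AllOne M ((1 : ℕ), n, (1 : ℕ), n) := by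
    intro q hq
    rw [hKP] at hq
    split at hq
    · exact ⟨Finset.mem_singleton.1 hq, by assumption⟩
    · exact absurd hq (Finset.notMem_empty q)
  refine ⟨KB ∪ KP, ⟨?_, ?_, ?_⟩, ?_⟩
  · -- every member is a slab
    intro q hq
    rw [Finset.mem_coe, Finset.mem_union] at hq
    rcases hq with hq | hq
    · obtain ⟨t, ht, hb⟩ := hKBmem q hq
      obtain ⟨⟨b1, b2, b3, b4, b5, b6⟩, -, -⟩ := qfacts t ht q hb
      exact ⟨b1, b2, b3, b4, b5, b6, hb.2.1⟩
    · obtain ⟨rfl, hall⟩ := hKPmem q hq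
      exact ⟨le_rfl, hn, le_rfl, le_rfl, hn, le_rfl, hall⟩
  · -- pairwise disjoint
    have main : ∀ t1 t2, t1 ≤ t2 → t2 < p → ∀ q r : ℕ × ℕ × ℕ × ℕ,
        BornG M n (DR t1) (DC t1) (DR (t1 + 1)) (DC (t1 + 1)) q →
        BornG M n (DR t2) (DC t2) (DR (t2 + 1)) (DC (t2 + 1)) r →
        q ≠ r → Disjoint (slabCells q) (slabCells r) := by
      intro t1 t2 h12 ht2 q r hbq hbr hne
      rw [Set.disjoint_left]
      rintro ⟨i, j⟩ hcq hcr
      obtain ⟨hiq, hjq⟩ := hcq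
      obtain ⟨hir, hjr⟩ := hcr
      rw [Set.mem_Icc] at hiq hjq hir hjr
      obtain ⟨⟨bq1, bq2, bq3, bq4, bq5, bq6⟩, hrowq, hcolq⟩ := qfacts t1 (by omega) q hbq
      obtain ⟨⟨br1, br2, br3, br4, br5, br6⟩, hrowr, hcolr⟩ := qfacts t2 ht2 r hbr
      obtain ⟨lq1, lq2⟩ := hrowq i hiq.1 hiq.2
      obtain ⟨lq3, lq4⟩ := hcolq j hjq.1 hjq.2
      obtain ⟨lr1, lr2⟩ := hrowr i hir.1 hir.2
      obtain ⟨lr3, lr4⟩ := hcolr j hjr.1 hjr.2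
      have hi1 : 1 ≤ i := by omega
      have hin : i ≤ n := by omega
      have hj1 : 1 ≤ j := by omega
      have hjn : j ≤ n := by omega
      rcases Nat.eq_or_lt_of_le h12 with heq | hlt
      · subst heq
        apply hne
        have hq' : q = zoneOf n (DR t1) (DC t1) i j := by
          show q = (blockLo (DR t1) i, blockHi n (DR t1) i,
            blockLo (DC t1) j, blockHi n (DC t1) j)
          rw [lq1, lq2, lq3, lq4]
        have hr' : r = zoneOf n (DR t1) (DC t1) i j := by
          show r = (blockLo (DR t1) i, blockHi n (DR t1) i,
            blockLo (DC t1) j, blockHi n (DC t1) j)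
          rw [lr1, lr2, lr3, lr4]
        rw [hq', hr']
      · -- t1 < t2 : the parent of q lies inside r, hence is all ones
        apply hbq.2.2
        obtain ⟨hRsub1, hCsub1⟩ := hsub (t1 + 1) (by omega)
        obtain ⟨hmR, hmC⟩ := hmono (t1 + 1) t2 (by omega) (by omega)
        obtain ⟨hmR0, hmC0⟩ := hmono t1 (t1 + 1) (by omega) (by omega)
        have a_lo : blockLo (DR (t1 + 1)) i ≤ q.1 := by
          have := blockLo_mono hmR0 i; omega
        have a_hi : q.1 ≤ blockHi n (DR (t1 + 1)) i := by
          have := le_blockHi n (DR (t1 + 1)) hin; omega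
        have z1 : blockLo (DR (t1 + 1)) q.1 = blockLo (DR (t1 + 1)) i :=
          blockLo_mem_eq' (n := n) a_lo a_hi
        have z2 : blockHi n (DR (t1 + 1)) q.1 = blockHi n (DR (t1 + 1)) i :=
          blockHi_mem_eq hRsub1 a_lo a_hi
        have b_lo : blockLo (DC (t1 + 1)) j ≤ q.2.2.1 := by
          have := blockLo_mono hmC0 j; omega
        have b_hi : q.2.2.1 ≤ blockHi n (DC (t1 + 1)) j := by
          have := le_blockHi n (DC (t1 + 1)) hjn; omega
        have z3 : blockLo (DC (t1 + 1)) q.2.2.1 = blockLo (DC (t1 + 1)) j :=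
          blockLo_mem_eq' (n := n) b_lo b_hi
        have z4 : blockHi n (DC (t1 + 1)) q.2.2.1 = blockHi n (DC (t1 + 1)) j :=
          blockHi_mem_eq hCsub1 b_lo b_hi
        have w1 : r.1 ≤ blockLo (DR (t1 + 1)) i := by
          have := blockLo_mono hmR i; omega
        have w2 : blockHi n (DR (t1 + 1)) i ≤ r.2.1 := by
          have := blockHi_mono hmR hRsub1 i; omega
        have w3 : r.2.2.1 ≤ blockLo (DC (t1 + 1)) j := by
          have := blockLo_mono hmC j; omega
        have w4 : blockHi n (DC (t1 + 1)) j ≤ r.2.2.2 := by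
          have := blockHi_mono hmC hCsub1 j; omega
        intro a ha b hbmem
        simp only [zoneOf] at ha hbmem
        rw [z1, z2] at ha
        rw [z3, z4] at hbmem
        rw [Set.mem_Icc] at ha hbmem
        exact hbr.2.1 a (Set.mem_Icc.2 ⟨by omega, by omega⟩)
          b (Set.mem_Icc.2 ⟨by omega, by omega⟩)
    intro q hq r hr hne
    rw [Finset.mem_coe, Finset.mem_union] at hq hr
    rcases hq with hq | hq <;> rcases hr with hr | hr
    · obtain ⟨t1, ht1, hbq⟩ := hKBmem q hq
      obtain ⟨t2, ht2, hbr⟩ := hKBmem r hr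
      rcases le_total t1 t2 with hle | hle
      · exact main t1 t2 hle ht2 q r hbq hbr hne
      · exact (main t2 t1 hle ht1 r q hbr hbq (Ne.symm hne)).symm
    · obtain ⟨t, ht, hb⟩ := hKBmem q hq
      exact absurd (hKPmem r hr).2 (noBig t ht q hb)
    · obtain ⟨t, ht, hb⟩ := hKBmem r hr
      exact absurd (hKPmem q hq).2 (noBig t ht r hb)
    · obtain ⟨hq', -⟩ := hKPmem q hq
      obtain ⟨hr', -⟩ := hKPmem r hr
      exact absurd (hq'.trans hr'.symm) hne
  · -- covering
    intro i j hi1 hin hj1 hjn hM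
    have hP0 : AllOne M (zoneOf n (DR 0) (DC 0) i j) := by
      rw [h0R, h0C]
      intro a ha b hb
      have ea1 : blockLo (Finset.Icc 1 (n - 1)) i = i := blockLo_full hi1 hin
      have ea2 : blockHi n (Finset.Icc 1 (n - 1)) i = i := blockHi_full hi1 hin
      have eb1 : blockLo (Finset.Icc 1 (n - 1)) j = j := blockLo_full hj1 hjn
      have eb2 : blockHi n (Finset.Icc 1 (n - 1)) j = j := blockHi_full hj1 hjn
      simp only [zoneOf] at ha hb
      rw [ea1, ea2] at ha
      rw [eb1, eb2] at hb
      rw [Set.mem_Icc] at ha hb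
      have hai : a = i := by omega
      have hbj : b = j := by omega
      rw [hai, hbj]
      exact hM
    set Q : ℕ → Prop := fun t => AllOne M (zoneOf n (DR t) (DC t) i j) with hQ
    have ht0le : Nat.findGreatest Q p ≤ p := Nat.findGreatest_le p
    have ht0 : Q (Nat.findGreatest Q p) := Nat.findGreatest_spec (Nat.zero_le p) hP0
    set t0 := Nat.findGreatest Q p with ht0def
    by_cases hcase : t0 = p
    · have hallP : AllOne M ((1 : ℕ), n, (1 : ℕ), n) := by
        have hz : zoneOf n (DR p) (DC p) i j = ((1 : ℕ), n, (1 : ℕ), n) := by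
          rw [hpR, hpC]
          simp [zoneOf, blockLo_empty, blockHi_empty]
        have h' : AllOne M (zoneOf n (DR p) (DC p) i j) := by
          have h'' := ht0
          rw [hcase] at h''
          exact h''
        rwa [hz] at h'
      refine ⟨((1 : ℕ), n, (1 : ℕ), n), ?_, ?_⟩
      · rw [Finset.mem_coe, Finset.mem_union]
        right
        rw [hKP, if_pos hallP]
        exact Finset.mem_singleton_self _
      · exact ⟨Set.mem_Icc.2 ⟨hi1, hin⟩, Set.mem_Icc.2 ⟨hj1, hjn⟩⟩
    · have ht0lt : t0 < p := by omega
      have hnot : ¬ Q (t0 + 1) :=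
        Nat.findGreatest_is_greatest (n := p) (k := t0 + 1) (by omega) (by omega)
      obtain ⟨hRsub1, hCsub1⟩ := hsub (t0 + 1) (by omega)
      obtain ⟨hmR0, hmC0⟩ := hmono t0 (t0 + 1) (by omega) (by omega)
      have a_lo : blockLo (DR (t0 + 1)) i ≤ blockLo (DR t0) i := blockLo_mono hmR0 i
      have a_hi : blockLo (DR t0) i ≤ blockHi n (DR (t0 + 1)) i :=
        le_trans (blockLo_le _ hi1) (le_blockHi n _ hin)
      have z1 : blockLo (DR (t0 + 1)) (blockLo (DR t0) i) = blockLo (DR (t0 + 1)) i :=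
        blockLo_mem_eq' (n := n) a_lo a_hi
      have z2 : blockHi n (DR (t0 + 1)) (blockLo (DR t0) i) = blockHi n (DR (t0 + 1)) i :=
        blockHi_mem_eq hRsub1 a_lo a_hi
      have b_lo : blockLo (DC (t0 + 1)) j ≤ blockLo (DC t0) j := blockLo_mono hmC0 j
      have b_hi : blockLo (DC t0) j ≤ blockHi n (DC (t0 + 1)) j :=
        le_trans (blockLo_le _ hj1) (le_blockHi n _ hjn)
      have z3 : blockLo (DC (t0 + 1)) (blockLo (DC t0) j) = blockLo (DC (t0 + 1)) j :=
        blockLo_mem_eq' (n := n) b_lo b_hi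
      have z4 : blockHi n (DC (t0 + 1)) (blockLo (DC t0) j) = blockHi n (DC (t0 + 1)) j :=
        blockHi_mem_eq hCsub1 b_lo b_hi
      have hborn : BornG M n (DR t0) (DC t0) (DR (t0 + 1)) (DC (t0 + 1))
          (zoneOf n (DR t0) (DC t0) i j) := by
        refine ⟨⟨i, Finset.mem_Icc.2 ⟨hi1, hin⟩, j, Finset.mem_Icc.2 ⟨hj1, hjn⟩, rfl⟩, ht0, ?_⟩
        have hzz : zoneOf n (DR (t0 + 1)) (DC (t0 + 1)) (zoneOf n (DR t0) (DC t0) i j).1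
            (zoneOf n (DR t0) (DC t0) i j).2.2.1 =
            zoneOf n (DR (t0 + 1)) (DC (t0 + 1)) i j := by
          show (blockLo (DR (t0 + 1)) (blockLo (DR t0) i),
            blockHi n (DR (t0 + 1)) (blockLo (DR t0) i),
            blockLo (DC (t0 + 1)) (blockLo (DC t0) j),
            blockHi n (DC (t0 + 1)) (blockLo (DC t0) j)) = _
          rw [z1, z2, z3, z4]
          rfl
        rw [hzz]
        exact hnot
      refine ⟨zoneOf n (DR t0) (DC t0) i j, ?_, ?_⟩
      · rw [Finset.mem_coe, Finset.mem_union]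
        left
        rw [hKB, Finset.mem_biUnion]
        exact ⟨t0, Finset.mem_range.2 ht0lt, mem_KTG.2 hborn⟩
      · exact ⟨Set.mem_Icc.2 ⟨blockLo_le _ hi1, le_blockHi n _ hin⟩,
          Set.mem_Icc.2 ⟨blockLo_le _ hj1, le_blockHi n _ hjn⟩⟩
  · -- cardinality
    have hKTcard : ∀ t, t < p →
        (KTG M n (DR t) (DC t) (DR (t + 1)) (DC (t + 1))).card ≤ d := by
      intro t ht
      obtain ⟨hRsub, hCsub⟩ := hsub t (by omega)
      have hw2 := hwid (t + 1) (by omega)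
      rcases hstep t ht with ⟨x, hx, h1, h2⟩ | ⟨x, hx, h1, h2⟩
      · rw [h1, h2]
        apply row_card M n d (DR t) (DC t) x hRsub hCsub hx
        obtain ⟨hx1, hx2⟩ := Finset.mem_Icc.1 (hRsub hx)
        have hbk : IsBlock n (DR (t + 1)) (blockLo ((DR t).erase x) x)
            (blockHi n ((DR t).erase x) x) := by
          rw [h1]
          exact isBlock_block ((Finset.erase_subset _ _).trans hRsub) hx1 (by omega)
        have hb2 := hw2.1 _ _ hbk
        rw [h2] at hb2
        exact hb2
      · rw [h1, h2]
        apply col_card M n d (DR t) (DC t) x hRsub hCsub hx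
        obtain ⟨hx1, hx2⟩ := Finset.mem_Icc.1 (hCsub hx)
        have hbk : IsBlock n (DC (t + 1)) (blockLo ((DC t).erase x) x)
            (blockHi n ((DC t).erase x) x) := by
          rw [h1]
          exact isBlock_block ((Finset.erase_subset _ _).trans hCsub) hx1 (by omega)
        have hb2 := hw2.2 _ _ hbk
        rw [h2] at hb2
        exact hb2
    have hKP1 : KP.card ≤ 1 := by
      rw [hKP]
      split
      · exact le_of_eq (Finset.card_singleton _)
      · simp
    calc (KB ∪ KP).card ≤ KB.card + KP.card := Finset.card_union_le _ _
      _ ≤ (∑ t ∈ Finset.range p,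
          (KTG M n (DR t) (DC t) (DR (t + 1)) (DC (t + 1))).card) + KP.card := by
        rw [hKB]
        exact Nat.add_le_add_right (Finset.card_biUnion_le) _
      _ ≤ (∑ _t ∈ Finset.range p, d) + 1 :=
        Nat.add_le_add (Finset.sum_le_sum fun t ht => hKTcard t (Finset.mem_range.1 ht)) hKP1
      _ = p * d + 1 := by rw [Finset.sum_const, Finset.card_range, smul_eq_mul]
      _ ≤ d * (2 * n - 2) + 1 := by
        rw [hp]
        have h2n : 2 * (n - 1) = 2 * n - 2 := by omega
        rw [h2n, Nat.mul_comm]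
end

section
/- Let d, n ∈ ℕ with n ≥ 1, let f_d = (16/3)·(2d+3)²·2^{4(2d+2)}, and let M be a d-twin-ordered binary n×n matrix. Then the canonical slab decomposition R of M satisfies |R| ≤ 4·f_d·(n+2) + 4n. -/
namespace TwProof

lemma slab_entry {M : ℕ → ℕ → Bool} {n a b c e : ℕ} (h : IsSlab M n a b c e) {i j : ℕ}
    (hi1 : a ≤ i) (hi2 : i ≤ b) (hj1 : c ≤ j) (hj2 : j ≤ e) : M i j = true :=
  h.2.2.2.2.2.2 i ⟨hi1, hi2⟩ j ⟨hj1, hj2⟩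

lemma slab_bounds {M : ℕ → ℕ → Bool} {n a b c e : ℕ} (h : IsSlab M n a b c e) :
    1 ≤ a ∧ a ≤ b ∧ b ≤ n ∧ 1 ≤ c ∧ c ≤ e ∧ e ≤ n :=
  ⟨h.1, h.2.1, h.2.2.1, h.2.2.2.1, h.2.2.2.2.1, h.2.2.2.2.2.1⟩

lemma strip_bounds {M : ℕ → ℕ → Bool} {n a b c : ℕ} (h : IsStrip M n a b c) :
    1 ≤ a ∧ a ≤ b ∧ b ≤ n ∧ 1 ≤ c ∧ c ≤ n := by
  have := slab_bounds h.1; exact ⟨this.1, this.2.1, this.2.2.1, this.2.2.2.1, this.2.2.2.2.2⟩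

lemma strip_entry {M : ℕ → ℕ → Bool} {n a b c : ℕ} (h : IsStrip M n a b c) {i : ℕ}
    (hi1 : a ≤ i) (hi2 : i ≤ b) : M i c = true :=
  slab_entry h.1 hi1 hi2 le_rfl le_rfl

lemma strip_head {M : ℕ → ℕ → Bool} {n a b c : ℕ} (h : IsStrip M n a b c) (ha : 2 ≤ a) :
    M (a-1) c = false := by
  obtain ⟨hs, hup, _⟩ := h
  obtain ⟨h1, h2, h3, h4, _, h6⟩ := slab_bounds hs
  by_contra hcon
  have hcon' : M (a-1) c = true := by
    cases hM : M (a-1) c with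
    | false => exact absurd hM hcon
    | true => rfl
  apply hup
  refine ⟨by omega, by omega, h3, h4, le_rfl, h6, ?_⟩
  intro i hi j hj
  rw [Set.mem_Icc] at hi hj
  have hj' : j = c := by omega
  subst hj'
  rcases Nat.eq_or_lt_of_le hi.1 with he | hlt
  · rw [← he]; exact hcon'
  · exact slab_entry hs (by omega) hi.2 le_rfl le_rfl

lemma strip_tail {M : ℕ → ℕ → Bool} {n a b c : ℕ} (h : IsStrip M n a b c) (hb : b + 1 ≤ n) :
    M (b+1) c = false := by
  obtain ⟨hs, _, hdn⟩ := h
  obtain ⟨h1, h2, _, h4, _, h6⟩ := slab_bounds hs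
  by_contra hcon
  have hcon' : M (b+1) c = true := by
    cases hM : M (b+1) c with
    | false => exact absurd hM hcon
    | true => rfl
  apply hdn
  refine ⟨h1, by omega, hb, h4, le_rfl, h6, ?_⟩
  intro i hi j hj
  rw [Set.mem_Icc] at hi hj
  have hj' : j = c := by omega
  subst hj'
  rcases Nat.eq_or_lt_of_le hi.2 with he | hlt
  · rw [he]; exact hcon'
  · exact slab_entry hs hi.1 (by omega) le_rfl le_rfl

/-- two strips in the same column which touch (`a ≤ a' ≤ b+1`) are equal. -/
lemma strip_touch_eq {M : ℕ → ℕ → Bool} {n a b a' b' c : ℕ} (h : IsStrip M n a b c)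
    (h' : IsStrip M n a' b' c) (hle : a ≤ a') (hover : a' ≤ b + 1) : a = a' ∧ b = b' := by
  obtain ⟨h1, h2, h3, h4, h5⟩ := strip_bounds h
  obtain ⟨g1, g2, g3, g4, g5⟩ := strip_bounds h'
  have hb' : b' ≤ b := by
    by_contra hcon
    push_neg at hcon
    have hbn : b + 1 ≤ n := by omega
    have : M (b+1) c = true := strip_entry h' (by omega) (by omega)
    rw [strip_tail h hbn] at this
    exact absurd this (by simp)
  have ha' : a = a' := by
    by_contra hcon
    have ha2 : 2 ≤ a' := by omega
    apply h'.2.1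
    refine ⟨by omega, by omega, by omega, h4, le_rfl, h5, ?_⟩
    intro i hi j hj
    rw [Set.mem_Icc] at hi hj
    have hj' : j = c := by omega
    subst hj'
    exact strip_entry h (by omega) (by omega)
  refine ⟨ha', ?_⟩
  by_contra hcon
  have hblt : b' < b := by omega
  apply h'.2.2
  refine ⟨g1, by omega, by omega, h4, le_rfl, h5, ?_⟩
  intro i hi j hj
  rw [Set.mem_Icc] at hi hj
  have hj' : j = c := by omega
  subst hj'
  exact strip_entry h (by omega) (by omega)

lemma strip_sep {M : ℕ → ℕ → Bool} {n a b a' b' c : ℕ} (h : IsStrip M n a b c)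
    (h' : IsStrip M n a' b' c) (hlt : a < a') : b + 2 ≤ a' := by
  by_contra hcon
  push_neg at hcon
  have := strip_touch_eq h h' (by omega) (by omega)
  omega

/-- the key corner-production lemma at a left class boundary -/
lemma corner_of_boundary {M : ℕ → ℕ → Bool} {n a b c : ℕ}
    (h : IsStrip M n a b (c+1)) (hns : ¬ IsStrip M n a b c) (hc : 1 ≤ c)
    (hab : 2 ≤ a ∨ b + 1 ≤ n) :
    ∃ u, IsMatCorner M n u c ∧ a - 1 ≤ u ∧ u ≤ b := by
  classical
  obtain ⟨h1, h2, h3, _, h5⟩ := strip_bounds h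
  have hcol : ∀ i, a ≤ i → i ≤ b → M i (c+1) = true := fun i hi hi' => strip_entry h hi hi'
  by_cases hex : ∃ r, a ≤ r ∧ r ≤ b ∧ M r c = false
  · by_cases hchg : ∃ u, a ≤ u ∧ u + 1 ≤ b ∧ ¬ (M u c = M (u+1) c)
    · obtain ⟨u, hu1, hu2, hu3⟩ := hchg
      have e1 := hcol u hu1 (by omega)
      have e2 := hcol (u+1) (by omega) hu2
      refine ⟨u, ⟨by omega, by omega, hc, by omega, ?_, ?_⟩, by omega, by omega⟩
      · intro hEq
        exact hu3 (congrArg Prod.fst hEq)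
      · rw [e1, e2]
        intro hEq
        simp only [Prod.mk.injEq] at hEq
        apply hu3
        rw [hEq.1, hEq.2]
    · push_neg at hchg
      have hconst : ∀ r, a ≤ r → r ≤ b → M r c = false := by
        obtain ⟨r₀, hr₀a, hr₀b, hr₀⟩ := hex
        have step : ∀ k r, a ≤ r → r + k ≤ b → M (r+k) c = M r c := by
          intro k
          induction k with
          | zero => intro r _ _; rfl
          | succ k ih =>
            intro r hr hrk
            have hstep : M (r+k) c = M (r+k+1) c := hchg (r+k) (by omega) (by omega)
            have : r + (k+1) = r + k + 1 := by omega
            rw [this, ← hstep, ih r hr (by omega)]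
        intro r hra hrb
        rcases le_total r r₀ with hle | hle
        · have hh := step (r₀ - r) r hra (by omega)
          rw [show r + (r₀ - r) = r₀ by omega] at hh
          rw [← hh]; exact hr₀
        · have hh := step (r - r₀) r₀ hr₀a (by omega)
          rw [show r₀ + (r - r₀) = r by omega] at hh
          rw [hh]; exact hr₀
      rcases hab with ha2 | hbn
      · have hA : M (a-1) (c+1) = false := strip_head h ha2
        have hB : M a (c+1) = true := hcol a le_rfl h2
        have hC : M a c = false := hconst a le_rfl h2
        have ha' : a - 1 + 1 = a := by omega
        refine ⟨a-1, ⟨by omega, by omega, hc, by omega, ?_, ?_⟩, by omega, by omega⟩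
        · rw [ha', hA, hB, hC]; simp
        · rw [ha', hA, hB, hC]; simp
      · have hA : M (b+1) (c+1) = false := strip_tail h hbn
        have hB : M b (c+1) = true := hcol b h2 le_rfl
        have hC : M b c = false := hconst b h2 le_rfl
        refine ⟨b, ⟨by omega, by omega, hc, by omega, ?_, ?_⟩, by omega, by omega⟩
        · rw [hA, hB, hC]; simp
        · rw [hA, hB, hC]; simp
  · push_neg at hex
    have hcol' : ∀ r, a ≤ r → r ≤ b → M r c = true := by
      intro r hr hr'
      cases hM : M r c with
      | false => exact absurd hM (hex r hr hr')
      | true => rfl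
    have hslab' : IsSlab M n a b c c := by
      refine ⟨h1, h2, h3, hc, le_rfl, by omega, ?_⟩
      intro i hi j hj
      rw [Set.mem_Icc] at hi hj
      have hj' : j = c := by omega
      subst hj'
      exact hcol' i hi.1 hi.2
    have hud : IsSlab M n (a-1) b c c ∨ IsSlab M n a (b+1) c c := by
      by_contra hcon
      push_neg at hcon
      exact hns ⟨hslab', hcon.1, hcon.2⟩
    rcases hud with hu | hd2
    · have ha2 : 2 ≤ a := by
        have := (slab_bounds hu).1; omega
      have hT : M (a-1) c = true := slab_entry hu le_rfl (by have := (slab_bounds hu).2.1; omega) le_rfl le_rfl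
      have hF : M (a-1) (c+1) = false := strip_head h ha2
      have hB : M a (c+1) = true := hcol a le_rfl h2
      have hC2 : M a c = true := hcol' a le_rfl h2
      have ha' : a - 1 + 1 = a := by omega
      refine ⟨a-1, ⟨by omega, by omega, hc, by omega, ?_, ?_⟩, by omega, by omega⟩
      · rw [ha', hT, hF, hB, hC2]; simp
      · rw [ha', hT, hF, hB, hC2]; simp
    · have hbn : b + 1 ≤ n := (slab_bounds hd2).2.2.1
      have hT : M (b+1) c = true := slab_entry hd2 (by omega) le_rfl le_rfl le_rfl
      have hF : M (b+1) (c+1) = false := strip_tail h hbn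
      have hB : M b (c+1) = true := hcol b h2 le_rfl
      have hC2 : M b c = true := hcol' b h2 le_rfl
      refine ⟨b, ⟨by omega, by omega, hc, by omega, ?_, ?_⟩, by omega, by omega⟩
      · rw [hT, hF, hB, hC2]; simp
      · rw [hT, hF, hB, hC2]; simp

end TwProof
namespace TwProof

lemma canon_strip {M : ℕ → ℕ → Bool} {n a b c e : ℕ} (h : IsCanonicalSlab M n a b c e) :
    IsStrip M n a b c := h.1

lemma canon_cd {M : ℕ → ℕ → Bool} {n a b c e : ℕ} (h : IsCanonicalSlab M n a b c e) :
    c ≤ e := by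
  have hsib : Sibling M n (a, b, c) (a, b, c) := by
    refine ⟨rfl, rfl, ?_⟩
    intro k hk
    rw [Set.mem_Icc] at hk
    simp only [min_self, max_self] at hk
    have : k = c := by omega
    subst this
    exact h.1
  exact ((h.2 (a, b, c)).mp hsib).2.2.2

lemma canon_not_strip {M : ℕ → ℕ → Bool} {n a b c e : ℕ} (h : IsCanonicalSlab M n a b c e) :
    ¬ IsStrip M n a b (c - 1) := by
  intro hstrip
  have hc1 : 1 ≤ c - 1 := (strip_bounds hstrip).2.2.2.1
  have hc : 1 ≤ c := (strip_bounds h.1).2.2.2.1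
  have hsib : Sibling M n (a, b, c) (a, b, c - 1) := by
    refine ⟨rfl, rfl, ?_⟩
    intro k hk
    rw [Set.mem_Icc] at hk
    have hmin : min c (c-1) = c - 1 := by omega
    have hmax : max c (c-1) = c := by omega
    rw [hmin, hmax] at hk
    rcases (by omega : k = c - 1 ∨ k = c) with hkk | hkk
    · subst hkk; exact hstrip
    · subst hkk; exact h.1
  have hle : c ≤ c - 1 := ((h.2 (a, b, c - 1)).mp hsib).2.2.1
  omega

lemma canon_e_unique {M : ℕ → ℕ → Bool} {n a b c e e' : ℕ} (h : IsCanonicalSlab M n a b c e)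
    (h' : IsCanonicalSlab M n a b c e') : e = e' := by
  have h1 : e ≤ e' := by
    have hsib : Sibling M n (a, b, c) (a, b, e) :=
      (h.2 (a, b, e)).mpr ⟨rfl, rfl, canon_cd h, le_rfl⟩
    exact ((h'.2 (a, b, e)).mp hsib).2.2.2
  have h2 : e' ≤ e := by
    have hsib : Sibling M n (a, b, c) (a, b, e') :=
      (h'.2 (a, b, e')).mpr ⟨rfl, rfl, canon_cd h', le_rfl⟩
    exact ((h.2 (a, b, e')).mp hsib).2.2.2
  omega

set_option maxHeartbeats 400000 in
/-- Main Part A bound: the number of canonical slabs is at most 2n + (number of corners). -/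
lemma classes_le_corners (M : ℕ → ℕ → Bool) (n : ℕ) :
    {q : ℕ × ℕ × ℕ × ℕ | IsCanonicalSlab M n q.1 q.2.1 q.2.2.1 q.2.2.2}.ncard ≤
      2 * n + {q : ℕ × ℕ | IsMatCorner M n q.1 q.2}.ncard := by
  classical
  set C := {q : ℕ × ℕ × ℕ × ℕ | IsCanonicalSlab M n q.1 q.2.1 q.2.2.1 q.2.2.2} with hC
  set K := {q : ℕ × ℕ | IsMatCorner M n q.1 q.2} with hKdef
  set LB := {t : ℕ × ℕ × ℕ | IsStrip M n t.1 t.2.1 t.2.2 ∧ ¬ IsStrip M n t.1 t.2.1 (t.2.2 - 1)}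
    with hLB
  have hKfin : K.Finite := by
    apply ((Set.finite_Icc 1 n).prod (Set.finite_Icc 1 n)).subset
    rintro ⟨i, j⟩ hq
    have hq' : IsMatCorner M n i j := hq
    obtain ⟨g1, g2, g3, g4, _⟩ := hq'
    exact ⟨Set.mem_Icc.mpr ⟨g1, by omega⟩, Set.mem_Icc.mpr ⟨g3, by omega⟩⟩
  have hLBfin : LB.Finite := by
    apply ((Set.finite_Icc 1 n).prod ((Set.finite_Icc 1 n).prod (Set.finite_Icc 1 n))).subset
    rintro ⟨a, b, c⟩ ht
    have hs : IsStrip M n a b c := ht.1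
    obtain ⟨g1, g2, g3, g4, g5⟩ := strip_bounds hs
    exact ⟨Set.mem_Icc.mpr ⟨g1, le_trans g2 g3⟩, Set.mem_Icc.mpr ⟨le_trans g1 g2, g3⟩,
      Set.mem_Icc.mpr ⟨g4, g5⟩⟩
  -- C injects into LB
  have hCLB : C.ncard ≤ LB.ncard := by
    refine Set.ncard_le_ncard_of_injOn (fun q => (q.1, q.2.1, q.2.2.1)) ?_ ?_ hLBfin
    · rintro ⟨a, b, c, e⟩ hq
      have hq' : IsCanonicalSlab M n a b c e := hq
      exact ⟨canon_strip hq', canon_not_strip hq'⟩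
    · rintro ⟨a, b, c, e⟩ hq ⟨a', b', c', e'⟩ hq' hEq
      have hq1 : IsCanonicalSlab M n a b c e := hq
      have hq2 : IsCanonicalSlab M n a' b' c' e' := hq'
      simp only [Prod.mk.injEq] at hEq
      obtain ⟨rfl, rfl, rfl⟩ := hEq
      have : e = e' := canon_e_unique hq1 hq2
      subst this
      rfl
  -- split LB into three parts
  set LB1 := {t ∈ LB | t.2.2 = 1} with hLB1
  set LBF := {t ∈ LB | 2 ≤ t.2.2 ∧ t.1 = 1 ∧ t.2.1 = n} with hLBF
  set LBC := {t ∈ LB | 2 ≤ t.2.2 ∧ ¬ (t.1 = 1 ∧ t.2.1 = n)} with hLBC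
  have hsplit : LB ⊆ LB1 ∪ (LBF ∪ LBC) := by
    rintro ⟨a, b, c⟩ ht
    have hs : IsStrip M n a b c := ht.1
    have hc : 1 ≤ c := (strip_bounds hs).2.2.2.1
    by_cases h1 : c = 1
    · exact Or.inl ⟨ht, h1⟩
    · by_cases h2 : a = 1 ∧ b = n
      · exact Or.inr (Or.inl ⟨ht, show 2 ≤ c by omega, h2⟩)
      · exact Or.inr (Or.inr ⟨ht, show 2 ≤ c by omega, h2⟩)
  have hIccn : (↑(Finset.Icc 1 n) : Set ℕ).ncard = n := by
    rw [Set.ncard_coe_finset]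
    simp
  have hLB1c : LB1.ncard ≤ n := by
    rw [← hIccn]
    refine Set.ncard_le_ncard_of_injOn (fun t => t.1) ?_ ?_ (Finset.Icc 1 n).finite_toSet
    · rintro ⟨a, b, c⟩ ht
      have hs : IsStrip M n a b c := ht.1.1
      have hb := strip_bounds hs
      simp only [Finset.coe_Icc]
      exact Set.mem_Icc.mpr ⟨hb.1, by omega⟩
    · rintro ⟨a, b, c⟩ ht ⟨a', b', c'⟩ ht' hEq
      have hs1 : IsStrip M n a b c := ht.1.1
      have hs2 : IsStrip M n a' b' c' := ht'.1.1
      have hc : c = 1 := ht.2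
      have hc' : c' = 1 := ht'.2
      subst hc; subst hc'
      have hEq' : a = a' := hEq
      subst hEq'
      have hb := (strip_touch_eq hs1 hs2 le_rfl
        (by have := (strip_bounds hs1).2.1; omega)).2
      subst hb
      rfl
  have hLBFc : LBF.ncard ≤ n := by
    rw [← hIccn]
    refine Set.ncard_le_ncard_of_injOn (fun t => t.2.2) ?_ ?_ (Finset.Icc 1 n).finite_toSet
    · rintro ⟨a, b, c⟩ ht
      have hs : IsStrip M n a b c := ht.1.1
      have hb := strip_bounds hs
      simp only [Finset.coe_Icc]
      exact Set.mem_Icc.mpr ⟨hb.2.2.2.1, hb.2.2.2.2⟩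
    · rintro ⟨a, b, c⟩ ht ⟨a', b', c'⟩ ht' hEq
      have hEq' : c = c' := hEq
      subst hEq'
      have ha : a = 1 := ht.2.2.1
      have hb : b = n := ht.2.2.2
      have ha' : a' = 1 := ht'.2.2.1
      have hb' : b' = n := ht'.2.2.2
      rw [ha, hb, ha', hb']
  have hLBCc : LBC.ncard ≤ K.ncard := by
    have hcorn : ∀ t : ℕ × ℕ × ℕ, ∃ u, t ∈ LBC →
        (IsMatCorner M n u (t.2.2 - 1) ∧ t.1 - 1 ≤ u ∧ u ≤ t.2.1) := by
      intro t
      by_cases ht : t ∈ LBC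
      · obtain ⟨a, b, c⟩ := t
        have hstrip : IsStrip M n a b c := ht.1.1
        have hns : ¬ IsStrip M n a b (c - 1) := ht.1.2
        have hc2 : 2 ≤ c := ht.2.1
        have hne : ¬ (a = 1 ∧ b = n) := ht.2.2
        have hb := strip_bounds hstrip
        have hab : 2 ≤ a ∨ b + 1 ≤ n := by
          rcases Nat.lt_or_ge a 2 with hlt | hge
          · have ha1 : a = 1 := by omega
            have hbn : b ≠ n := fun hbn => hne ⟨ha1, hbn⟩
            have hble : b ≤ n := hb.2.2.1
            right; omega
          · exact Or.inl hge
        have hc1 : c - 1 + 1 = c := by omega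
        have hstrip' : IsStrip M n a b ((c-1)+1) := by rw [hc1]; exact hstrip
        obtain ⟨u, hu, hu1, hu2⟩ := corner_of_boundary hstrip' hns (by omega) hab
        exact ⟨u, fun _ => ⟨hu, hu1, hu2⟩⟩
      · exact ⟨0, fun hcon => absurd hcon ht⟩
    choose φ hφ using hcorn
    refine Set.ncard_le_ncard_of_injOn (fun t => (φ t, t.2.2 - 1)) ?_ ?_ hKfin
    · intro t ht
      exact (hφ t ht).1
    · rintro ⟨a, b, c⟩ ht ⟨a', b', c'⟩ ht' hEq
      simp only [Prod.mk.injEq] at hEq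
      obtain ⟨hu, hcc⟩ := hEq
      have hcc0 : c - 1 = c' - 1 := hcc
      have hc2 : 2 ≤ c := ht.2.1
      have hc2' : 2 ≤ c' := ht'.2.1
      have hcc' : c = c' := by omega
      subst hcc'
      have hu1 : a - 1 ≤ φ (a, b, c) := (hφ _ ht).2.1
      have hu2 : φ (a, b, c) ≤ b := (hφ _ ht).2.2
      have hu1' : a' - 1 ≤ φ (a', b', c) := (hφ _ ht').2.1
      have hu2' : φ (a', b', c) ≤ b' := (hφ _ ht').2.2
      have huu : φ (a, b, c) = φ (a', b', c) := hu
      have hstrip : IsStrip M n a b c := ht.1.1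
      have hstrip' : IsStrip M n a' b' c := ht'.1.1
      have haa : a = a' := by
        rcases Nat.lt_trichotomy a a' with hlt | heq | hgt
        · have := strip_sep hstrip hstrip' hlt
          omega
        · exact heq
        · have := strip_sep hstrip' hstrip hgt
          omega
      subst haa
      have hbb : b = b' := (strip_touch_eq hstrip hstrip' le_rfl
        (by have := (strip_bounds hstrip).2.1; omega)).2
      subst hbb
      rfl
  calc C.ncard ≤ LB.ncard := hCLB
    _ ≤ (LB1 ∪ (LBF ∪ LBC)).ncard := Set.ncard_le_ncard hsplit
      (hLBfin.subset (by rintro t (h | h | h) <;> exact h.1))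
    _ ≤ LB1.ncard + (LBF ∪ LBC).ncard := Set.ncard_union_le _ _
    _ ≤ LB1.ncard + (LBF.ncard + LBC.ncard) := Nat.add_le_add_left (Set.ncard_union_le _ _) _
    _ ≤ n + (n + K.ncard) := add_le_add hLB1c (add_le_add hLBFc hLBCc)
    _ = 2 * n + K.ncard := by omega

end TwProof
namespace TwProof

/-- left endpoint of the block of the partition (with cut set `D`) containing `w`. -/
noncomputable def blkL (D : Finset ℕ) (w : ℕ) : ℕ :=
  if h : (D.filter (fun k => k < w)).Nonempty then (D.filter (fun k => k < w)).max' h + 1 else 1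

/-- right endpoint of the block of the partition (with cut set `D`) containing `w`. -/
noncomputable def blkR (D : Finset ℕ) (n w : ℕ) : ℕ :=
  if h : (D.filter (fun k => w ≤ k)).Nonempty then (D.filter (fun k => w ≤ k)).min' h else n

lemma blkL_le {D : Finset ℕ} {w : ℕ} (hw : 1 ≤ w) : blkL D w ≤ w := by
  unfold blkL
  split_ifs with h
  · have := (D.filter (fun k => k < w)).max'_mem h
    rw [Finset.mem_filter] at this
    omega
  · exact hw

lemma blkL_pos {D : Finset ℕ} {w : ℕ} : 1 ≤ blkL D w := by
  unfold blkL
  split_ifs <;> omega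

lemma blkR_ge {D : Finset ℕ} {n w : ℕ} (hw : w ≤ n) : w ≤ blkR D n w := by
  unfold blkR
  split_ifs with h
  · have := (D.filter (fun k => w ≤ k)).min'_mem h
    rw [Finset.mem_filter] at this
    omega
  · exact hw

lemma blkR_le {D : Finset ℕ} {n w : ℕ} (hD : D ⊆ Finset.Icc 1 (n-1)) (hn : 1 ≤ n) :
    blkR D n w ≤ n := by
  unfold blkR
  split_ifs with h
  · have hm := (D.filter (fun k => w ≤ k)).min'_mem h
    rw [Finset.mem_filter] at hm
    have := hD hm.1
    rw [Finset.mem_Icc] at this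
    omega
  · exact le_rfl

lemma lt_blkL {D : Finset ℕ} {w k : ℕ} (hk : k ∈ D) (hlt : k < w) : k < blkL D w := by
  have hmem : k ∈ D.filter (fun j => j < w) := Finset.mem_filter.mpr ⟨hk, hlt⟩
  have hne : (D.filter (fun j => j < w)).Nonempty := ⟨k, hmem⟩
  have hle : k ≤ (D.filter (fun j => j < w)).max' hne := Finset.le_max' _ k hmem
  unfold blkL
  rw [dif_pos hne]
  omega

lemma blkR_le_of_cut {D : Finset ℕ} {n w k : ℕ} (hk : k ∈ D) (hge : w ≤ k) :
    blkR D n w ≤ k := by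
  have hmem : k ∈ D.filter (fun j => w ≤ j) := Finset.mem_filter.mpr ⟨hk, hge⟩
  have hne : (D.filter (fun j => w ≤ j)).Nonempty := ⟨k, hmem⟩
  have hle : (D.filter (fun j => w ≤ j)).min' hne ≤ k := Finset.min'_le _ k hmem
  unfold blkR
  rw [dif_pos hne]
  omega

lemma blk_isBlock {D : Finset ℕ} {n w : ℕ} (hD : D ⊆ Finset.Icc 1 (n-1))
    (h1 : 1 ≤ w) (h2 : w ≤ n) : IsBlock n D (blkL D w) (blkR D n w) := by
  refine ⟨blkL_pos, le_trans (blkL_le h1) (blkR_ge h2), blkR_le hD (by omega), ?_, ?_, ?_⟩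
  · unfold blkL
    split_ifs with h
    · right
      have hm := (D.filter (fun k => k < w)).max'_mem h
      rw [Finset.mem_filter] at hm
      simpa using hm.1
    · left; rfl
  · unfold blkR
    split_ifs with h
    · right
      have hm := (D.filter (fun k => w ≤ k)).min'_mem h
      rw [Finset.mem_filter] at hm
      exact hm.1
    · left; rfl
  · intro k hk1 hk2 hkD
    rcases Nat.lt_or_ge k w with hlt | hge
    · have := lt_blkL hkD hlt
      omega
    · have := blkR_le_of_cut (n := n) hkD hge
      omega

lemma blkR_eq_self {D : Finset ℕ} {n w : ℕ} (hw : w ∈ D) (hn : w ≤ n) : blkR D n w = w := by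
  have h1 := blkR_le_of_cut (n := n) hw le_rfl
  have h2 := blkR_ge (D := D) (n := n) (w := w) hn
  omega

lemma blkL_eq_succ {D : Finset ℕ} {x : ℕ} (hx : x ∈ D) : blkL D (x+1) = x + 1 := by
  have h1 := lt_blkL hx (by omega : x < x + 1)
  have h2 := blkL_le (D := D) (w := x + 1) (by omega)
  omega

lemma blkR_ge_succ {D : Finset ℕ} {n w : ℕ} (hw : w ∉ D) (hn : w + 1 ≤ n) :
    w + 1 ≤ blkR D n w := by
  have hge := blkR_ge (D := D) (n := n) (w := w) (by omega)
  rcases Nat.eq_or_lt_of_le hge with he | hlt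
  · exfalso
    unfold blkR at he
    split_ifs at he with h
    · have hm := (D.filter (fun k => w ≤ k)).min'_mem h
      rw [Finset.mem_filter] at hm
      rw [← he] at hm
      exact hw hm.1
    · omega
  · omega

end TwProof
namespace TwProof

lemma ncard_biUnion_le {α : Type*} (m : ℕ) (S : ℕ → Set α) (hfin : ∀ τ, (S τ).Finite) :
    (⋃ τ ∈ Finset.range m, S τ).ncard ≤ ∑ τ ∈ Finset.range m, (S τ).ncard := by
  induction m with
  | zero => simp
  | succ m ih =>
    rw [Finset.range_add_one, Finset.sum_insert (by simp)]
    have he : (⋃ τ ∈ insert m (Finset.range m), S τ) = S m ∪ ⋃ τ ∈ Finset.range m, S τ := by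
      simp [Set.biUnion_insert]
    rw [he]
    exact le_trans (Set.ncard_union_le _ _) (Nat.add_le_add_left ih _)

lemma corner_bound (M : ℕ → ℕ → Bool) (n d : ℕ) (hn : 1 ≤ n) (h : TwinOrdered d n M) :
    {q : ℕ × ℕ | IsMatCorner M n q.1 q.2}.ncard ≤ 4 * d * n := by
  classical
  obtain ⟨p, DR, DC, h0R, h0C, hpR, hpC, hstep, hwidth⟩ := h
  set K := {q : ℕ × ℕ | IsMatCorner M n q.1 q.2} with hKdef
  have hKfin : K.Finite := by
    apply ((Set.finite_Icc 1 n).prod (Set.finite_Icc 1 n)).subset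
    rintro ⟨i, j⟩ hq
    have hq' : IsMatCorner M n i j := hq
    obtain ⟨g1, g2, g3, g4, -⟩ := hq'
    exact ⟨Set.mem_Icc.mpr ⟨g1, by omega⟩, Set.mem_Icc.mpr ⟨g3, by omega⟩⟩
  have hstep' : ∀ t, t < p → DR (t+1) ⊆ DR t ∧ DC (t+1) ⊆ DC t := by
    intro t ht
    rcases hstep t ht with ⟨x, hx, hR, hC⟩ | ⟨x, hx, hC, hR⟩
    · rw [hR, hC]; exact ⟨Finset.erase_subset _ _, subset_rfl⟩
    · rw [hR, hC]; exact ⟨subset_rfl, Finset.erase_subset _ _⟩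
  have hmonoR : ∀ t, t ≤ p → ∀ s, s ≤ t → DR t ⊆ DR s := by
    intro t
    induction t with
    | zero =>
      intro _ s hs
      have hs0 : s = 0 := by omega
      subst hs0
      exact subset_rfl
    | succ t ih =>
      intro htp s hs
      rcases Nat.eq_or_lt_of_le hs with he | hlt
      · subst he; exact subset_rfl
      · exact ((hstep' t (by omega)).1).trans (ih (by omega) s (by omega))
  have hmonoC : ∀ t, t ≤ p → ∀ s, s ≤ t → DC t ⊆ DC s := by
    intro t
    induction t with
    | zero =>
      intro _ s hs
      have hs0 : s = 0 := by omega
      subst hs0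
      exact subset_rfl
    | succ t ih =>
      intro htp s hs
      rcases Nat.eq_or_lt_of_le hs with he | hlt
      · subst he; exact subset_rfl
      · exact ((hstep' t (by omega)).2).trans (ih (by omega) s (by omega))
  have hsubR : ∀ t, t ≤ p → DR t ⊆ Finset.Icc 1 (n-1) := by
    intro t ht
    have := hmonoR t ht 0 (by omega)
    rwa [h0R] at this
  have hsubC : ∀ t, t ≤ p → DC t ⊆ Finset.Icc 1 (n-1) := by
    intro t ht
    have := hmonoC t ht 0 (by omega)
    rwa [h0C] at this
  have hexrem : ∀ (E : ℕ → Finset ℕ), (∀ t, t < p → E (t+1) ⊆ E t) → E p = ∅ →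
      ∀ x, x ∈ E 0 → ∃ t, t < p ∧ x ∈ E t ∧ x ∉ E (t+1) := by
    intro E hEs hEp x hx0
    by_contra hcon
    push_neg at hcon
    have hall : ∀ t, t ≤ p → x ∈ E t := by
      intro t
      induction t with
      | zero => intro _; exact hx0
      | succ t ih => intro ht; exact hcon t (by omega) (ih (by omega))
    have := hall p le_rfl
    rw [hEp] at this
    simp at this
  have hremR : ∀ i, ∃ t, i ∈ Finset.Icc 1 (n-1) → (t < p ∧ i ∈ DR t ∧ i ∉ DR (t+1)) := by
    intro i
    by_cases hi : i ∈ Finset.Icc 1 (n-1)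
    · obtain ⟨t, ht⟩ := hexrem DR (fun t ht => (hstep' t ht).1) hpR i (by rw [h0R]; exact hi)
      exact ⟨t, fun _ => ht⟩
    · exact ⟨0, fun hcon => absurd hcon hi⟩
  have hremC : ∀ x, ∃ t, x ∈ Finset.Icc 1 (n-1) → (t < p ∧ x ∈ DC t ∧ x ∉ DC (t+1)) := by
    intro x
    by_cases hx : x ∈ Finset.Icc 1 (n-1)
    · obtain ⟨t, ht⟩ := hexrem DC (fun t ht => (hstep' t ht).2) hpC x (by rw [h0C]; exact hx)
      exact ⟨t, fun _ => ht⟩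
    · exact ⟨0, fun hcon => absurd hcon hx⟩
  choose sR hsR using hremR
  choose sC hsC using hremC
  have hinR : ∀ i, i ∈ Finset.Icc 1 (n-1) → ∀ t, t ≤ sR i → i ∈ DR t := by
    intro i hi t ht
    obtain ⟨hlt, hin, -⟩ := hsR i hi
    exact hmonoR (sR i) (le_of_lt hlt) t ht hin
  have hinC : ∀ x, x ∈ Finset.Icc 1 (n-1) → ∀ t, t ≤ sC x → x ∈ DC t := by
    intro x hx t ht
    obtain ⟨hlt, hin, -⟩ := hsC x hx
    exact hmonoC (sC x) (le_of_lt hlt) t ht hin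
  set S : ℕ → Set (ℕ × ℕ) := fun τ => {q | q ∈ K ∧ min (sR q.1) (sC q.2) = τ} with hSdef
  have hSfin : ∀ τ, (S τ).Finite := fun τ => hKfin.subset (fun q hq => hq.1)
  have hcover : K ⊆ ⋃ τ ∈ Finset.range p, S τ := by
    rintro ⟨i, x⟩ hq
    have hcq : IsMatCorner M n i x := hq
    obtain ⟨c1, c2, c3, c4, -, -⟩ := hcq
    have hiI : i ∈ Finset.Icc 1 (n-1) := by rw [Finset.mem_Icc]; omega
    have hxI : x ∈ Finset.Icc 1 (n-1) := by rw [Finset.mem_Icc]; omega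
    have h1 := (hsR i hiI).1
    have h2 := (hsC x hxI).1
    simp only [Set.mem_iUnion, Finset.mem_range, exists_prop]
    exact ⟨min (sR i) (sC x), lt_of_le_of_lt (min_le_left _ _) h1, hq, rfl⟩
  have hτbound : ∀ τ, τ < p → (S τ).ncard ≤ 2 * d := by
    intro τ hτ
    have hτ1 : τ + 1 ≤ p := hτ
    have hSτfin := hSfin τ
    rcases hstep τ hτ with ⟨i₀, hi₀, hRe, hCe⟩ | ⟨x₀, hx₀, hCe, hRe⟩
    · -- row step removing the row cut i₀
      have hi₀I := hsubR τ (by omega) hi₀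
      rw [Finset.mem_Icc] at hi₀I
      have hq_props : ∀ q ∈ S τ, q.1 = i₀ ∧ τ < sC q.2 := by
        rintro ⟨i, x⟩ hqS
        have hqS' : (i, x) ∈ K ∧ min (sR i) (sC x) = τ := hqS
        obtain ⟨hqK, hmin⟩ := hqS'
        have hcq : IsMatCorner M n i x := hqK
        obtain ⟨c1, c2, c3, c4, -, -⟩ := hcq
        have hiI : i ∈ Finset.Icc 1 (n-1) := by rw [Finset.mem_Icc]; omega
        have hxI : x ∈ Finset.Icc 1 (n-1) := by rw [Finset.mem_Icc]; omega
        obtain ⟨hsRlt, hsRin, hsRout⟩ := hsR i hiI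
        obtain ⟨hsClt, hsCin, hsCout⟩ := hsC x hxI
        have hsCne : sC x ≠ τ := by
          intro he
          rw [he, hCe] at hsCout
          rw [he] at hsCin
          exact hsCout hsCin
        have hsRτ : sR i = τ := by
          rcases le_total (sR i) (sC x) with hle | hle
          · rw [min_eq_left hle] at hmin; exact hmin
          · rw [min_eq_right hle] at hmin; exact absurd hmin hsCne
        have hτleC : τ ≤ sC x := by
          rw [← hmin]; exact min_le_right _ _
        have hiout : i ∉ DR (τ+1) := by rw [← hsRτ]; exact hsRout
        have hieq : i = i₀ := by
          by_contra hne
          apply hiout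
          rw [hRe]
          exact Finset.mem_erase.mpr ⟨hne, hinR i hiI τ (by omega)⟩
        have hlt : τ < sC x := by omega
        exact ⟨hieq, hlt⟩
      have hxmem : ∀ q ∈ S τ, q.2 ∈ DC (τ+1) ∧ 1 ≤ q.2 ∧ q.2 + 1 ≤ n := by
        rintro ⟨i, x⟩ hq
        have hqS' : (i, x) ∈ K ∧ min (sR i) (sC x) = τ := hq
        have hcq : IsMatCorner M n i x := hqS'.1
        obtain ⟨c1, c2, c3, c4, -, -⟩ := hcq
        have hxI : x ∈ Finset.Icc 1 (n-1) := by rw [Finset.mem_Icc]; omega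
        have hgt : τ < sC x := (hq_props _ hq).2
        exact ⟨hinC x hxI (τ+1) (by omega), c3, c4⟩
      set a := blkL (DR (τ+1)) i₀ with ha
      set b := blkR (DR (τ+1)) n i₀ with hb
      have hDRsub1 : DR (τ+1) ⊆ Finset.Icc 1 (n-1) := hsubR (τ+1) hτ1
      have hDCsub1 : DC (τ+1) ⊆ Finset.Icc 1 (n-1) := hsubC (τ+1) hτ1
      have hblk : IsBlock n (DR (τ+1)) a b := blk_isBlock hDRsub1 (by omega) (by omega)
      have hnotmem : i₀ ∉ DR (τ+1) := by rw [hRe]; simp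
      have hbge : i₀ + 1 ≤ b := blkR_ge_succ hnotmem (by omega)
      have hale : a ≤ i₀ := blkL_le (by omega)
      set TT := {cd : ℕ × ℕ | IsBlock n (DC (τ+1)) cd.1 cd.2 ∧
        NonConstantZone M a b cd.1 cd.2} with hTT
      have hTTcard : TT.ncard ≤ d := (hwidth (τ+1) hτ1).1 a b hblk
      have hTTfin : TT.Finite := by
        apply ((Set.finite_Icc 1 n).prod (Set.finite_Icc 1 n)).subset
        rintro ⟨l, r⟩ hlr
        have hB : IsBlock n (DC (τ+1)) l r := hlr.1
        obtain ⟨b1, b2, b3, -⟩ := hB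
        exact ⟨Set.mem_Icc.mpr ⟨b1, by omega⟩, Set.mem_Icc.mpr ⟨by omega, b3⟩⟩
      set A0 := {q ∈ S τ | M q.1 q.2 ≠ M (q.1+1) q.2} with hA0
      set A1 := {q ∈ S τ | M q.1 q.2 = M (q.1+1) q.2} with hA1
      have hsplitS : S τ ⊆ A0 ∪ A1 := by
        intro q hq
        by_cases hM : M q.1 q.2 = M (q.1+1) q.2
        · exact Or.inr ⟨hq, hM⟩
        · exact Or.inl ⟨hq, hM⟩
      have hA0c : A0.ncard ≤ d := by
        have hinj : A0.ncard ≤ TT.ncard := by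
          refine Set.ncard_le_ncard_of_injOn
            (fun q => (blkL (DC (τ+1)) q.2, blkR (DC (τ+1)) n q.2)) ?_ ?_ hTTfin
          · rintro ⟨i, x⟩ hq
            have hqS := hq.1
            have hdiff : M i x ≠ M (i+1) x := hq.2
            obtain ⟨hxm, hx1, hx2⟩ := hxmem _ hqS
            have hieq : i = i₀ := (hq_props _ hqS).1
            have hL : blkL (DC (τ+1)) x ≤ x := blkL_le (by omega)
            have hR : x ≤ blkR (DC (τ+1)) n x := blkR_ge (by omega)
            have hnc : NonConstantZone M a b (blkL (DC (τ+1)) x) (blkR (DC (τ+1)) n x) := by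
              have hia : a ≤ i := by omega
              have hib : i + 1 ≤ b := by omega
              cases hMv : M i x with
              | true =>
                have hMv2 : M (i+1) x = false := by
                  cases hMv2 : M (i+1) x with
                  | false => rfl
                  | true => exact absurd (hMv.trans hMv2.symm) hdiff
                exact ⟨⟨i, Set.mem_Icc.mpr ⟨hia, by omega⟩, x, Set.mem_Icc.mpr ⟨hL, hR⟩, hMv⟩,
                  ⟨i+1, Set.mem_Icc.mpr ⟨by omega, hib⟩, x, Set.mem_Icc.mpr ⟨hL, hR⟩, hMv2⟩⟩
              | false =>
                have hMv2 : M (i+1) x = true := by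
                  cases hMv2 : M (i+1) x with
                  | true => rfl
                  | false => exact absurd (hMv.trans hMv2.symm) hdiff
                exact ⟨⟨i+1, Set.mem_Icc.mpr ⟨by omega, hib⟩, x, Set.mem_Icc.mpr ⟨hL, hR⟩, hMv2⟩,
                  ⟨i, Set.mem_Icc.mpr ⟨hia, by omega⟩, x, Set.mem_Icc.mpr ⟨hL, hR⟩, hMv⟩⟩
            exact ⟨blk_isBlock hDCsub1 (by omega) (by omega), hnc⟩
          · rintro ⟨i, x⟩ hq ⟨i', x'⟩ hq' hEq
            simp only [Prod.mk.injEq] at hEq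
            obtain ⟨hxm, hx1, hx2⟩ := hxmem _ hq.1
            obtain ⟨hxm', hx1', hx2'⟩ := hxmem _ hq'.1
            have hxe : blkR (DC (τ+1)) n x = x := blkR_eq_self hxm (by omega)
            have hxe' : blkR (DC (τ+1)) n x' = x' := blkR_eq_self hxm' (by omega)
            have hxx : x = x' := by rw [← hxe, ← hxe']; exact hEq.2
            have hii : i = i₀ := (hq_props _ hq.1).1
            have hii' : i' = i₀ := (hq_props _ hq'.1).1
            simp [hxx, hii, hii']
        exact hinj.trans hTTcard
      have hA1c : A1.ncard ≤ d := by
        have hinj : A1.ncard ≤ TT.ncard := by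
          refine Set.ncard_le_ncard_of_injOn
            (fun q => (blkL (DC (τ+1)) (q.2+1), blkR (DC (τ+1)) n (q.2+1))) ?_ ?_ hTTfin
          · rintro ⟨i, x⟩ hq
            have hqS := hq.1
            have heqc : M i x = M (i+1) x := hq.2
            have hqS' : (i, x) ∈ K ∧ min (sR i) (sC x) = τ := hqS
            have hcq : IsMatCorner M n i x := hqS'.1
            have hdiff : M i (x+1) ≠ M (i+1) (x+1) := by
              intro hcon
              apply hcq.2.2.2.2.1
              rw [heqc, hcon]
            obtain ⟨hxm, hx1, hx2⟩ := hxmem _ hqS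
            have hieq : i = i₀ := (hq_props _ hqS).1
            have hL : blkL (DC (τ+1)) (x+1) ≤ x+1 := blkL_le (by omega)
            have hR : x+1 ≤ blkR (DC (τ+1)) n (x+1) := blkR_ge (by omega)
            have hnc : NonConstantZone M a b (blkL (DC (τ+1)) (x+1))
                (blkR (DC (τ+1)) n (x+1)) := by
              have hia : a ≤ i := by omega
              have hib : i + 1 ≤ b := by omega
              cases hMv : M i (x+1) with
              | true =>
                have hMv2 : M (i+1) (x+1) = false := by
                  cases hMv2 : M (i+1) (x+1) with
                  | false => rfl
                  | true => exact absurd (hMv.trans hMv2.symm) hdiff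
                exact ⟨⟨i, Set.mem_Icc.mpr ⟨hia, by omega⟩, x+1, Set.mem_Icc.mpr ⟨hL, hR⟩, hMv⟩,
                  ⟨i+1, Set.mem_Icc.mpr ⟨by omega, hib⟩, x+1, Set.mem_Icc.mpr ⟨hL, hR⟩, hMv2⟩⟩
              | false =>
                have hMv2 : M (i+1) (x+1) = true := by
                  cases hMv2 : M (i+1) (x+1) with
                  | true => rfl
                  | false => exact absurd (hMv.trans hMv2.symm) hdiff
                exact ⟨⟨i+1, Set.mem_Icc.mpr ⟨by omega, hib⟩, x+1, Set.mem_Icc.mpr ⟨hL, hR⟩, hMv2⟩,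
                  ⟨i, Set.mem_Icc.mpr ⟨hia, by omega⟩, x+1, Set.mem_Icc.mpr ⟨hL, hR⟩, hMv⟩⟩
            exact ⟨blk_isBlock hDCsub1 (by omega) (by omega), hnc⟩
          · rintro ⟨i, x⟩ hq ⟨i', x'⟩ hq' hEq
            simp only [Prod.mk.injEq] at hEq
            obtain ⟨hxm, hx1, hx2⟩ := hxmem _ hq.1
            obtain ⟨hxm', hx1', hx2'⟩ := hxmem _ hq'.1
            have hxe : blkL (DC (τ+1)) (x+1) = x+1 := blkL_eq_succ hxm
            have hxe' : blkL (DC (τ+1)) (x'+1) = x'+1 := blkL_eq_succ hxm'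
            have hxx : x = x' := by
              have := hEq.1
              rw [hxe, hxe'] at this
              omega
            have hii : i = i₀ := (hq_props _ hq.1).1
            have hii' : i' = i₀ := (hq_props _ hq'.1).1
            simp [hxx, hii, hii']
        exact hinj.trans hTTcard
      calc (S τ).ncard ≤ (A0 ∪ A1).ncard :=
            Set.ncard_le_ncard hsplitS ((hSτfin.subset (fun q hq => hq.1)).union
              (hSτfin.subset (fun q hq => hq.1)))
        _ ≤ A0.ncard + A1.ncard := Set.ncard_union_le _ _
        _ ≤ d + d := add_le_add hA0c hA1c
        _ = 2 * d := by omega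
    · -- column step removing the column cut x₀
      have hx₀I := hsubC τ (by omega) hx₀
      rw [Finset.mem_Icc] at hx₀I
      have hq_props : ∀ q ∈ S τ, q.2 = x₀ ∧ τ < sR q.1 := by
        rintro ⟨i, x⟩ hqS
        have hqS' : (i, x) ∈ K ∧ min (sR i) (sC x) = τ := hqS
        obtain ⟨hqK, hmin⟩ := hqS'
        have hcq : IsMatCorner M n i x := hqK
        obtain ⟨c1, c2, c3, c4, -, -⟩ := hcq
        have hiI : i ∈ Finset.Icc 1 (n-1) := by rw [Finset.mem_Icc]; omega
        have hxI : x ∈ Finset.Icc 1 (n-1) := by rw [Finset.mem_Icc]; omega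
        obtain ⟨hsRlt, hsRin, hsRout⟩ := hsR i hiI
        obtain ⟨hsClt, hsCin, hsCout⟩ := hsC x hxI
        have hsRne : sR i ≠ τ := by
          intro he
          rw [he, hRe] at hsRout
          rw [he] at hsRin
          exact hsRout hsRin
        have hsCτ : sC x = τ := by
          rcases le_total (sR i) (sC x) with hle | hle
          · rw [min_eq_left hle] at hmin; exact absurd hmin hsRne
          · rw [min_eq_right hle] at hmin; exact hmin
        have hτleR : τ ≤ sR i := by
          rw [← hmin]; exact min_le_left _ _
        have hxout : x ∉ DC (τ+1) := by rw [← hsCτ]; exact hsCout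
        have hxeq : x = x₀ := by
          by_contra hne
          apply hxout
          rw [hCe]
          exact Finset.mem_erase.mpr ⟨hne, hinC x hxI τ (by omega)⟩
        have hlt : τ < sR i := by omega
        exact ⟨hxeq, hlt⟩
      have himem : ∀ q ∈ S τ, q.1 ∈ DR (τ+1) ∧ 1 ≤ q.1 ∧ q.1 + 1 ≤ n := by
        rintro ⟨i, x⟩ hq
        have hqS' : (i, x) ∈ K ∧ min (sR i) (sC x) = τ := hq
        have hcq : IsMatCorner M n i x := hqS'.1
        obtain ⟨c1, c2, c3, c4, -, -⟩ := hcq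
        have hiI : i ∈ Finset.Icc 1 (n-1) := by rw [Finset.mem_Icc]; omega
        have hgt : τ < sR i := (hq_props _ hq).2
        exact ⟨hinR i hiI (τ+1) (by omega), c1, c2⟩
      set c0 := blkL (DC (τ+1)) x₀ with hc0
      set d0 := blkR (DC (τ+1)) n x₀ with hd0
      have hDRsub1 : DR (τ+1) ⊆ Finset.Icc 1 (n-1) := hsubR (τ+1) hτ1
      have hDCsub1 : DC (τ+1) ⊆ Finset.Icc 1 (n-1) := hsubC (τ+1) hτ1
      have hblk : IsBlock n (DC (τ+1)) c0 d0 := blk_isBlock hDCsub1 (by omega) (by omega)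
      have hnotmem : x₀ ∉ DC (τ+1) := by rw [hCe]; simp
      have hdge : x₀ + 1 ≤ d0 := blkR_ge_succ hnotmem (by omega)
      have hcle : c0 ≤ x₀ := blkL_le (by omega)
      set TT := {ab : ℕ × ℕ | IsBlock n (DR (τ+1)) ab.1 ab.2 ∧
        NonConstantZone M ab.1 ab.2 c0 d0} with hTT
      have hTTcard : TT.ncard ≤ d := (hwidth (τ+1) hτ1).2 c0 d0 hblk
      have hTTfin : TT.Finite := by
        apply ((Set.finite_Icc 1 n).prod (Set.finite_Icc 1 n)).subset
        rintro ⟨l, r⟩ hlr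
        have hB : IsBlock n (DR (τ+1)) l r := hlr.1
        obtain ⟨b1, b2, b3, -⟩ := hB
        exact ⟨Set.mem_Icc.mpr ⟨b1, by omega⟩, Set.mem_Icc.mpr ⟨by omega, b3⟩⟩
      set A0 := {q ∈ S τ | M q.1 q.2 ≠ M q.1 (q.2+1)} with hA0
      set A1 := {q ∈ S τ | M q.1 q.2 = M q.1 (q.2+1)} with hA1
      have hsplitS : S τ ⊆ A0 ∪ A1 := by
        intro q hq
        by_cases hM : M q.1 q.2 = M q.1 (q.2+1)
        · exact Or.inr ⟨hq, hM⟩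
        · exact Or.inl ⟨hq, hM⟩
      have hA0c : A0.ncard ≤ d := by
        have hinj : A0.ncard ≤ TT.ncard := by
          refine Set.ncard_le_ncard_of_injOn
            (fun q => (blkL (DR (τ+1)) q.1, blkR (DR (τ+1)) n q.1)) ?_ ?_ hTTfin
          · rintro ⟨i, x⟩ hq
            have hqS := hq.1
            have hdiff : M i x ≠ M i (x+1) := hq.2
            obtain ⟨him, hi1, hi2⟩ := himem _ hqS
            have hxeq : x = x₀ := (hq_props _ hqS).1
            have hL : blkL (DR (τ+1)) i ≤ i := blkL_le (by omega)
            have hR : i ≤ blkR (DR (τ+1)) n i := blkR_ge (by omega)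
            have hnc : NonConstantZone M (blkL (DR (τ+1)) i) (blkR (DR (τ+1)) n i) c0 d0 := by
              have hxa : c0 ≤ x := by omega
              have hxb : x + 1 ≤ d0 := by omega
              cases hMv : M i x with
              | true =>
                have hMv2 : M i (x+1) = false := by
                  cases hMv2 : M i (x+1) with
                  | false => rfl
                  | true => exact absurd (hMv.trans hMv2.symm) hdiff
                exact ⟨⟨i, Set.mem_Icc.mpr ⟨hL, hR⟩, x, Set.mem_Icc.mpr ⟨hxa, by omega⟩, hMv⟩,
                  ⟨i, Set.mem_Icc.mpr ⟨hL, hR⟩, x+1, Set.mem_Icc.mpr ⟨by omega, hxb⟩, hMv2⟩⟩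
              | false =>
                have hMv2 : M i (x+1) = true := by
                  cases hMv2 : M i (x+1) with
                  | true => rfl
                  | false => exact absurd (hMv.trans hMv2.symm) hdiff
                exact ⟨⟨i, Set.mem_Icc.mpr ⟨hL, hR⟩, x+1, Set.mem_Icc.mpr ⟨by omega, hxb⟩, hMv2⟩,
                  ⟨i, Set.mem_Icc.mpr ⟨hL, hR⟩, x, Set.mem_Icc.mpr ⟨hxa, by omega⟩, hMv⟩⟩
            exact ⟨blk_isBlock hDRsub1 (by omega) (by omega), hnc⟩
          · rintro ⟨i, x⟩ hq ⟨i', x'⟩ hq' hEq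
            simp only [Prod.mk.injEq] at hEq
            obtain ⟨him, hi1, hi2⟩ := himem _ hq.1
            obtain ⟨him', hi1', hi2'⟩ := himem _ hq'.1
            have hie : blkR (DR (τ+1)) n i = i := blkR_eq_self him (by omega)
            have hie' : blkR (DR (τ+1)) n i' = i' := blkR_eq_self him' (by omega)
            have hii : i = i' := by rw [← hie, ← hie']; exact hEq.2
            have hxx : x = x₀ := (hq_props _ hq.1).1
            have hxx' : x' = x₀ := (hq_props _ hq'.1).1
            simp [hii, hxx, hxx']
        exact hinj.trans hTTcard
      have hA1c : A1.ncard ≤ d := by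
        have hinj : A1.ncard ≤ TT.ncard := by
          refine Set.ncard_le_ncard_of_injOn
            (fun q => (blkL (DR (τ+1)) (q.1+1), blkR (DR (τ+1)) n (q.1+1))) ?_ ?_ hTTfin
          · rintro ⟨i, x⟩ hq
            have hqS := hq.1
            have heqc : M i x = M i (x+1) := hq.2
            have hqS' : (i, x) ∈ K ∧ min (sR i) (sC x) = τ := hqS
            have hcq : IsMatCorner M n i x := hqS'.1
            have hdiff : M (i+1) x ≠ M (i+1) (x+1) := by
              intro hcon
              apply hcq.2.2.2.2.2
              rw [heqc, hcon]
            obtain ⟨him, hi1, hi2⟩ := himem _ hqS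
            have hxeq : x = x₀ := (hq_props _ hqS).1
            have hL : blkL (DR (τ+1)) (i+1) ≤ i+1 := blkL_le (by omega)
            have hR : i+1 ≤ blkR (DR (τ+1)) n (i+1) := blkR_ge (by omega)
            have hnc : NonConstantZone M (blkL (DR (τ+1)) (i+1))
                (blkR (DR (τ+1)) n (i+1)) c0 d0 := by
              have hxa : c0 ≤ x := by omega
              have hxb : x + 1 ≤ d0 := by omega
              cases hMv : M (i+1) x with
              | true =>
                have hMv2 : M (i+1) (x+1) = false := by
                  cases hMv2 : M (i+1) (x+1) with
                  | false => rfl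
                  | true => exact absurd (hMv.trans hMv2.symm) hdiff
                exact ⟨⟨i+1, Set.mem_Icc.mpr ⟨hL, hR⟩, x, Set.mem_Icc.mpr ⟨hxa, by omega⟩, hMv⟩,
                  ⟨i+1, Set.mem_Icc.mpr ⟨hL, hR⟩, x+1, Set.mem_Icc.mpr ⟨by omega, hxb⟩, hMv2⟩⟩
              | false =>
                have hMv2 : M (i+1) (x+1) = true := by
                  cases hMv2 : M (i+1) (x+1) with
                  | true => rfl
                  | false => exact absurd (hMv.trans hMv2.symm) hdiff
                exact ⟨⟨i+1, Set.mem_Icc.mpr ⟨hL, hR⟩, x+1, Set.mem_Icc.mpr ⟨by omega, hxb⟩, hMv2⟩,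
                  ⟨i+1, Set.mem_Icc.mpr ⟨hL, hR⟩, x, Set.mem_Icc.mpr ⟨hxa, by omega⟩, hMv⟩⟩
            exact ⟨blk_isBlock hDRsub1 (by omega) (by omega), hnc⟩
          · rintro ⟨i, x⟩ hq ⟨i', x'⟩ hq' hEq
            simp only [Prod.mk.injEq] at hEq
            obtain ⟨him, hi1, hi2⟩ := himem _ hq.1
            obtain ⟨him', hi1', hi2'⟩ := himem _ hq'.1
            have hie : blkL (DR (τ+1)) (i+1) = i+1 := blkL_eq_succ him
            have hie' : blkL (DR (τ+1)) (i'+1) = i'+1 := blkL_eq_succ him'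
            have hii : i = i' := by
              have := hEq.1
              rw [hie, hie'] at this
              omega
            have hxx : x = x₀ := (hq_props _ hq.1).1
            have hxx' : x' = x₀ := (hq_props _ hq'.1).1
            simp [hii, hxx, hxx']
        exact hinj.trans hTTcard
      calc (S τ).ncard ≤ (A0 ∪ A1).ncard :=
            Set.ncard_le_ncard hsplitS ((hSτfin.subset (fun q hq => hq.1)).union
              (hSτfin.subset (fun q hq => hq.1)))
        _ ≤ A0.ncard + A1.ncard := Set.ncard_union_le _ _
        _ ≤ d + d := add_le_add hA0c hA1c
        _ = 2 * d := by omega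
  -- p = 2(n-1)
  have hcard : ∀ t, t ≤ p → (DR t).card + (DC t).card + t = 2 * (n - 1) := by
    intro t
    induction t with
    | zero =>
      intro _
      rw [h0R, h0C, Nat.card_Icc]
      omega
    | succ t ih =>
      intro ht
      have ihh := ih (by omega)
      rcases hstep t (by omega) with ⟨x, hx, hR, hC⟩ | ⟨x, hx, hC, hR⟩
      · rw [hR, hC, Finset.card_erase_of_mem hx]
        have : 1 ≤ (DR t).card := Finset.card_pos.mpr ⟨x, hx⟩
        omega
      · rw [hR, hC, Finset.card_erase_of_mem hx]
        have : 1 ≤ (DC t).card := Finset.card_pos.mpr ⟨x, hx⟩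
        omega
  have hpval : p ≤ 2 * n := by
    have := hcard p le_rfl
    rw [hpR, hpC] at this
    simp only [Finset.card_empty] at this
    omega
  calc K.ncard ≤ (⋃ τ ∈ Finset.range p, S τ).ncard :=
        Set.ncard_le_ncard hcover
          (Set.Finite.biUnion (Finset.range p).finite_toSet (fun τ _ => hSfin τ))
    _ ≤ ∑ τ ∈ Finset.range p, (S τ).ncard := ncard_biUnion_le p S hSfin
    _ ≤ ∑ τ ∈ Finset.range p, 2 * d :=
        Finset.sum_le_sum (fun τ hτ => hτbound τ (Finset.mem_range.mp hτ))
    _ = p * (2 * d) := by rw [Finset.sum_const, Finset.card_range, smul_eq_mul]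
    _ ≤ (2 * n) * (2 * d) := Nat.mul_le_mul_right _ hpval
    _ = 4 * d * n := by ring

end TwProof
/-- The canonical slab decomposition of a `d`-twin-ordered binary `n × n` matrix has at most
`4·f_d·(n+2) + 4n` slabs, where `f_d = (16/3)·(2d+3)²·2^{4(2d+2)}`. -/
theorem canonical_decomposition_small (d n : ℕ) (M : ℕ → ℕ → Bool) (hn : 1 ≤ n)
    (h : TwinOrdered d n M) :
    (Set.ncard {q : ℕ × ℕ × ℕ × ℕ | IsCanonicalSlab M n q.1 q.2.1 q.2.2.1 q.2.2.2} : ℝ) ≤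
      4 * (16 / 3 * (2 * (d : ℝ) + 3) ^ 2 * 2 ^ (4 * (2 * d + 2))) * ((n : ℝ) + 2)
        + 4 * (n : ℝ) := by
  have hA := TwProof.classes_le_corners M n
  have hB := TwProof.corner_bound M n d hn h
  have hN : Set.ncard {q : ℕ × ℕ × ℕ × ℕ | IsCanonicalSlab M n q.1 q.2.1 q.2.2.1 q.2.2.2}
      ≤ 2 * n + 4 * d * n := hA.trans (Nat.add_le_add_left hB _)
  have hcast : (Set.ncard {q : ℕ × ℕ × ℕ × ℕ |
        IsCanonicalSlab M n q.1 q.2.1 q.2.2.1 q.2.2.2} : ℝ)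
      ≤ ((2 * n + 4 * d * n : ℕ) : ℝ) := Nat.cast_le.mpr hN
  refine hcast.trans ?_
  push_cast
  have hP : (1:ℝ) ≤ 2 ^ (4 * (2 * d + 2)) := one_le_pow₀ one_le_two
  have hd0 : (0:ℝ) ≤ (d:ℝ) := Nat.cast_nonneg d
  have hn0 : (1:ℝ) ≤ (n:ℝ) := by exact_mod_cast hn
  have h1 : (0:ℝ) ≤ 16/3*(2*(d:ℝ)+3)^2 := by positivity
  have h2 : 16/3*(2*(d:ℝ)+3)^2 ≤ 16/3*(2*(d:ℝ)+3)^2 * 2 ^ (4 * (2 * d + 2)) :=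
    le_mul_of_one_le_right h1 hP
  have h3 : (d:ℝ) ≤ 16/3*(2*(d:ℝ)+3)^2 := by nlinarith [sq_nonneg (d:ℝ), hd0]
  have hf : (d:ℝ) ≤ 16/3*(2*(d:ℝ)+3)^2 * 2 ^ (4 * (2 * d + 2)) := h3.trans h2
  nlinarith [mul_nonneg (sub_nonneg.mpr hf) (by linarith : (0:ℝ) ≤ (n:ℝ)+2), hd0, hn0]
end

section
/- Let n ≥ 1 and let M be a binary n×n matrix. Every canonical slab (a,b,c,d) of M with 1 < a ≤ b < n and 1 < c ≤ d < n intersects a corner of M, i.e., there is a corner M[[i,i+1],[j,j+1]] with {i,i+1} ∩ [a,b] ≠ ∅ and {j,j+1} ∩ [c,d] ≠ ∅. -/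
/-- Key combinatorial lemma about two adjacent columns `f` and `g`. -/
lemma key_two_cols (f g : ℕ → Bool) (a b : ℕ) (ha : 1 ≤ a) (hab : a ≤ b)
    (hga : g (a - 1) = false) (hg : ∀ k, a ≤ k → k ≤ b → g k = true)
    (hgb : g (b + 1) = false) (i : ℕ) :
    a - 1 ≤ i → i ≤ b + 1 → f i ≠ g i →
    ∃ r, a - 1 ≤ r ∧ r ≤ b ∧
      (f r, g r) ≠ (f (r + 1), g (r + 1)) ∧ (f r, f (r + 1)) ≠ (g r, g (r + 1)) ∧
      (a ≤ r ∧ r ≤ b ∨ a ≤ r + 1 ∧ r + 1 ≤ b) := by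
  induction i using Nat.strong_induction_on with
  | _ i ih =>
    intro hia hib hfg
    have hA : a - 1 + 1 = a := Nat.succ_pred_eq_of_pos ha
    by_cases h1 : i = a - 1
    · subst h1
      have hfa : f (a - 1) = true := by
        rw [hga] at hfg; simpa using hfg
      refine ⟨a - 1, le_refl _, by omega, ?_, ?_, Or.inr ⟨by omega, by omega⟩⟩
      · rw [hA, hga, hg a le_rfl hab]; simp
      · rw [hA, hga, hfa]; simp
    · by_cases h2 : i = b + 1
      · subst h2
        have hfb : f (b + 1) = true := by
          rw [hgb] at hfg; simpa using hfg
        refine ⟨b, by omega, le_rfl, ?_, ?_, Or.inl ⟨hab, le_rfl⟩⟩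
        · rw [hgb, hg b hab le_rfl]; simp
        · rw [hgb, hfb, hg b hab le_rfl]; simp
      · have hai : a ≤ i := by omega
        have hib' : i ≤ b := by omega
        have hgi : g i = true := hg i hai hib'
        have hfi : f i = false := by
          rw [hgi] at hfg
          cases hfib : f i with
          | false => rfl
          | true => exact absurd hfib hfg
        have hi1 : i - 1 + 1 = i := by omega
        by_cases h3 : f (i - 1) = false ∧ g (i - 1) = true
        · exact ih (i - 1) (by omega) (by omega) (by omega)
            (by rw [h3.1, h3.2]; simp)
        · refine ⟨i - 1, by omega, by omega, ?_, ?_, Or.inr ⟨by omega, by omega⟩⟩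
          · rw [hi1, hfi, hgi]
            intro hcon
            exact h3 ⟨(Prod.mk.injEq _ _ _ _ ▸ hcon).1, (Prod.mk.injEq _ _ _ _ ▸ hcon).2⟩
          · rw [hi1, hfi, hgi]; simp
/-- Every canonical slab `(a,b,c,d)` with `1 < a ≤ b < n` and `1 < c ≤ d < n` intersects a
corner of `M`. -/
theorem canonical_slab_meets_corner (n : ℕ) (M : ℕ → ℕ → Bool) (hn : 1 ≤ n)
    (a b c d : ℕ) (h : IsCanonicalSlab M n a b c d)
    (ha : 1 < a) (hab : a ≤ b) (hb : b < n) (hc : 1 < c) (hcd : c ≤ d) (hd : d < n) :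
    ∃ i j, IsMatCorner M n i j ∧
      ({i, i + 1} ∩ Set.Icc a b).Nonempty ∧ ({j, j + 1} ∩ Set.Icc c d).Nonempty := by
  obtain ⟨hstrip, hsib⟩ := h
  obtain ⟨hs, hup, hdn⟩ := hstrip
  have hsM : ∀ i ∈ Set.Icc a b, ∀ j ∈ Set.Icc c c, M i j = true := hs.2.2.2.2.2.2
  have hcn : c ≤ n := hs.2.2.2.2.2.1
  have hC : c - 1 + 1 = c := by omega
  -- the strip cannot extend up or down
  have Mac0 : M (a - 1) c = false := by
    by_contra hcon
    apply hup
    refine ⟨by omega, by omega, by omega, by omega, le_rfl, hcn, ?_⟩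
    intro i hi j hj
    rcases eq_or_lt_of_le hi.1 with he | hlt
    · have : i = a - 1 := he.symm
      subst this
      have hj' : j = c := le_antisymm hj.2 hj.1
      rw [hj']
      simpa using hcon
    · exact hsM i ⟨by omega, hi.2⟩ j hj
  have Mbc0 : M (b + 1) c = false := by
    by_contra hcon
    apply hdn
    refine ⟨by omega, by omega, by omega, by omega, le_rfl, hcn, ?_⟩
    intro i hi j hj
    rcases eq_or_lt_of_le hi.2 with he | hlt
    · subst he
      have hj' : j = c := le_antisymm hj.2 hj.1
      rw [hj']
      simpa using hcon
    · exact hsM i ⟨hi.1, by omega⟩ j hj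
  -- column c-1 is not a strip
  have hns : ¬ IsStrip M n a b (c - 1) := by
    intro hstr
    have hsibc : Sibling M n (a, b, c) (a, b, c - 1) := by
      refine ⟨rfl, rfl, ?_⟩
      intro k hk
      have hmin : min c (c - 1) = c - 1 := min_eq_right (by omega)
      have hmax : max c (c - 1) = c := max_eq_left (by omega)
      rw [hmin, hmax, Set.mem_Icc] at hk
      have hk' : c - 1 ≤ k ∧ k ≤ c := hk
      rcases Nat.eq_or_lt_of_le hk'.1 with he | hlt
      · rw [← he]; exact hstr
      · have : k = c := by omega
        rw [this]; exact ⟨hs, hup, hdn⟩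
    have hle : c ≤ c - 1 := ((hsib (a, b, c - 1)).mp hsibc).2.2.1
    omega
  -- get a point where columns c-1 and c differ
  have hdiff : ∃ i, a - 1 ≤ i ∧ i ≤ b + 1 ∧ M i (c - 1) ≠ M i c := by
    by_cases hslab : IsSlab M n a b (c - 1) (c - 1)
    · -- then extendable: IsSlab up or down for column c-1
      have hor : IsSlab M n (a - 1) b (c - 1) (c - 1) ∨ IsSlab M n a (b + 1) (c - 1) (c - 1) := by
        by_contra hcon
        push_neg at hcon
        exact hns ⟨hslab, hcon.1, hcon.2⟩
      rcases hor with hA | hB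
      · refine ⟨a - 1, le_rfl, by omega, ?_⟩
        have : M (a - 1) (c - 1) = true :=
          hA.2.2.2.2.2.2 (a - 1) ⟨le_rfl, by omega⟩ (c - 1) ⟨le_rfl, le_rfl⟩
        rw [this, Mac0]; simp
      · refine ⟨b + 1, by omega, le_rfl, ?_⟩
        have : M (b + 1) (c - 1) = true :=
          hB.2.2.2.2.2.2 (b + 1) ⟨by omega, le_rfl⟩ (c - 1) ⟨le_rfl, le_rfl⟩
        rw [this, Mbc0]; simp
    · -- some entry in column c-1, rows [a,b] is false
      have : ∃ i ∈ Set.Icc a b, M i (c - 1) = false := by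
        by_contra hcon
        push_neg at hcon
        apply hslab
        refine ⟨by omega, hab, by omega, by omega, le_rfl, by omega, ?_⟩
        intro i hi j hj
        have hj' : j = c - 1 := le_antisymm hj.2 hj.1
        subst hj'
        have := hcon i hi
        cases hMi : M i (c - 1) with
        | false => exact absurd hMi this
        | true => rfl
      obtain ⟨i, hi, hMi⟩ := this
      have hi1 : a ≤ i := hi.1
      have hi2 : i ≤ b := hi.2
      refine ⟨i, by omega, by omega, ?_⟩
      rw [hMi, hsM i hi c ⟨le_rfl, le_rfl⟩]; simp
  obtain ⟨i0, hi0a, hi0b, hi0⟩ := hdiff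
  obtain ⟨r, hra, hrb, hrow, hcol, hmem⟩ :=
    key_two_cols (fun i => M i (c - 1)) (fun i => M i c) a b (by omega) hab
      Mac0 (fun k hk1 hk2 => hsM k ⟨hk1, hk2⟩ c ⟨le_rfl, le_rfl⟩) Mbc0 i0 hi0a hi0b hi0
  refine ⟨r, c - 1, ⟨by omega, by omega, by omega, by omega, ?_, ?_⟩, ?_, ?_⟩
  · rw [hC]; exact hrow
  · rw [hC]; exact hcol
  · rcases hmem with ⟨h1, h2⟩ | ⟨h1, h2⟩
    · exact ⟨r, by simp, h1, h2⟩
    · exact ⟨r + 1, by simp, h1, h2⟩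
  · refine ⟨c, ?_, le_rfl, hcd⟩
    rw [hC]; simp
end

section
/- Let n ≥ 1 and let M be a binary n×n matrix. The number of canonical slabs (a,b,c,d) of M satisfying a = 1 or b = n or c = 1 or d = n is at most 4n. -/
/-- In a fixed column, a strip starting at row `a` has a uniquely determined upper row. -/
lemma strip_b_unique {M : ℕ → ℕ → Bool} {n a b b' i : ℕ}
    (h : IsStrip M n a b i) (h' : IsStrip M n a b' i) : b = b' := by
  obtain ⟨⟨ha1, hab, hbn, hi1, -, hin, hall⟩, -, hnext⟩ := h
  obtain ⟨⟨ha1', hab', hbn', -, -, -, hall'⟩, -, hnext'⟩ := h'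
  by_contra hne
  rcases Nat.lt_or_ge b b' with hlt | hge
  · exact hnext ⟨ha1, by omega, by omega, hi1, le_refl i, hin, fun x hx j hj =>
      hall' x ⟨hx.1, by have := hx.2; omega⟩ j hj⟩
  · have hlt : b' < b := by omega
    exact hnext' ⟨ha1, by omega, by omega, hi1, le_refl i, hin, fun x hx j hj =>
      hall x ⟨hx.1, by have := hx.2; omega⟩ j hj⟩

/-- In a fixed column, a strip ending at row `b` has a uniquely determined lower row. -/
lemma strip_a_unique {M : ℕ → ℕ → Bool} {n a a' b i : ℕ}
    (h : IsStrip M n a b i) (h' : IsStrip M n a' b i) : a = a' := by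
  obtain ⟨⟨ha1, hab, hbn, hi1, -, hin, hall⟩, hprev, -⟩ := h
  obtain ⟨⟨ha1', hab', hbn', -, -, -, hall'⟩, hprev', -⟩ := h'
  by_contra hne
  rcases Nat.lt_or_ge a' a with hlt | hge
  · exact hprev ⟨by omega, by omega, hbn, hi1, le_refl i, hin, fun x hx j hj =>
      hall' x ⟨by have := hx.1; omega, hx.2⟩ j hj⟩
  · have hlt : a < a' := by omega
    exact hprev' ⟨by omega, by omega, hbn, hi1, le_refl i, hin, fun x hx j hj =>
      hall x ⟨by have := hx.1; omega, hx.2⟩ j hj⟩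

lemma canon_c_le_d {M : ℕ → ℕ → Bool} {n a b c d : ℕ}
    (h : IsCanonicalSlab M n a b c d) : c ≤ d := by
  have : Sibling M n (a, b, c) (a, b, c) := by
    refine ⟨rfl, rfl, ?_⟩
    intro k hk
    simp only [min_self, max_self, Set.mem_Icc] at hk
    have : k = c := le_antisymm hk.2 hk.1
    simpa [this] using h.1
  exact ((h.2 (a, b, c)).1 this).2.2.2

/-- Every column of a canonical slab carries a strip with the same row segment. -/
lemma canon_strip {M : ℕ → ℕ → Bool} {n a b c d k : ℕ}
    (h : IsCanonicalSlab M n a b c d) (hck : c ≤ k) (hkd : k ≤ d) : IsStrip M n a b k := by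
  have hs : Sibling M n (a, b, c) (a, b, k) := (h.2 (a, b, k)).2 ⟨rfl, rfl, hck, hkd⟩
  exact hs.2.2 k (Set.mem_Icc.2 ⟨min_le_right _ _, le_max_right _ _⟩)

lemma canon_d_unique {M : ℕ → ℕ → Bool} {n a b c d d' : ℕ}
    (h : IsCanonicalSlab M n a b c d) (h' : IsCanonicalSlab M n a b c d') : d = d' := by
  have hcd := canon_c_le_d h
  have hcd' := canon_c_le_d h'
  have h1 : d ≤ d' := ((h'.2 (a, b, d)).1 ((h.2 (a, b, d)).2 ⟨rfl, rfl, hcd, le_refl d⟩)).2.2.2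
  have h2 : d' ≤ d := ((h.2 (a, b, d')).1 ((h'.2 (a, b, d')).2 ⟨rfl, rfl, hcd', le_refl d'⟩)).2.2.2
  omega

lemma canon_c_unique_top {M : ℕ → ℕ → Bool} {n a b c c' : ℕ}
    (h : IsCanonicalSlab M n a b c n) (h' : IsCanonicalSlab M n a b c' n) : c = c' := by
  have key : ∀ {x y : ℕ}, IsCanonicalSlab M n a b x n → IsCanonicalSlab M n a b y n →
      x ≤ y → y ≤ x := by
    intro x y hx hy hxy
    have hsib : Sibling M n (a, b, y) (a, b, x) := by
      refine ⟨rfl, rfl, ?_⟩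
      intro k hk
      simp only [Set.mem_Icc] at hk
      exact canon_strip hx (by omega) (by
        have := canon_c_le_d hy
        omega)
    exact ((hy.2 (a, b, x)).1 hsib).2.2.1
  rcases le_total c c' with hle | hle
  · exact le_antisymm hle (key h h' hle)
  · exact le_antisymm (key h' h hle) hle

/-- The number of canonical slabs `(a,b,c,d)` of `M` with `a = 1` or `b = n` or `c = 1` or
`d = n` is at most `4n`. -/
theorem boundary_canonical_slabs_bound (n : ℕ) (M : ℕ → ℕ → Bool) (hn : 1 ≤ n) :
    Set.ncard {q : ℕ × ℕ × ℕ × ℕ | IsCanonicalSlab M n q.1 q.2.1 q.2.2.1 q.2.2.2 ∧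
      (q.1 = 1 ∨ q.2.1 = n ∨ q.2.2.1 = 1 ∨ q.2.2.2 = n)} ≤ 4 * n := by
  classical
  set C : Set (ℕ × ℕ × ℕ × ℕ) :=
    {q | IsCanonicalSlab M n q.1 q.2.1 q.2.2.1 q.2.2.2} with hC
  set S0 := {q ∈ C | q.1 = 1} with hS0
  set S1 := {q ∈ C | q.2.1 = n} with hS1
  set S2 := {q ∈ C | q.2.2.1 = 1} with hS2
  set S3 := {q ∈ C | q.2.2.2 = n} with hS3
  have hTfin : (Set.Icc 1 n : Set ℕ).Finite := Set.finite_Icc _ _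
  have hTcard : (Set.Icc 1 n : Set ℕ).ncard = n := by
    rw [show (Set.Icc 1 n : Set ℕ) = ↑(Finset.Icc 1 n) by simp,
      Set.ncard_coe_finset, Nat.card_Icc]
    omega
  -- bounds
  have hbA : ∀ q ∈ C, q.1 ∈ Set.Icc 1 n := by
    rintro ⟨a, b, c, d⟩ hq
    obtain ⟨⟨h1, h2, h3, _⟩, _, _⟩ := hq.1
    exact Set.mem_Icc.2 ⟨h1, h2.trans h3⟩
  have hbCcol : ∀ q ∈ C, q.2.2.1 ∈ Set.Icc 1 n := by
    rintro ⟨a, b, c, d⟩ hq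
    obtain ⟨⟨_, _, _, h4, _, h6, _⟩, _, _⟩ := hq.1
    exact Set.mem_Icc.2 ⟨h4, h6⟩
  -- each piece has at most n elements
  have hiS0 : Set.InjOn (fun q : ℕ × ℕ × ℕ × ℕ => q.2.2.1) S0 := by
    rintro ⟨a, b, c, d⟩ ⟨hcan, ha⟩ ⟨a', b', c', d'⟩ ⟨hcan', ha'⟩ hcc
    simp only at hcan hcan' ha ha' hcc
    subst ha
    have e : a' = 1 := ha'
    subst e
    subst hcc
    have hbb : b = b' := strip_b_unique hcan.1 hcan'.1
    subst hbb
    have hdd : d = d' := canon_d_unique hcan hcan'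
    simp [hdd]
  have h0 : S0.ncard ≤ n :=
    hTcard ▸ Set.ncard_le_ncard_of_injOn _ (fun q hq => hbCcol q hq.1) hiS0 hTfin
  have hiS1 : Set.InjOn (fun q : ℕ × ℕ × ℕ × ℕ => q.2.2.1) S1 := by
    rintro ⟨a, b, c, d⟩ ⟨hcan, hb⟩ ⟨a', b', c', d'⟩ ⟨hcan', hb'⟩ hcc
    simp only at hcan hcan' hb hb' hcc
    subst hcc
    rw [hb] at hcan
    rw [hb'] at hcan'
    have haa : a = a' := strip_a_unique hcan.1 hcan'.1
    subst haa
    have hdd : d = d' := canon_d_unique hcan hcan'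
    simp [hdd, hb, hb']
  have h1 : S1.ncard ≤ n :=
    hTcard ▸ Set.ncard_le_ncard_of_injOn _ (fun q hq => hbCcol q hq.1) hiS1 hTfin
  have hiS2 : Set.InjOn (fun q : ℕ × ℕ × ℕ × ℕ => q.1) S2 := by
    rintro ⟨a, b, c, d⟩ ⟨hcan, hc⟩ ⟨a', b', c', d'⟩ ⟨hcan', hc'⟩ haa
    simp only at hcan hcan' hc hc' haa
    subst hc
    subst hc'
    subst haa
    have hbb : b = b' := strip_b_unique hcan.1 hcan'.1
    subst hbb
    have hdd : d = d' := canon_d_unique hcan hcan'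
    simp [hdd]
  have h2 : S2.ncard ≤ n :=
    hTcard ▸ Set.ncard_le_ncard_of_injOn _ (fun q hq => hbA q hq.1) hiS2 hTfin
  have hiS3 : Set.InjOn (fun q : ℕ × ℕ × ℕ × ℕ => q.1) S3 := by
    rintro ⟨a, b, c, d⟩ ⟨hcan, hd⟩ ⟨a', b', c', d'⟩ ⟨hcan', hd'⟩ haa
    simp only at hcan hcan' hd hd' haa
    subst haa
    rw [hd] at hcan
    rw [hd'] at hcan'
    have hsb : IsStrip M n a b n := canon_strip hcan (canon_c_le_d hcan) (le_refl n)
    have hsb' : IsStrip M n a b' n := canon_strip hcan' (canon_c_le_d hcan') (le_refl n)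
    have hbb : b = b' := strip_b_unique hsb hsb'
    subst hbb
    have hcc : c = c' := canon_c_unique_top hcan hcan'
    simp [hcc, hd, hd']
  have h3 : S3.ncard ≤ n :=
    hTcard ▸ Set.ncard_le_ncard_of_injOn _ (fun q hq => hbA q hq.1) hiS3 hTfin
  -- finiteness of the pieces
  have hfinpiece : ∀ (T : Set (ℕ × ℕ × ℕ × ℕ)) (g : ℕ × ℕ × ℕ × ℕ → ℕ),
      (∀ q ∈ T, g q ∈ Set.Icc 1 n) → Set.InjOn g T → T.Finite := by
    intro T g hmem hinj
    exact Set.Finite.of_finite_image (hTfin.subset (Set.image_subset_iff.2 hmem)) hinj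
  have hf0 : S0.Finite := hfinpiece _ _ (fun q hq => hbCcol q hq.1) hiS0
  have hf1 : S1.Finite := hfinpiece _ _ (fun q hq => hbCcol q hq.1) hiS1
  have hf2 : S2.Finite := hfinpiece _ _ (fun q hq => hbA q hq.1) hiS2
  have hf3 : S3.Finite := hfinpiece _ _ (fun q hq => hbA q hq.1) hiS3
  have hsub : {q : ℕ × ℕ × ℕ × ℕ | IsCanonicalSlab M n q.1 q.2.1 q.2.2.1 q.2.2.2 ∧
      (q.1 = 1 ∨ q.2.1 = n ∨ q.2.2.1 = 1 ∨ q.2.2.2 = n)} ⊆ S0 ∪ S1 ∪ S2 ∪ S3 := by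
    rintro q ⟨hcq, hb⟩
    rcases hb with h | h | h | h
    · exact Or.inl (Or.inl (Or.inl ⟨hcq, h⟩))
    · exact Or.inl (Or.inl (Or.inr ⟨hcq, h⟩))
    · exact Or.inl (Or.inr ⟨hcq, h⟩)
    · exact Or.inr ⟨hcq, h⟩
  have hb1 : (S0 ∪ S1 ∪ S2 ∪ S3).ncard ≤ (S0 ∪ S1 ∪ S2).ncard + S3.ncard :=
    Set.ncard_union_le _ _
  have hb2 : (S0 ∪ S1 ∪ S2).ncard ≤ (S0 ∪ S1).ncard + S2.ncard :=
    Set.ncard_union_le _ _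
  have hb3 : (S0 ∪ S1).ncard ≤ S0.ncard + S1.ncard :=
    Set.ncard_union_le _ _
  have hmain := Set.ncard_le_ncard hsub (((hf0.union hf1).union hf2).union hf3)
  omega
end

section
/- Let n ≥ 1 and let M be a binary n×n matrix. For every equivalence class of the sibling relation on the strips of M there exist 1 ≤ a ≤ b ≤ n and 1 ≤ c ≤ d ≤ n such that the class equals {(a,b,k,k) : k ∈ [c,d]} and the zone M[[a,b],[c,d]] is entirely filled with ones; in particular, the union of every sibling equivalence class is a slab of M. -/
/-- Every sibling equivalence class equals `{(a,b,k) : k ∈ [c,d]}` for some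
`1 ≤ a ≤ b ≤ n`, `1 ≤ c ≤ d ≤ n`, and the zone `M[[a,b],[c,d]]` is entirely filled with
ones; in particular, the union of every sibling class is a slab of `M`. -/
theorem sibling_class_is_slab (n : ℕ) (M : ℕ → ℕ → Bool) (hn : 1 ≤ n)
    (s : ℕ × ℕ × ℕ) (hs : IsStrip M n s.1 s.2.1 s.2.2) :
    ∃ a b c d : ℕ, 1 ≤ a ∧ a ≤ b ∧ b ≤ n ∧ 1 ≤ c ∧ c ≤ d ∧ d ≤ n ∧
      (∀ t : ℕ × ℕ × ℕ, Sibling M n s t ↔ t.1 = a ∧ t.2.1 = b ∧ c ≤ t.2.2 ∧ t.2.2 ≤ d) ∧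
      IsSlab M n a b c d := by
  classical
  obtain ⟨a, b, i⟩ := s
  simp only at hs ⊢
  obtain ⟨⟨ha1, hab, hbn, hi1, -, hin, hMi⟩, -, -⟩ := id hs
  -- the predicate "column k carries the strip (a,b)"
  set P : ℕ → Prop := fun k => IsStrip M n a b k with hP
  have hPi : P i := hs
  have hPle : ∀ k, P k → 1 ≤ k ∧ k ≤ n := fun k hk => ⟨hk.1.2.2.2.1, hk.1.2.2.2.2.2.1⟩
  -- c : least c such that all columns in [c, i] are strips
  have hQex : ∃ c, ∀ k ∈ Set.Icc c i, P k := ⟨i, fun k hk => by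
    obtain ⟨h1, h2⟩ := hk; have : k = i := le_antisymm h2 h1; rwa [this]⟩
  set c := Nat.find hQex with hc
  have hc_spec : ∀ k ∈ Set.Icc c i, P k := Nat.find_spec hQex
  have hci : c ≤ i := Nat.find_min' hQex (fun k hk => by
    obtain ⟨h1, h2⟩ := hk; have : k = i := le_antisymm h2 h1; rwa [this])
  -- d : greatest d ≤ n such that all columns in [i, d] are strips
  set Qd : ℕ → Prop := fun m => ∀ k ∈ Set.Icc i m, P k with hQd
  set d := Nat.findGreatest Qd n with hd
  have hQdi : Qd i := fun k hk => by
    obtain ⟨h1, h2⟩ := hk; have : k = i := le_antisymm h2 h1; rwa [this]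
  have hid : i ≤ d := Nat.le_findGreatest hin hQdi
  have hd_spec : ∀ k ∈ Set.Icc i d, P k := Nat.findGreatest_spec hin hQdi
  have hdn : d ≤ n := Nat.findGreatest_le n
  have hc1 : 1 ≤ c := by
    by_contra h
    have h0 : c = 0 := by omega
    have := hc_spec 0 (by simp [h0])
    exact absurd (hPle 0 this).1 (by omega)
  -- all columns in [c, d] are strips
  have hcd : ∀ k, c ≤ k → k ≤ d → P k := by
    intro k h1 h2
    rcases le_or_gt k i with h | h
    · exact hc_spec k ⟨h1, h⟩
    · exact hd_spec k ⟨le_of_lt h, h2⟩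
  refine ⟨a, b, c, d, ha1, hab, hbn, hc1, le_trans hci hid, hdn, ?_, ?_⟩
  · intro t
    constructor
    · rintro ⟨h1, h2, h3⟩
      refine ⟨h1.symm, h2.symm, ?_, ?_⟩
      · rcases le_or_gt t.2.2 i with h | h
        · exact Nat.find_min' hQex (fun k hk => h3 k (by
            simp only [Set.mem_Icc] at hk ⊢; omega))
        · omega
      · rcases le_or_gt t.2.2 i with h | h
        · omega
        · have hPt : P t.2.2 := h3 t.2.2 (by simp only [Set.mem_Icc]; omega)
          exact Nat.le_findGreatest (hPle _ hPt).2 (fun k hk => h3 k (by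
            simp only [Set.mem_Icc] at hk ⊢; omega))
    · rintro ⟨h1, h2, h3, h4⟩
      refine ⟨h1.symm, h2.symm, fun k hk => ?_⟩
      simp only [Set.mem_Icc] at hk
      exact hcd k (by omega) (by omega)
  · refine ⟨ha1, hab, hbn, hc1, le_trans hci hid, hdn, fun x hx j hj => ?_⟩
    obtain ⟨-, -, -, -, -, -, hM⟩ := (hcd j hj.1 hj.2).1
    exact hM x hx j (by simp)
end

section
/- Let n ≥ 1 and let M be a binary n×n matrix. The canonical slab decomposition of M is a slab decomposition of M: the canonical slabs are pairwise disjoint slabs of M, and every entry 1 of M lies in some canonical slab. -/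
open Classical in
/-- Maximal extension of an interval property around `i`. -/
lemma interval_ext (P : ℕ → Prop) {i n : ℕ} (h1 : 1 ≤ i) (h2 : i ≤ n) (hP : P i) :
    ∃ a b, 1 ≤ a ∧ a ≤ i ∧ i ≤ b ∧ b ≤ n ∧ (∀ k, a ≤ k → k ≤ b → P k) ∧
      (a = 1 ∨ ¬ P (a - 1)) ∧ (b = n ∨ ¬ P (b + 1)) := by
  classical
  set S : Set ℕ := {a | 1 ≤ a ∧ ∀ k, a ≤ k → k ≤ i → P k} with hS
  have hiS : i ∈ S := ⟨h1, fun k hk hk' => by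
    have : k = i := le_antisymm hk' hk; rwa [this]⟩
  have hne : S.Nonempty := ⟨i, hiS⟩
  set a := sInf S with ha
  have haS : a ∈ S := Nat.sInf_mem hne
  have hai : a ≤ i := Nat.sInf_le hiS
  set Q : ℕ → Prop := fun b => i ≤ b ∧ ∀ k, i ≤ k → k ≤ b → P k with hQ
  set b := Nat.findGreatest Q n with hb
  have hQi : Q i := ⟨le_refl i, fun k hk hk' => by
    have : k = i := le_antisymm hk' hk; rwa [this]⟩
  have hib : i ≤ b := Nat.le_findGreatest h2 hQi
  have hbn : b ≤ n := Nat.findGreatest_le n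
  have hQb : Q b := Nat.findGreatest_spec h2 hQi
  refine ⟨a, b, haS.1, hai, hib, hbn, ?_, ?_, ?_⟩
  · intro k hk hk'
    rcases le_or_gt k i with h | h
    · exact haS.2 k hk h
    · exact hQb.2 k h.le hk'
  · by_cases hA : a = 1
    · exact Or.inl hA
    · right
      intro hPa
      have h1le : 1 ≤ a := haS.1
      have h1a : 1 ≤ a - 1 := by omega
      have hmem : a - 1 ∈ S := by
        refine ⟨h1a, fun k hk hk' => ?_⟩
        rcases eq_or_lt_of_le hk with h | h
        · rw [← h]; exact hPa
        · exact haS.2 k (by omega) hk'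
      have := Nat.sInf_le hmem
      omega
  · by_cases hB : b = n
    · exact Or.inl hB
    · right
      intro hPb
      have hQb1 : Q (b + 1) := by
        refine ⟨by omega, fun k hk hk' => ?_⟩
        rcases eq_or_lt_of_le hk' with h | h
        · rw [h]; exact hPb
        · exact hQb.2 k hk (by omega)
      have hblt : b < n := lt_of_le_of_ne hbn hB
      exact Nat.findGreatest_is_greatest (lt_add_one b) (by omega) hQb1

/-- Basic facts extracted from a strip. -/
lemma strip_facts {M : ℕ → ℕ → Bool} {n a b j : ℕ} (h : IsStrip M n a b j) :
    1 ≤ a ∧ a ≤ b ∧ b ≤ n ∧ 1 ≤ j ∧ j ≤ n ∧ (∀ k, a ≤ k → k ≤ b → M k j = true) ∧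
      (a = 1 ∨ M (a - 1) j = false) ∧ (b = n ∨ M (b + 1) j = false) := by
  obtain ⟨⟨h1, h2, h3, h4, h5, h6, h7⟩, hup, hdown⟩ := h
  have hmem : ∀ k, a ≤ k → k ≤ b → M k j = true := fun k hk hk' =>
    h7 k ⟨hk, hk'⟩ j ⟨le_refl j, le_refl j⟩
  refine ⟨h1, h2, h3, h4, h6, hmem, ?_, ?_⟩
  · by_cases hA : a = 1
    · exact Or.inl hA
    · right
      by_contra hM
      simp only [Bool.not_eq_false] at hM
      apply hup
      refine ⟨by omega, by omega, h3, h4, h5, h6, ?_⟩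
      intro k hk l hl
      have hlj : l = j := le_antisymm hl.2 hl.1
      subst hlj
      rcases eq_or_lt_of_le hk.1 with h | h
      · rwa [← h]
      · exact hmem k (by omega) hk.2
  · by_cases hB : b = n
    · exact Or.inl hB
    · right
      by_contra hM
      simp only [Bool.not_eq_false] at hM
      apply hdown
      refine ⟨h1, by omega, by omega, h4, h5, h6, ?_⟩
      intro k hk l hl
      have hlj : l = j := le_antisymm hl.2 hl.1
      subst hlj
      rcases eq_or_lt_of_le hk.2 with h | h
      · rwa [h]
      · exact hmem k hk.1 (by omega)

/-- Two strips in the same column that share a row are equal. -/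
lemma strip_unique {M : ℕ → ℕ → Bool} {n a b a' b' i j : ℕ}
    (h : IsStrip M n a b j) (h' : IsStrip M n a' b' j)
    (hi : a ≤ i) (hi' : i ≤ b) (hj : a' ≤ i) (hj' : i ≤ b') : a = a' ∧ b = b' := by
  obtain ⟨ha1, _, hbn, _, _, hm, hu, hd⟩ := strip_facts h
  obtain ⟨ha1', _, hbn', _, _, hm', hu', hd'⟩ := strip_facts h'
  constructor
  · by_contra hne
    rcases Nat.lt_or_ge a a' with hlt | hge
    · have ht : M (a' - 1) j = true := hm _ (by omega) (by omega)
      rcases hu' with h1 | h1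
      · omega
      · rw [ht] at h1; simp at h1
    · have hlt : a' < a := by omega
      have ht : M (a - 1) j = true := hm' _ (by omega) (by omega)
      rcases hu with h1 | h1
      · omega
      · rw [ht] at h1; simp at h1
  · by_contra hne
    rcases Nat.lt_or_ge b b' with hlt | hge
    · have ht : M (b + 1) j = true := hm' _ (by omega) (by omega)
      rcases hd with h1 | h1
      · omega
      · rw [ht] at h1; simp at h1
    · have hlt : b' < b := by omega
      have ht : M (b' + 1) j = true := hm _ (by omega) (by omega)
      rcases hd' with h1 | h1
      · omega
      · rw [ht] at h1; simp at h1

/-- Structure of a canonical slab: strip interval with maximality. -/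
lemma canonical_props {M : ℕ → ℕ → Bool} {n a b c d : ℕ} (h : IsCanonicalSlab M n a b c d) :
    c ≤ d ∧ (∀ k, c ≤ k → k ≤ d → IsStrip M n a b k) ∧
      ¬ IsStrip M n a b (c - 1) ∧ ¬ IsStrip M n a b (d + 1) := by
  obtain ⟨hs, hiff⟩ := h
  have hrefl : Sibling M n (a, b, c) (a, b, c) := by
    refine ⟨rfl, rfl, fun k hk => ?_⟩
    simp only [min_self, max_self, Set.mem_Icc] at hk
    have hkc : k = c := le_antisymm hk.2 hk.1
    rwa [hkc]
  have hcd : c ≤ d := ((hiff _).mp hrefl).2.2.2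
  have hc1 : 1 ≤ c := (strip_facts hs).2.2.2.1
  have hstrips : ∀ k, c ≤ k → k ≤ d → IsStrip M n a b k := by
    intro k hk hk'
    have hsib := (hiff (a, b, k)).mpr ⟨rfl, rfl, hk, hk'⟩
    exact hsib.2.2 k (Set.mem_Icc.mpr ⟨min_le_right c k, le_max_right c k⟩)
  refine ⟨hcd, hstrips, ?_, ?_⟩
  · intro hstc
    have hsib : Sibling M n (a, b, c) (a, b, c - 1) := by
      refine ⟨rfl, rfl, fun k hk => ?_⟩
      simp only [Set.mem_Icc] at hk
      rcases Nat.eq_or_lt_of_le hk.1 with h | h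
      · rw [← h]
        have : min c (c - 1) = c - 1 := by omega
        rwa [this]
      · have hkc : k = c := by omega
        rwa [hkc]
    have := ((hiff _).mp hsib).2.2.1
    simp only at this
    omega
  · intro hstd
    have hsib : Sibling M n (a, b, c) (a, b, d + 1) := by
      refine ⟨rfl, rfl, fun k hk => ?_⟩
      simp only [Set.mem_Icc] at hk
      rcases Nat.lt_or_ge k (d + 1) with h | h
      · exact hstrips k (by omega) (by omega)
      · have hkd : k = d + 1 := by omega
        rwa [hkd]
    have := ((hiff _).mp hsib).2.2.2
    simp only at this
    omega

/-- The canonical slab decomposition of `M` is a slab decomposition of `M`: the canonical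
slabs are pairwise disjoint slabs of `M` and every `1` entry of `M` lies in one of them. -/
theorem canonical_decomposition_is_decomposition (n : ℕ) (M : ℕ → ℕ → Bool) (hn : 1 ≤ n) :
    IsSlabDecomp M n {q : ℕ × ℕ × ℕ × ℕ | IsCanonicalSlab M n q.1 q.2.1 q.2.2.1 q.2.2.2} := by
  refine ⟨?_, ?_, ?_⟩
  · -- every canonical slab is a slab
    rintro ⟨a, b, c, d⟩ hq
    simp only [Set.mem_setOf_eq] at hq
    obtain ⟨hcd, hstrips, -, -⟩ := canonical_props hq
    obtain ⟨h1, h2, h3, h4, -, -, -, -⟩ := strip_facts (hstrips c le_rfl hcd)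
    obtain ⟨-, -, -, -, hd2, -, -, -⟩ := strip_facts (hstrips d hcd le_rfl)
    refine ⟨h1, h2, h3, h4, hcd, hd2, ?_⟩
    intro i hi jj hj
    obtain ⟨-, -, -, -, -, hmem, -, -⟩ := strip_facts (hstrips jj hj.1 hj.2)
    exact hmem i hi.1 hi.2
  · -- pairwise disjoint
    rintro ⟨a, b, c, d⟩ hq ⟨a', b', c', d'⟩ hr hne
    simp only [Set.mem_setOf_eq] at hq hr
    rw [Set.disjoint_left]
    rintro ⟨i, j⟩ hij hij'
    simp only [slabCells, Set.mem_prod, Set.mem_Icc] at hij hij'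
    obtain ⟨⟨hia, hib⟩, hjc, hjd⟩ := hij
    obtain ⟨⟨hia', hib'⟩, hjc', hjd'⟩ := hij'
    obtain ⟨hcd, hstrips, hc1, hd1⟩ := canonical_props hq
    obtain ⟨hcd', hstrips', hc1', hd1'⟩ := canonical_props hr
    have hsj : IsStrip M n a b j := hstrips j hjc hjd
    have hsj' : IsStrip M n a' b' j := hstrips' j hjc' hjd'
    obtain ⟨hea, heb⟩ := strip_unique hsj hsj' hia hib hia' hib'
    subst hea; subst heb
    have hcc : c = c' := by
      by_contra hcne
      rcases Nat.lt_or_ge c c' with hlt | hge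
      · exact hc1' (hstrips (c' - 1) (by omega) (by omega))
      · exact hc1 (hstrips' (c - 1) (by omega) (by omega))
    have hdd : d = d' := by
      by_contra hdne
      rcases Nat.lt_or_ge d d' with hlt | hge
      · exact hd1 (hstrips' (d + 1) (by omega) (by omega))
      · exact hd1' (hstrips (d' + 1) (by omega) (by omega))
    subst hcc; subst hdd
    exact hne rfl
  · -- covering
    intro i j hi1 hin hj1 hjn hM
    obtain ⟨a, b, ha1, hai, hib, hbn, hall, hup, hdown⟩ :=
      interval_ext (fun k => M k j = true) hi1 hin hM
    have hstrip : IsStrip M n a b j := by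
      refine ⟨⟨ha1, hai.trans hib, hbn, hj1, le_rfl, hjn, ?_⟩, ?_, ?_⟩
      · intro k hk l hl
        have hlj : l = j := le_antisymm hl.2 hl.1
        subst hlj
        exact hall k hk.1 hk.2
      · rintro ⟨hx1, -, -, -, -, -, hx7⟩
        rcases hup with h | h
        · omega
        · have := hx7 (a - 1) ⟨le_rfl, by omega⟩ j ⟨le_rfl, le_rfl⟩
          exact h this
      · rintro ⟨-, -, hx3, -, -, -, hx7⟩
        rcases hdown with h | h
        · omega
        · have := hx7 (b + 1) ⟨by omega, le_rfl⟩ j ⟨le_rfl, le_rfl⟩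
          exact h this
    obtain ⟨c, d, hc1, hcj, hjd, hdn, hallS, hupS, hdownS⟩ :=
      interval_ext (fun k => IsStrip M n a b k) hj1 hjn hstrip
    have hnc : ¬ IsStrip M n a b (c - 1) := by
      rcases hupS with h | h
      · subst h
        rintro ⟨⟨-, -, -, h4, -⟩, -, -⟩
        omega
      · exact h
    have hnd : ¬ IsStrip M n a b (d + 1) := by
      rcases hdownS with h | h
      · subst h
        rintro ⟨⟨-, -, -, -, -, h6, -⟩, -, -⟩
        omega
      · exact h
    refine ⟨(a, b, c, d), ?_, ?_⟩
    · simp only [Set.mem_setOf_eq]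
      refine ⟨hallS c le_rfl (hcj.trans hjd), ?_⟩
      rintro ⟨x, y, k⟩
      constructor
      · rintro ⟨hx, hy, hk⟩
        simp only at hx hy hk ⊢
        have hkc : c ≤ k := by
          by_contra hlt
          exact hnc (hk (c - 1) (Set.mem_Icc.mpr ⟨by omega, by omega⟩))
        have hkd : k ≤ d := by
          by_contra hlt
          exact hnd (hk (d + 1) (Set.mem_Icc.mpr ⟨by omega, by omega⟩))
        exact ⟨hx.symm, hy.symm, hkc, hkd⟩
      · rintro ⟨hx, hy, hk1, hk2⟩
        simp only at hx hy hk1 hk2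
        subst hx; subst hy
        refine ⟨rfl, rfl, fun m hm => ?_⟩
        simp only [Set.mem_Icc] at hm
        exact hallS m (by omega) (by omega)
    · simp only [slabCells, Set.mem_prod, Set.mem_Icc]
      exact ⟨⟨hai, hib⟩, hcj, hjd⟩
end

section
/- Let n ≥ 1, let M be a binary n×n matrix with slab decomposition K, and let i ∈ {1,…,n}. Define the closing segments C_i = {[a,b] : (a,b,c,i) ∈ K for some c ≤ i} and the opening segments O_{i+1} = {[a,b] : (a,b,i+1,d) ∈ K for some d ≥ i+1} (with O_{n+1} = ∅). Then every strip s = [a,b] with s ∈ strips_i \ strips_{i+1} (identifying strips with their row segments, and with strips_{n+1} = ∅) either contains some segment of C_i or is adjacent to some segment of O_{i+1}. -/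
/-- The closing segments of `K` in column `i`: row segments `[a,b]` of slabs of `K` whose
column range ends at `i`. -/
def closingSegs (K : Set (ℕ × ℕ × ℕ × ℕ)) (i : ℕ) : Set (ℕ × ℕ) :=
  {s | ∃ c, c ≤ i ∧ (s.1, s.2, c, i) ∈ K}

/-- The opening segments of `K` in column `j`: row segments `[a,b]` of slabs of `K` whose
column range starts at `j`. -/
def openingSegs (K : Set (ℕ × ℕ × ℕ × ℕ)) (j : ℕ) : Set (ℕ × ℕ) :=
  {s | ∃ d, j ≤ d ∧ (s.1, s.2, j, d) ∈ K}


lemma slab_cell {M : ℕ → ℕ → Bool} {n a b c d : ℕ} (h : IsSlab M n a b c d) {r j : ℕ}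
    (hr1 : a ≤ r) (hr2 : r ≤ b) (hj1 : c ≤ j) (hj2 : j ≤ d) : M r j = true :=
  h.2.2.2.2.2.2 r ⟨hr1, hr2⟩ j ⟨hj1, hj2⟩

lemma mem_slabCells {q : ℕ × ℕ × ℕ × ℕ} {r j : ℕ} :
    (r, j) ∈ slabCells q ↔ (q.1 ≤ r ∧ r ≤ q.2.1) ∧ (q.2.2.1 ≤ j ∧ j ≤ q.2.2.2) := by
  simp [slabCells, Set.mem_Icc, Set.mem_prod]; tauto

lemma rows_within {M : ℕ → ℕ → Bool} {n a b i : ℕ}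
    (haup : 2 ≤ a → M (a-1) i = false)
    (hbdown : b + 1 ≤ n → M (b+1) i = false)
    {a1 b1 c1 d1 : ℕ} (hq : IsSlab M n a1 b1 c1 d1)
    {r : ℕ} (hr1 : a ≤ r) (hr2 : r ≤ b)
    (hra : a1 ≤ r) (hrb : r ≤ b1) (hc : c1 ≤ i) (hd : i ≤ d1) :
    a ≤ a1 ∧ b1 ≤ b := by
  constructor
  · by_contra h
    have h2 : 2 ≤ a := by have := hq.1; omega
    have ht : M (a-1) i = true := slab_cell hq (by omega) (by omega) hc hd
    simp [haup h2] at ht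
  · by_contra h
    have hb : b + 1 ≤ n := by have := hq.2.2.2.2.2.1; have := hq.2.2.1; omega
    have ht : M (b+1) i = true := slab_cell hq (by omega) (by omega) hc hd
    simp [hbdown hb] at ht

/-- Every strip `[a,b] ∈ strips_i \ strips_{i+1}` either contains some closing segment of
`C_i` or is adjacent to some opening segment of `O_{i+1}`. -/
theorem vanishing_strip_detected (n : ℕ) (M : ℕ → ℕ → Bool) (hn : 1 ≤ n)
    (K : Set (ℕ × ℕ × ℕ × ℕ)) (hK : IsSlabDecomp M n K)
    (i : ℕ) (hi : 1 ≤ i) (hin : i ≤ n) (a b : ℕ)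
    (hstrip : IsStrip M n a b i) (hnot : ¬ IsStrip M n a b (i + 1)) :
    (∃ s ∈ closingSegs K i, a ≤ s.1 ∧ s.2 ≤ b) ∨
    (∃ s ∈ openingSegs K (i + 1), s.2 + 1 = a ∨ b + 1 = s.1) := by
  obtain ⟨hKslab, hKdisj, hKcover⟩ := hK
  obtain ⟨hs, hsup, hsdown⟩ := hstrip
  have ha1 := hs.1
  have hab := hs.2.1
  have hbn := hs.2.2.1
  have hones : ∀ r, a ≤ r → r ≤ b → M r i = true := fun r h1 h2 =>
    slab_cell hs h1 h2 le_rfl le_rfl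
  have haup : 2 ≤ a → M (a-1) i = false := by
    intro h2
    cases hf : M (a-1) i with
    | false => rfl
    | true =>
      exfalso; apply hsup
      refine ⟨by omega, by omega, hbn, hi, le_rfl, hin, ?_⟩
      intro r hr j hj
      rw [Set.mem_Icc] at hr hj
      have hj' : j = i := by omega
      subst hj'
      by_cases hra : r = a - 1
      · rw [hra]; exact hf
      · exact hones r (by omega) hr.2
  have hbdown : b + 1 ≤ n → M (b+1) i = false := by
    intro h2
    cases hf : M (b+1) i with
    | false => rfl
    | true =>
      exfalso; apply hsdown
      refine ⟨ha1, by omega, h2, hi, le_rfl, hin, ?_⟩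
      intro r hr j hj
      rw [Set.mem_Icc] at hr hj
      have hj' : j = i := by omega
      subst hj'
      by_cases hra : r = b + 1
      · rw [hra]; exact hf
      · exact hones r hr.1 (by omega)
  -- a helper producing the closing-segment conclusion from a bad cell in column i+1
  have closing : ∀ r, a ≤ r → r ≤ b → ¬ (i + 1 ≤ n ∧ M r (i+1) = true) →
      (∃ s ∈ closingSegs K i, a ≤ s.1 ∧ s.2 ≤ b) := by
    intro r hr1 hr2 hbad
    obtain ⟨q, hqK, hqm⟩ := hKcover r i (by omega) (by omega) hi hin (hones r hr1 hr2)
    obtain ⟨a1, b1, c1, d1⟩ := q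
    rw [mem_slabCells] at hqm
    obtain ⟨⟨hra, hrb⟩, hc, hd⟩ := hqm
    have hqs := hKslab _ hqK
    simp only at hqs hra hrb hc hd
    have hd1 : d1 = i := by
      by_contra hne
      have hd1' : i + 1 ≤ d1 := by omega
      have hin' : i + 1 ≤ n := by have := hqs.2.2.2.2.2.1; omega
      exact hbad ⟨hin', slab_cell hqs hra hrb (by omega) hd1'⟩
    subst hd1
    obtain ⟨hwa, hwb⟩ := rows_within haup hbdown hqs hr1 hr2 hra hrb hc hd
    exact ⟨(a1, b1), ⟨c1, hc, hqK⟩, hwa, hwb⟩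
  by_cases hA : IsSlab M n a b (i+1) (i+1)
  · -- the strip persists as a slab in column i+1, so it must extend up or down
    have hPQ : IsSlab M n (a-1) b (i+1) (i+1) ∨ IsSlab M n a (b+1) (i+1) (i+1) := by
      by_contra h
      push_neg at h
      exact hnot ⟨hA, h.1, h.2⟩
    have hin2 : i + 1 ≤ n := hA.2.2.2.2.2.1
    rcases hPQ with hP | hP
    · -- extends upwards
      have h2a : 2 ≤ a := by have := hP.1; omega
      have hcell : M (a-1) (i+1) = true := slab_cell hP le_rfl (by omega) le_rfl le_rfl
      obtain ⟨q, hqK, hqm⟩ := hKcover (a-1) (i+1) (by omega) (by omega) (by omega) hin2 hcell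
      obtain ⟨a1, b1, c1, d1⟩ := q
      rw [mem_slabCells] at hqm
      obtain ⟨⟨hra, hrb⟩, hc, hd⟩ := hqm
      have hqs := hKslab _ hqK
      simp only at hqs hra hrb hc hd
      have hc1 : c1 = i + 1 := by
        by_contra hne
        have ht : M (a-1) i = true := slab_cell hqs hra hrb (by omega) (by omega)
        simp [haup h2a] at ht
      subst hc1
      by_cases hb1 : a ≤ b1
      · -- the opening slab overlaps row a; then the slab covering (a, i) must close at i
        left
        obtain ⟨q2, hq2K, hq2m⟩ := hKcover a i ha1 (by omega) hi hin (hones a le_rfl hab)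
        obtain ⟨a2, b2, c2, d2⟩ := q2
        rw [mem_slabCells] at hq2m
        obtain ⟨⟨hra2, hrb2⟩, hc2, hd2⟩ := hq2m
        have hq2s := hKslab _ hq2K
        simp only at hq2s hra2 hrb2 hc2 hd2
        obtain ⟨hwa2, hwb2⟩ := rows_within haup hbdown hq2s le_rfl hab hra2 hrb2 hc2 hd2
        have hd2' : d2 = i := by
          by_contra hne2
          have hne : (a1, b1, i+1, d1) ≠ (a2, b2, c2, d2) := by
            intro heq
            have h1 : a1 = a2 := congrArg Prod.fst heq
            omega
          have e1 : a1 ≤ a := by omega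
          have e2 : c2 ≤ i + 1 := by omega
          have e3 : i + 1 ≤ d2 := by omega
          have hx1 : (a, i+1) ∈ slabCells (a1, b1, i+1, d1) := ⟨⟨e1, hb1⟩, le_rfl, hd⟩
          have hx2 : (a, i+1) ∈ slabCells (a2, b2, c2, d2) := ⟨⟨hra2, hrb2⟩, e2, e3⟩
          exact Set.disjoint_left.mp (hKdisj hqK hq2K hne) hx1 hx2
        exact ⟨(a2, b2), ⟨c2, hc2, hd2' ▸ hq2K⟩, hwa2, hwb2⟩
      · -- the opening slab ends exactly at row a-1: adjacency
        right
        refine ⟨(a1, b1), ⟨d1, hd, hqK⟩, Or.inl (by omega)⟩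
    · -- extends downwards: symmetric
      have hb2n : b + 1 ≤ n := hP.2.2.1
      have hcell : M (b+1) (i+1) = true := slab_cell hP (by omega) le_rfl le_rfl le_rfl
      obtain ⟨q, hqK, hqm⟩ := hKcover (b+1) (i+1) (by omega) hb2n (by omega) hin2 hcell
      obtain ⟨a1, b1, c1, d1⟩ := q
      rw [mem_slabCells] at hqm
      obtain ⟨⟨hra, hrb⟩, hc, hd⟩ := hqm
      have hqs := hKslab _ hqK
      simp only at hqs hra hrb hc hd
      have hc1 : c1 = i + 1 := by
        by_contra hne
        have ht : M (b+1) i = true := slab_cell hqs hra hrb (by omega) (by omega)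
        simp [hbdown hb2n] at ht
      subst hc1
      by_cases hb1 : a1 ≤ b
      · left
        obtain ⟨q2, hq2K, hq2m⟩ := hKcover b i (by omega) hbn hi hin (hones b (by omega) le_rfl)
        obtain ⟨a2, b2, c2, d2⟩ := q2
        rw [mem_slabCells] at hq2m
        obtain ⟨⟨hra2, hrb2⟩, hc2, hd2⟩ := hq2m
        have hq2s := hKslab _ hq2K
        simp only at hq2s hra2 hrb2 hc2 hd2
        obtain ⟨hwa2, hwb2⟩ := rows_within haup hbdown hq2s (by omega) le_rfl hra2 hrb2 hc2 hd2
        have hd2' : d2 = i := by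
          by_contra hne2
          have hne : (a1, b1, i+1, d1) ≠ (a2, b2, c2, d2) := by
            intro heq
            have h1 : b1 = b2 := congrArg (fun p => p.2.1) heq
            omega
          have e1 : b ≤ b1 := by omega
          have e2 : c2 ≤ i + 1 := by omega
          have e3 : i + 1 ≤ d2 := by omega
          have hx1 : (b, i+1) ∈ slabCells (a1, b1, i+1, d1) := ⟨⟨hb1, e1⟩, le_rfl, hd⟩
          have hx2 : (b, i+1) ∈ slabCells (a2, b2, c2, d2) := ⟨⟨hra2, hrb2⟩, e2, e3⟩
          exact Set.disjoint_left.mp (hKdisj hqK hq2K hne) hx1 hx2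
        exact ⟨(a2, b2), ⟨c2, hc2, hd2' ▸ hq2K⟩, hwa2, hwb2⟩
      · right
        refine ⟨(a1, b1), ⟨d1, hd, hqK⟩, Or.inr (by omega)⟩
  · -- the segment is not all ones in column i+1 (or i+1 > n): a closing slab exists
    left
    by_cases hin2 : i + 1 ≤ n
    · have hno : ¬ ∀ r ∈ Set.Icc a b, M r (i+1) = true := by
        intro h
        exact hA ⟨ha1, hab, hbn, by omega, le_rfl, hin2, fun r hr j hj => by
          rw [Set.mem_Icc] at hj
          have hj' : j = i + 1 := by omega
          rw [hj']
          exact h r hr⟩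
      push_neg at hno
      obtain ⟨r, hr, hrbad⟩ := hno
      rw [Set.mem_Icc] at hr
      exact closing r hr.1 hr.2 (fun h => hrbad h.2)
    · exact closing a le_rfl hab (fun h => hin2 h.1)
end
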